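/- arXiv:2207.08108 — 13 statements merged into one kernel-verified Lean document; each statement's English description precedes it below -/
import Mathlib

section
/- The sequence (b_{2n})_{n=1}^∞ is strictly increasing and converges to b_∞. -/
/-!
Write `θ_k(x) = x ^ (-(k+1)²/2)`. Each `θ_k` is strictly decreasing on `(0, ∞)`, so the partial
sums `S_n = θ_0 + ⋯ + θ_n` and the full sum `S = ∑ θ_k` are strictly decreasing, and `b n`, `B`
are the points where `S_n`, resp. `S`, equal `1/2`. Since `S_n < S_{n+1} < S`, the equation
`S_{n+1}(b (n+1)) = 1/2 = S_n (b n) < S_{n+1}(b n)` forces `b n < b (n+1)`, and likewise `b n < B`.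
The increasing bounded sequence has a limit `L > 1`, and since all `b n` lie in `[b 0, ∞)` where
the `θ_k` are dominated by the summable `θ_k(b 0)`, dominated convergence gives
`S(L) = lim S_n(b n) = 1/2`, so `L = B`.
-/

open Filter Finset Topology

namespace GaussSum

noncomputable def term (x : ℝ) (k : ℕ) : ℝ := x ^ (-((k : ℝ) + 1) ^ 2 / 2)

noncomputable def partialSum (n : ℕ) (x : ℝ) : ℝ := ∑ k ∈ range (n + 1), term x k

noncomputable def fullSum (x : ℝ) : ℝ := ∑' k, term x k

lemma term_pos {x : ℝ} (hx : 0 < x) (k : ℕ) : 0 < term x k :=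
  Real.rpow_pos_of_pos hx _

lemma term_strictAntiOn (k : ℕ) : StrictAntiOn (term · k) (Set.Ioi 0) := fun _ hx _ _ hxy =>
  Real.rpow_lt_rpow_of_neg hx hxy (div_neg_of_neg_of_pos (neg_neg_of_pos (by positivity)) two_pos)

lemma summable_term {x : ℝ} (hx : 1 < x) : Summable (term x) := by
  have hx0 : 0 < x := by linarith
  have hr : x ^ (-(1 / 2) : ℝ) < 1 := Real.rpow_lt_one_of_one_lt_of_neg hx (by norm_num)
  refine (summable_geometric_of_lt_one (Real.rpow_nonneg hx0.le _) hr).of_nonneg_of_le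
    (fun k => (term_pos hx0 k).le) fun k => ?_
  rw [← Real.rpow_mul_natCast hx0.le]
  exact Real.rpow_le_rpow_of_exponent_le hx.le (by nlinarith [(k.cast_nonneg : (0 : ℝ) ≤ k)])

lemma partialSum_strictAntiOn (n : ℕ) : StrictAntiOn (partialSum n) (Set.Ioi 0) :=
  fun _ hx _ hy hxy => sum_lt_sum_of_nonempty nonempty_range_add_one
    fun k _ => term_strictAntiOn k hx hy hxy

lemma fullSum_strictAntiOn : StrictAntiOn fullSum (Set.Ioi 1) := by
  intro x hx y hy hxy
  rw [Set.mem_Ioi] at hx hy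
  have hx0 : x ∈ Set.Ioi 0 := Set.mem_Ioi.2 (by linarith)
  have hy0 : y ∈ Set.Ioi 0 := Set.mem_Ioi.2 (by linarith)
  exact Summable.tsum_lt_tsum_of_nonneg (i := 0) (fun k => (term_pos hy0 k).le)
    (fun k => (term_strictAntiOn k).antitoneOn hx0 hy0 hxy.le) (term_strictAntiOn 0 hx0 hy0 hxy)
    (summable_term hx)

lemma partialSum_lt_succ {x : ℝ} (hx : 0 < x) (n : ℕ) : partialSum n x < partialSum (n + 1) x := by
  rw [partialSum, partialSum, sum_range_succ _ (n + 1)]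
  linarith [term_pos hx (n + 1)]

lemma partialSum_lt_fullSum {x : ℝ} (hx : 1 < x) (n : ℕ) : partialSum n x < fullSum x :=
  (partialSum_lt_succ (by linarith) n).trans_le <|
    (summable_term hx).sum_le_tsum _ fun k _ => (term_pos (by linarith) k).le

lemma sum_Icc_rpow_eq_partialSum (x : ℝ) (n : ℕ) :
    ∑ k ∈ Icc 1 (n + 1), x ^ (-(k : ℝ) ^ 2 / 2) = partialSum n x := by
  have hshift := sum_Ico_add' (fun k : ℕ => x ^ (-(k : ℝ) ^ 2 / 2)) 0 (n + 1) 1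
  push_cast at hshift
  rw [partialSum, range_eq_Ico]
  exact hshift.symm

lemma tendsto_partialSum {a L : ℝ} {x : ℕ → ℝ} (ha : 1 < a) (hax : ∀ n, a ≤ x n)
    (hx : Tendsto x atTop (𝓝 L)) : Tendsto (fun n => partialSum n (x n)) atTop (𝓝 (fullSum L)) := by
  have hL : 0 < L := by linarith [ge_of_tendsto' hx hax]
  have hcut (n : ℕ) : partialSum n (x n) = ∑' k, (range (n + 1) : Set ℕ).indicator (term (x n)) k :=
    sum_eq_tsum_indicator _ _
  simp only [hcut]
  refine tendsto_tsum_of_dominated_convergence (summable_term ha) (fun k => ?_)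
    (Eventually.of_forall fun n k => ?_)
  · have hterm : Tendsto (fun n => term (x n) k) atTop (𝓝 (term L k)) :=
      (Real.continuousAt_rpow_const L _ (Or.inl hL.ne')).tendsto.comp hx
    refine hterm.congr' (eventually_atTop.2 ⟨k, fun n hn => ?_⟩)
    dsimp only
    rw [Set.indicator_of_mem (mem_coe.2 (mem_range.2 (by omega)))]
  · refine (norm_indicator_le_norm_self _ _).trans ?_
    rw [Real.norm_of_nonneg (term_pos (by linarith [hax n]) k).le]
    exact (term_strictAntiOn k).antitoneOn (Set.mem_Ioi.2 (by linarith))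
      (Set.mem_Ioi.2 (by linarith [hax n])) (hax n)

end GaussSum

open GaussSum

/-- Here `b n` is `b_{2(n+1)}`. -/
theorem stmt_2 (b : ℕ → ℝ) (B : ℝ)
    (hb : ∀ n : ℕ, 1 < b n ∧
      1 - 2 * ∑ k ∈ Finset.Icc 1 (n + 1), (b n) ^ (-(k : ℝ) ^ 2 / 2) = 0)
    (hB : 1 < B ∧ 1 - 2 * ∑' k : ℕ, B ^ (-((k : ℝ) + 1) ^ 2 / 2) = 0) :
    StrictMono b ∧ Filter.Tendsto b Filter.atTop (nhds B) := by
  have hb1 (n : ℕ) : 1 < b n := (hb n).1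
  have hb0 (n : ℕ) : b n ∈ Set.Ioi 0 := Set.mem_Ioi.2 (by linarith [hb1 n])
  have hbS (n : ℕ) : partialSum n (b n) = 1 / 2 := by
    linarith [sum_Icc_rpow_eq_partialSum (b n) n ▸ (hb n).2]
  have hBS : fullSum B = 1 / 2 := by
    unfold fullSum term; linarith [hB.2]
  have hmono : StrictMono b := strictMono_nat_of_lt_succ fun n =>
    ((partialSum_strictAntiOn (n + 1)).lt_iff_gt (hb0 (n + 1)) (hb0 n)).1 <| by
      rw [hbS, ← hbS n]; exact partialSum_lt_succ (hb0 n) n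
  have hlt_B (n : ℕ) : b n < B :=
    (fullSum_strictAntiOn.lt_iff_gt hB.1 (hb1 n)).1 <| by
      rw [hBS, ← hbS n]; exact partialSum_lt_fullSum (hb1 n) n
  have hbdd : BddAbove (Set.range b) := ⟨B, Set.forall_mem_range.2 fun n => (hlt_B n).le⟩
  have hlim : Tendsto b atTop (𝓝 (⨆ n, b n)) := tendsto_atTop_ciSup hmono.monotone hbdd
  have hL1 : 1 < ⨆ n, b n := (hb1 0).trans_le (le_ciSup hbdd 0)
  have hLS : fullSum (⨆ n, b n) = 1 / 2 :=
    tendsto_nhds_unique (tendsto_partialSum (hb1 0) (fun n => hmono.monotone n.zero_le) hlim)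
      (by simp only [hbS]; exact tendsto_const_nhds)
  exact ⟨hmono, fullSum_strictAntiOn.injOn hL1 hB.1 (hLS.trans hBS.symm) ▸ hlim⟩
end

section
/- Let n be a positive integer and let P(z) = ∑_{k=0}^{2n} a_k z^k be a complex polynomial with a_k ∈ ℂ \ {0} for all k. If |q_k(P)| > b_{2n} for all k = 2, 3, …, 2n, then all zeros of P are simple; moreover, the moduli of the zeros of P are pairwise different. -/
/-!
Write `A_k = |a_k|`. The hypothesis `|q_k(P)| > b` says that `k ↦ log A_k` is concave with
second differences below `-log b`. Consequently, on the circle `|z| = r_i := A_i / (A_{i+1} √b)`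
the `j`-th term of `P` has modulus at most `A_i r_iⁱ b^{-(j-i)²/2}`, and the defining equation
`2 ∑_{k=1}^n b^{-k²/2} = 1` of `b_{2n}` makes the `i`-th term dominate the sum of all the others
(strictly, after enlarging `b` slightly). By Rouché's theorem `P` has exactly `i` zeros in
`|z| < r_i` for every `i < 2n`, so each circle `|z| = a` carries at most one of the `2n` zeros
of `P`, counted with multiplicity.
-/

open Polynomial Finset Metric Real

section ArgumentPrinciple

open Complex

variable {c : ℂ} {R : ℝ}

theorem circleIntegral_sub_inv_eq_ite [DecidablePred (· ∈ ball c R)] (hR : 0 < R) {w : ℂ}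
    (hw : w ∉ sphere c R) :
    (∮ z in C(c, R), (z - w)⁻¹) = if w ∈ ball c R then 2 * π * I else 0 := by
  split_ifs with hwb
  · exact circleIntegral.integral_sub_inv_of_mem_ball hwb
  · have hw' : w ∉ closedBall c R := by
      rw [← ball_union_sphere]; exact fun h => h.elim hwb hw
    refine DiffContOnCl.circleIntegral_eq_zero hR.le (DifferentiableOn.diffContOnCl ?_)
    rw [closure_ball c hR.ne']
    exact fun z hz => ((differentiableAt_id.sub_const w).inv
      (sub_ne_zero.2 fun h => hw' (h ▸ hz))).differentiableWithinAt

theorem circleIntegral_multiset_sum_sub_inv [DecidablePred (· ∈ ball c R)] (hR : 0 < R)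
    (M : Multiset ℂ) (hM : ∀ w ∈ M, w ∉ sphere c R) :
    (∮ z in C(c, R), (M.map fun w => (z - w)⁻¹).sum) =
      2 * π * I * (M.filter (· ∈ ball c R)).card := by
  induction M using Multiset.induction_on with
  | empty => simp [circleIntegral]
  | cons w M ih =>
    have hint : ∀ v ∈ w ::ₘ M, CircleIntegrable (fun z => (z - v)⁻¹) c R := fun v hv =>
      circleIntegrable_sub_inv_iff.2 (Or.inr (by simpa [abs_of_pos hR] using hM v hv))
    have hsum : CircleIntegrable (fun z => (M.map fun v => (z - v)⁻¹).sum) c R :=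
      (continuousOn_multiset_sum M fun v hv => (continuous_sub_right v).continuousOn.inv₀
        fun z hz h => hM v (Multiset.mem_cons_of_mem hv) (sub_eq_zero.1 h ▸ hz)).circleIntegrable
        hR.le
    simp only [Multiset.map_cons, Multiset.sum_cons]
    rw [circleIntegral.integral_add (hint w (Multiset.mem_cons_self w M)) hsum,
      ih fun v hv => hM v (Multiset.mem_cons_of_mem hv),
      circleIntegral_sub_inv_eq_ite hR (hM w (Multiset.mem_cons_self w M))]
    split_ifs with hwb
    · rw [Multiset.filter_cons_of_pos _ hwb, Multiset.card_cons]
      push_cast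
      ring
    · rw [Multiset.filter_cons_of_neg _ hwb, zero_add]

theorem Complex.isInducing_natCast : Topology.IsInducing (Nat.cast : ℕ → ℂ) := by
  convert (isometry_ofReal.isEmbedding.comp Nat.isClosedEmbedding_coe_real.isEmbedding).isInducing
  ext n
  simp

theorem Polynomial.circleIntegral_derivative_div_eval [DecidablePred (· ∈ ball c R)]
    (hR : 0 < R) {Q : ℂ[X]} (hQ : ∀ z ∈ sphere c R, Q.eval z ≠ 0) :
    (∮ z in C(c, R), Q.derivative.eval z / Q.eval z) =
      2 * π * I * (Q.roots.filter (· ∈ ball c R)).card := by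
  have hlog : Set.EqOn (fun z => Q.derivative.eval z / Q.eval z)
      (fun z => (Q.roots.map fun w => (z - w)⁻¹).sum) (sphere c R) := fun z hz => by
    simpa [one_div] using (IsAlgClosed.splits Q).eval_derivative_div_eval_of_ne_zero (hQ z hz)
  rw [circleIntegral.integral_congr hR.le hlog, circleIntegral_multiset_sum_sub_inv hR]
  exact fun w hw hws => hQ w hws (isRoot_of_mem_roots hw)

theorem Polynomial.card_roots_filter_mem_ball_add_eq [DecidablePred (· ∈ ball c R)]
    (hR : 0 < R) {f g : ℂ[X]} (hfg : ∀ z ∈ sphere c R, ‖g.eval z‖ < ‖f.eval z‖) :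
    ((f + g).roots.filter (· ∈ ball c R)).card = (f.roots.filter (· ∈ ball c R)).card := by
  set F : unitInterval → ℂ[X] := fun t => f + C ((t : ℝ) : ℂ) * g with hF
  have hF_eval : ∀ t z, (F t).eval z = f.eval z + (t : ℝ) * g.eval z := by simp [hF]
  have hF_deriv : ∀ t z, (F t).derivative.eval z =
      f.derivative.eval z + (t : ℝ) * g.derivative.eval z := by simp [hF]
  have hF_ne : ∀ t, ∀ z ∈ sphere c R, (F t).eval z ≠ 0 := by
    intro t z hz h
    rw [hF_eval] at h
    have : ‖f.eval z‖ ≤ ‖g.eval z‖ :=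
      calc ‖f.eval z‖ = ‖((t : ℝ) : ℂ) * g.eval z‖ := by rw [eq_neg_of_add_eq_zero_left h, norm_neg]
      _ = t * ‖g.eval z‖ := by rw [norm_mul, norm_real, Real.norm_of_nonneg t.2.1]
      _ ≤ ‖g.eval z‖ := mul_le_of_le_one_left (norm_nonneg _) t.2.2
    exact (hfg z hz).not_ge this
  have hcount : ∀ t, (((F t).roots.filter (· ∈ ball c R)).card : ℂ) =
      (2 * π * I)⁻¹ * ∮ z in C(c, R), (F t).derivative.eval z / (F t).eval z := fun t => by
    rw [Polynomial.circleIntegral_derivative_div_eval hR (hF_ne t),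
      inv_mul_cancel_left₀ two_pi_I_ne_zero]
  have hcont : Continuous fun t => ∮ z in C(c, R), (F t).derivative.eval z / (F t).eval z := by
    simp only [circleIntegral, hF_eval, hF_deriv, deriv_circleMap]
    refine intervalIntegral.continuous_parametric_intervalIntegral_of_continuous' ?_ _ _
    simp only [Function.uncurry_def, smul_eq_mul]
    apply Continuous.mul (by fun_prop)
    apply Continuous.div (by fun_prop) (by fun_prop)
    intro p
    simpa [hF_eval] using hF_ne p.1 _ (circleMap_mem_sphere c hR.le p.2)
  have hcount_cont : Continuous fun t => ((F t).roots.filter (· ∈ ball c R)).card :=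
    isInducing_natCast.continuous_iff.2 (by
      simp only [Function.comp_def, hcount]; exact continuous_const.mul hcont)
  simpa [hF] using PreconnectedSpace.constant inferInstance hcount_cont (x := 1) (y := 0)

theorem Polynomial.card_roots_filter_norm_lt_eq_of_dominant {P : ℂ[X]} {i : ℕ} {r : ℝ} (hr : 0 < r)
    (hai : P.coeff i ≠ 0)
    (h : ∀ z : ℂ, ‖z‖ = r → ‖P.eval z - P.coeff i * z ^ i‖ < ‖P.coeff i * z ^ i‖) :
    (P.roots.filter (‖·‖ < r)).card = i := by
  classical
  have := card_roots_filter_mem_ball_add_eq (c := 0) hr (f := C (P.coeff i) * X ^ i)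
    (g := P - C (P.coeff i) * X ^ i) fun z hz => by simpa using h z (by simpa using hz)
  rw [add_sub_cancel, roots_C_mul_X_pow hai, Multiset.filter_nsmul,
    Multiset.filter_singleton, if_pos (mem_ball_self hr)] at this
  simpa [Multiset.filter_congr fun z _ => mem_ball_zero_iff (a := z) (r := r)] using this

end ArgumentPrinciple

theorem exists_apply_le_lt_apply_succ {α : Type*} [LinearOrder α] {u : ℕ → α} {a : α}
    (h0 : u 0 ≤ a) : ∀ {m}, a < u m → ∃ j < m, u j ≤ a ∧ a < u (j + 1)
  | 0, hm => absurd h0 hm.not_ge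
  | m + 1, hm => by
    by_cases ham : a < u m
    · obtain ⟨j, hj, hj'⟩ := exists_apply_le_lt_apply_succ h0 ham
      exact ⟨j, by omega, hj'⟩
    · exact ⟨m, by omega, not_lt.1 ham, hm⟩

theorem Multiset.card_filter_add_card_filter_le {α : Type*} {p q r : α → Prop} [DecidablePred p]
    [DecidablePred q] [DecidablePred r] (s : Multiset α) (hpq : ∀ x, p x → ¬ q x)
    (hp : ∀ x, p x → r x) (hq : ∀ x, q x → r x) :
    (s.filter p).card + (s.filter q).card ≤ (s.filter r).card := by
  rw [← card_add, filter_add_filter,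
    (filter_eq_nil (p := fun x => p x ∧ q x)).2 fun x _ h => hpq x h.1 h.2, add_zero]
  exact card_le_card (monotone_filter_right s fun x h => h.elim (hp x) (hq x))

theorem Multiset.card_filter_norm_eq_le_one {M : Multiset ℂ} {N : ℕ} {r : ℕ → ℝ}
    (hcard : M.card = N) (hcount : ∀ i < N, (M.filter (‖·‖ < r i)).card = i) (a : ℝ) :
    (M.filter (‖·‖ = a)).card ≤ 1 := by
  have key : ∀ ρ ρ', ρ ≤ a → a < ρ' →
      (M.filter (‖·‖ = a)).card + (M.filter (‖·‖ < ρ)).card ≤ (M.filter (‖·‖ < ρ')).card :=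
    fun ρ ρ' h h' => card_filter_add_card_filter_le M (fun x hx hx' => by linarith)
      (fun x hx => by linarith) (fun x hx => by linarith)
  obtain rfl | hN := N.eq_zero_or_pos
  · have := card_le_card (filter_le (‖·‖ = a) M)
    omega
  by_cases hfirst : a < r 0
  · have := key a (r 0) le_rfl hfirst
    rw [hcount 0 hN] at this
    omega
  by_cases hlast : r (N - 1) ≤ a
  · have := key (r (N - 1)) (a + 1) hlast (by linarith)
    have := card_le_card (filter_le (‖·‖ < a + 1) M)
    rw [hcount (N - 1) (by omega)] at *
    omega
  obtain ⟨j, hj, hja, haj⟩ := exists_apply_le_lt_apply_succ (not_lt.1 hfirst) (not_le.1 hlast)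
  have := key (r j) (r (j + 1)) hja haj
  rw [hcount j (by omega), hcount (j + 1) (by omega)] at this
  omega

theorem Polynomial.rootMultiplicity_eq_one_of_card_filter_norm_le_one {P : ℂ[X]} (hP : P ≠ 0)
    (h : ∀ a : ℝ, (P.roots.filter (‖·‖ = a)).card ≤ 1) {z : ℂ} (hz : P.IsRoot z) :
    P.rootMultiplicity z = 1 := by
  refine le_antisymm ?_ ((rootMultiplicity_pos hP).2 hz)
  classical
  rw [← count_roots, ← Multiset.count_filter_of_pos (p := (‖·‖ = ‖z‖)) rfl]
  exact (Multiset.count_le_card _ _).trans (h _)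

theorem Polynomial.eq_of_norm_eq_of_card_filter_norm_le_one {P : ℂ[X]} (hP : P ≠ 0)
    (h : ∀ a : ℝ, (P.roots.filter (‖·‖ = a)).card ≤ 1) {z w : ℂ} (hz : P.IsRoot z)
    (hw : P.IsRoot w) (hzw : ‖z‖ = ‖w‖) : z = w := by
  classical
  have hle := (Multiset.toFinset_card_le _).trans (h ‖z‖)
  exact Finset.card_le_one.1 hle z (by simp [(mem_roots hP).2 hz])
    w (by simp [(mem_roots hP).2 hw, hzw])

theorem Finset.exists_gt_forall_le {ι : Type*} (s : Finset ι) {f : ι → ℝ} {b : ℝ}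
    (h : ∀ k ∈ s, b < f k) : ∃ b', b < b' ∧ ∀ k ∈ s, b' ≤ f k := by
  obtain rfl | hs := s.eq_empty_or_nonempty
  · exact ⟨b + 1, by linarith, by simp⟩
  obtain ⟨k₀, hk₀, hmin⟩ := s.exists_min_image f hs
  exact ⟨f k₀, h k₀ hk₀, hmin⟩

theorem add_sq_mul_half_le_of_second_diff {u : ℕ → ℝ} {L : ℝ} {D : ℕ} (h1 : u 1 + L / 2 ≤ u 0)
    (h2 : ∀ d, d + 2 ≤ D → u d + u (d + 2) + L ≤ 2 * u (d + 1)) {d : ℕ} (hd : d ≤ D) :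
    u d + d ^ 2 * L / 2 ≤ u 0 := by
  have slope : ∀ d, d + 1 ≤ D → u (d + 1) + (2 * d + 1) * L / 2 ≤ u d := by
    intro d hd
    induction d with
    | zero => simpa using h1
    | succ d ih =>
      have := h2 d (by omega)
      have := ih (by omega)
      push_cast
      linarith
  induction d with
  | zero => simp
  | succ d ih =>
    have := slope d hd
    have := ih (by omega)
    push_cast
    linarith

theorem add_sq_mul_half_le_of_second_diff_of_slope {ℓ : ℕ → ℝ} {L : ℝ} {N i : ℕ}
    (hconc : ∀ k, k + 2 ≤ N → ℓ k + ℓ (k + 2) + L ≤ 2 * ℓ (k + 1))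
    (hslope : ℓ (i + 1) + L / 2 = ℓ i) (hi : i + 1 ≤ N) {d : ℕ} :
    (d < i → ℓ (i - 1 - d) + ((d + 1 : ℕ) : ℝ) ^ 2 * L / 2 ≤ ℓ i) ∧
      (d < N - i → ℓ (i + 1 + d) + ((d + 1 : ℕ) : ℝ) ^ 2 * L / 2 ≤ ℓ i) := by
  constructor
  · intro hd
    have h1 : ℓ (i - 1) + L / 2 ≤ ℓ i := by
      have := hconc (i - 1) (by omega)
      rw [show i - 1 + 2 = i + 1 by omega, show i - 1 + 1 = i by omega] at this
      linarith
    have h2 : ∀ e, e + 2 ≤ i → ℓ (i - e) + ℓ (i - (e + 2)) + L ≤ 2 * ℓ (i - (e + 1)) := by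
      intro e he
      have := hconc (i - (e + 2)) (by omega)
      rw [show i - (e + 2) + 2 = i - e by omega, show i - (e + 2) + 1 = i - (e + 1) by omega]
        at this
      linarith
    simpa [show i - 1 - d = i - (d + 1) by omega] using
      add_sq_mul_half_le_of_second_diff (u := fun e => ℓ (i - e)) h1 h2 (d := d + 1) (by omega)
  · intro hd
    simpa [show i + 1 + d = i + (d + 1) by ring] using
      add_sq_mul_half_le_of_second_diff (u := fun e => ℓ (i + e)) (D := N - i)
        (by simpa using hslope.le) (fun e he => by simpa [add_assoc] using hconc (i + e) (by omega))
        (d := d + 1) (by omega)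

theorem Antitone.sum_range_add_sum_range_le {f : ℕ → ℝ} (hf : Antitone f) {p q n : ℕ}
    (h : p + q = 2 * n) : ∑ d ∈ range p, f d + ∑ d ∈ range q, f d ≤ 2 * ∑ d ∈ range n, f d := by
  wlog hpq : p ≤ q generalizing p q
  · linarith [this (q := p) (p := q) (by omega) (by omega)]
  obtain ⟨k, rfl⟩ : ∃ k, n = p + k := ⟨n - p, by omega⟩
  obtain rfl : q = p + k + k := by omega
  have : ∑ d ∈ range k, f (p + k + d) ≤ ∑ d ∈ range k, f (p + d) :=
    sum_le_sum fun d _ => hf (by omega)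
  rw [sum_range_add, sum_range_add]
  linarith

theorem sum_range_rpow_neg_sq_half_lt {b b' : ℝ} (hb : 0 < b) (hbb' : b < b') {n : ℕ}
    (hn : 0 < n) :
    ∑ d ∈ range n, b' ^ (-((d + 1 : ℕ) : ℝ) ^ 2 / 2) < ∑ k ∈ Icc 1 n, b ^ (-(k : ℝ) ^ 2 / 2) := by
  rw [← Ico_add_one_right_eq_Icc, sum_Ico_eq_sum_range, Nat.add_sub_cancel]
  refine sum_lt_sum_of_nonempty (nonempty_range_iff.2 hn.ne') fun d _ => ?_
  rw [add_comm 1 d]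
  exact rpow_lt_rpow_of_neg hb hbb' (div_neg_of_neg_of_pos (neg_lt_zero.2 (by positivity)) two_pos)

theorem Polynomial.norm_eval_sub_coeff_mul_pow_le {P : ℂ[X]} {N i : ℕ} (hdeg : P.natDegree ≤ N)
    (hi : i ≤ N) (z : ℂ) (w : ℕ → ℝ)
    (hleft : ∀ d < i, ‖P.coeff (i - 1 - d) * z ^ (i - 1 - d)‖ ≤ ‖P.coeff i * z ^ i‖ * w (d + 1))
    (hright : ∀ d < N - i,
      ‖P.coeff (i + 1 + d) * z ^ (i + 1 + d)‖ ≤ ‖P.coeff i * z ^ i‖ * w (d + 1)) :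
    ‖P.eval z - P.coeff i * z ^ i‖ ≤
      ‖P.coeff i * z ^ i‖ * (∑ d ∈ range i, w (d + 1) + ∑ d ∈ range (N - i), w (d + 1)) := by
  have hsplit : P.eval z - P.coeff i * z ^ i =
      ∑ d ∈ range i, P.coeff (i - 1 - d) * z ^ (i - 1 - d) +
        ∑ d ∈ range (N - i), P.coeff (i + 1 + d) * z ^ (i + 1 + d) := by
    rw [eval_eq_sum_range' (Nat.lt_add_one_of_le hdeg), show N + 1 = i + 1 + (N - i) by omega,
      sum_range_add, sum_range_succ, sum_range_reflect (fun j => P.coeff j * z ^ j) i]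
    ring
  rw [hsplit, mul_add, mul_sum, mul_sum]
  refine (norm_add_le _ _).trans (add_le_add ?_ ?_) <;>
    refine (norm_sum_le _ _).trans (sum_le_sum fun d hd => ?_)
  · exact hleft d (mem_range.1 hd)
  · exact hright d (mem_range.1 hd)

theorem Polynomial.norm_eval_sub_coeff_mul_pow_le_of_mul_le_sq {P : ℂ[X]} {N i : ℕ} {b : ℝ}
    (hb : 0 < b) (hdeg : P.natDegree ≤ N) (hcoeff : ∀ k ≤ N, P.coeff k ≠ 0)
    (hq : ∀ k, k + 2 ≤ N → b * (‖P.coeff k‖ * ‖P.coeff (k + 2)‖) ≤ ‖P.coeff (k + 1)‖ ^ 2)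
    (hi : i + 1 ≤ N) {z : ℂ} (hz : ‖z‖ = ‖P.coeff i‖ / (‖P.coeff (i + 1)‖ * √b)) :
    ‖P.eval z - P.coeff i * z ^ i‖ ≤ ‖P.coeff i * z ^ i‖ *
      (∑ d ∈ range i, b ^ (-((d + 1 : ℕ) : ℝ) ^ 2 / 2) +
        ∑ d ∈ range (N - i), b ^ (-((d + 1 : ℕ) : ℝ) ^ 2 / 2)) := by
  have hA : ∀ k ≤ N, 0 < ‖P.coeff k‖ := fun k hk => norm_pos_iff.2 (hcoeff k hk)
  have hz0 : 0 < ‖z‖ := by rw [hz]; have := hA i (by omega); have := hA (i + 1) hi; positivity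
  set ℓ : ℕ → ℝ := fun k => log ‖P.coeff k‖ + k * log ‖z‖ with hℓ
  have hnorm : ∀ k ≤ N, ‖P.coeff k * z ^ k‖ = exp (ℓ k) := fun k hk => by
    rw [hℓ, exp_add, exp_log (hA k hk), ← log_pow, exp_log (by positivity), norm_mul, norm_pow]
  have hconc : ∀ k, k + 2 ≤ N → ℓ k + ℓ (k + 2) + log b ≤ 2 * ℓ (k + 1) := fun k hk => by
    have hpos := mul_pos (hA k (by omega)) (hA (k + 2) hk)
    have := log_le_log (mul_pos hb hpos) (hq k hk)
    rw [log_mul hb.ne' hpos.ne', log_mul (hA k (by omega)).ne' (hA (k + 2) hk).ne', log_pow] at this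
    simp only [hℓ]
    push_cast at this
    push_cast
    linarith
  have hslope : ℓ (i + 1) + log b / 2 = ℓ i := by
    have := hA i (by omega); have := hA (i + 1) hi
    simp only [hℓ, hz]
    rw [log_div (by positivity) (by positivity), log_mul (by positivity) (by positivity),
      log_sqrt hb.le]
    push_cast
    ring
  have hweight : ∀ d : ℕ,
      ‖P.coeff i * z ^ i‖ * b ^ (-(d : ℝ) ^ 2 / 2) = exp (ℓ i - d ^ 2 * log b / 2) :=
    fun d => by rw [hnorm i (by omega), rpow_def_of_pos hb, ← exp_add]; ring_nf
  apply norm_eval_sub_coeff_mul_pow_le hdeg (by omega) z (fun d => b ^ (-(d : ℝ) ^ 2 / 2))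
  · intro d hd
    rw [hnorm _ (by omega), hweight, exp_le_exp]
    linarith [(add_sq_mul_half_le_of_second_diff_of_slope hconc hslope hi (d := d)).1 hd]
  · intro d hd
    rw [hnorm _ (by omega), hweight, exp_le_exp]
    linarith [(add_sq_mul_half_le_of_second_diff_of_slope hconc hslope hi (d := d)).2 hd]

theorem Polynomial.norm_eval_sub_coeff_mul_pow_lt_of_mul_le_sq {P : ℂ[X]} {n i : ℕ} {b : ℝ}
    (hb : 1 < b) (hdeg : P.natDegree ≤ 2 * n) (hcoeff : ∀ k ≤ 2 * n, P.coeff k ≠ 0)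
    (hq : ∀ k, k + 2 ≤ 2 * n → b * (‖P.coeff k‖ * ‖P.coeff (k + 2)‖) ≤ ‖P.coeff (k + 1)‖ ^ 2)
    (hweights : 2 * ∑ d ∈ range n, b ^ (-((d + 1 : ℕ) : ℝ) ^ 2 / 2) < 1)
    (hi : i < 2 * n) {z : ℂ} (hz : ‖z‖ = ‖P.coeff i‖ / (‖P.coeff (i + 1)‖ * √b)) :
    ‖P.eval z - P.coeff i * z ^ i‖ < ‖P.coeff i * z ^ i‖ := by
  have hpos : 0 < ‖P.coeff i * z ^ i‖ := by
    have := norm_pos_iff.2 (hcoeff i hi.le)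
    have := norm_pos_iff.2 (hcoeff (i + 1) hi)
    have := sqrt_pos.2 (zero_lt_one.trans hb)
    rw [norm_mul, norm_pow, hz]
    positivity
  have hanti : Antitone fun d : ℕ => b ^ (-((d + 1 : ℕ) : ℝ) ^ 2 / 2) := fun d e hde =>
    rpow_le_rpow_of_exponent_le hb.le (by gcongr)
  calc ‖P.eval z - P.coeff i * z ^ i‖
      ≤ ‖P.coeff i * z ^ i‖ * (∑ d ∈ range i, b ^ (-((d + 1 : ℕ) : ℝ) ^ 2 / 2) +
          ∑ d ∈ range (2 * n - i), b ^ (-((d + 1 : ℕ) : ℝ) ^ 2 / 2)) :=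
        norm_eval_sub_coeff_mul_pow_le_of_mul_le_sq (zero_lt_one.trans hb) hdeg hcoeff hq hi hz
    _ ≤ ‖P.coeff i * z ^ i‖ * (2 * ∑ d ∈ range n, b ^ (-((d + 1 : ℕ) : ℝ) ^ 2 / 2)) := by
        gcongr
        exact hanti.sum_range_add_sum_range_le (by omega)
    _ < ‖P.coeff i * z ^ i‖ := mul_lt_of_lt_one_right hpos hweights

/-- If `P` is a complex polynomial of degree `2n` with nonzero coefficients and
`|q_k(P)| > b_{2n}` for all `k = 2, …, 2n`, then all zeros of `P` are simple and
the moduli of the zeros are pairwise different. -/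
theorem stmt_3 (n : ℕ) (hn : 0 < n) (b : ℝ)
    (hb : 1 < b ∧ 1 - 2 * ∑ k ∈ Finset.Icc 1 n, b ^ (-(k : ℝ) ^ 2 / 2) = 0)
    (P : Polynomial ℂ) (hdeg : P.natDegree = 2 * n)
    (hcoeff : ∀ k, k ≤ 2 * n → P.coeff k ≠ 0)
    (hq : ∀ k, 2 ≤ k → k ≤ 2 * n →
      b < ‖(P.coeff (k - 1)) ^ 2 / (P.coeff (k - 2) * P.coeff k)‖) :
    (∀ z : ℂ, P.IsRoot z → P.rootMultiplicity z = 1) ∧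
    (∀ z w : ℂ, P.IsRoot z → P.IsRoot w → z ≠ w →
      ‖z‖ ≠ ‖w‖) := by
  obtain ⟨hb1, hbsum⟩ := hb
  -- a slightly larger `b'` still bounds every `|q_k(P)|` and makes the final estimate strict
  obtain ⟨b', hbb', hb'q⟩ := (Icc 2 (2 * n)).exists_gt_forall_le fun k hk =>
    hq k (mem_Icc.1 hk).1 (mem_Icc.1 hk).2
  have hq' : ∀ k, k + 2 ≤ 2 * n →
      b' * (‖P.coeff k‖ * ‖P.coeff (k + 2)‖) ≤ ‖P.coeff (k + 1)‖ ^ 2 := fun k hk => by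
    have := hb'q (k + 2) (mem_Icc.2 ⟨by omega, hk⟩)
    rwa [Nat.add_sub_cancel, show k + 2 - 1 = k + 1 by omega, norm_div, norm_pow, norm_mul,
      le_div_iff₀ (mul_pos (norm_pos_iff.2 (hcoeff k (by omega)))
        (norm_pos_iff.2 (hcoeff (k + 2) hk)))] at this
  have hweights := sum_range_rpow_neg_sq_half_lt (by linarith) hbb' hn
  have hcount : ∀ i < 2 * n,
      (P.roots.filter (‖·‖ < ‖P.coeff i‖ / (‖P.coeff (i + 1)‖ * √b'))).card = i := fun i hi =>
    card_roots_filter_norm_lt_eq_of_dominant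
      (div_pos (norm_pos_iff.2 (hcoeff i hi.le))
        (mul_pos (norm_pos_iff.2 (hcoeff (i + 1) hi)) (sqrt_pos.2 (by linarith))))
      (hcoeff i hi.le) fun z hz => norm_eval_sub_coeff_mul_pow_lt_of_mul_le_sq (by linarith)
        hdeg.le hcoeff hq' (by linarith) hi hz
  have hle : ∀ a : ℝ, (P.roots.filter (‖·‖ = a)).card ≤ 1 :=
    Multiset.card_filter_norm_eq_le_one
      (by rw [← hdeg]; exact splits_iff_card_roots.1 (IsAlgClosed.splits P)) hcount
  have hP : P ≠ 0 := fun h => hcoeff 0 (Nat.zero_le _) (by simp [h])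
  exact ⟨fun z hz => rootMultiplicity_eq_one_of_card_filter_norm_le_one hP hle hz,
    fun z w hz hw hzw hzw' => hzw (eq_of_norm_eq_of_card_filter_norm_le_one hP hle hz hw hzw')⟩
end

section
/- Let n ≥ 2 be an integer and let P(z) = ∑_{k=0}^{n} a_k z^k be a complex polynomial of degree n with a_k ∈ ℂ \ {0} for all k. If |q_k(P)| ≥ b_∞ for all k = 2, 3, …, n, then all zeros of P are simple; moreover, the moduli of the zeros of P are pairwise different. -/
/-!
Put `R_k = √B |a_{k-1}| / |a_k|` for `1 ≤ k < n`. The hypothesis on the second quotients makes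
the sequence `j ↦ log (|a_j| R_k^j) + (j - k)² log B / 2` concave, and it takes the same value
at `k - 1` and `k`; hence `|a_j| R_k^j ≤ |a_k| R_k^k B^{-(j-k)²/2}`. Since
`2 ∑_{m ≥ 1} B^{-m²/2} = 1`, the monomial `a_k z^k` strictly dominates the rest of `P` on the
circle `|z| = R_k`, and the argument principle shows that `P` has exactly `k` zeros in `|z| < R_k`.
Zeros counted with multiplicity, these counts `1, 2, …, n - 1` together with the total `n` leave
room for at most one zero on each circle `|z| = ρ`.
-/

open Polynomial Metric Complex Finset
open scoped Real

theorem circleIntegral_logDeriv_eq_zero_of_mapsTo_slitPlane {f : ℂ → ℂ} {c : ℂ} {R : ℝ}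
    (hR : 0 ≤ R) (hf : ∀ z ∈ sphere c R, DifferentiableAt ℂ f z)
    (hslit : ∀ z ∈ sphere c R, f z ∈ slitPlane) :
    ∮ z in C(c, R), logDeriv f z = 0 :=
  circleIntegral.integral_eq_zero_of_hasDerivWithinAt hR fun z hz =>
    ((hf z hz).hasDerivAt.clog (hslit z hz)).hasDerivWithinAt

theorem circleIntegral_sub_inv_of_notMem_closedBall {c w : ℂ} {R : ℝ} (hR : 0 ≤ R)
    (hw : w ∉ closedBall c R) :
    ∮ z in C(c, R), (z - w)⁻¹ = 0 := by
  have hd : DifferentiableOn ℂ (fun z => (z - w)⁻¹) (closedBall c R) := fun z hz =>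
    ((differentiableAt_id.sub_const w).inv
      (sub_ne_zero.2 (ne_of_mem_of_not_mem hz hw))).differentiableWithinAt
  exact (hd.diffContOnCl_ball subset_rfl).circleIntegral_eq_zero hR

theorem circleIntegral_multiset_sum_inv_sub {R : ℝ} (hR : 0 ≤ R) (s : Multiset ℂ)
    (hs : ∀ w ∈ s, ‖w‖ ≠ R) :
    ∮ z in C(0, R), (s.map fun w => (z - w)⁻¹).sum
      = 2 * π * I * (s.filter (‖·‖ < R)).card := by
  induction s using Multiset.induction_on with
  | empty => simp [circleIntegral]
  | cons a s ih =>
    have ha : ‖a‖ ≠ R := hs a (Multiset.mem_cons_self a s)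
    have hs' : ∀ w ∈ s, ‖w‖ ≠ R := fun w hw => hs w (Multiset.mem_cons_of_mem hw)
    have hcont : ∀ w : ℂ, ‖w‖ ≠ R → ContinuousOn (fun z => (z - w)⁻¹) (sphere 0 R) :=
      fun w hw => (continuousOn_id.sub continuousOn_const).inv₀ fun z hz =>
        sub_ne_zero.2 (ne_of_mem_of_not_mem hz (show w ∉ sphere (0 : ℂ) R by simpa using hw))
    have hsum : CircleIntegrable (fun z => (s.map fun w => (z - w)⁻¹).sum) 0 R :=
      (continuousOn_multiset_sum s fun w hw => hcont w (hs' w hw)).circleIntegrable hR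
    simp only [Multiset.map_cons, Multiset.sum_cons]
    rw [circleIntegral.integral_add ((hcont a ha).circleIntegrable hR) hsum, ih hs',
      Multiset.filter_cons]
    by_cases h : ‖a‖ < R
    · rw [circleIntegral.integral_sub_inv_of_mem_ball (by simpa using h)]
      simp only [h, if_true, Multiset.card_add, Multiset.card_singleton, Nat.cast_add,
        Nat.cast_one]
      ring
    · rw [circleIntegral_sub_inv_of_notMem_closedBall hR
        (by simpa using (not_lt.1 h).lt_of_ne' ha)]
      simp [h]

theorem Polynomial.logDeriv_eval (P : ℂ[X]) :
    logDeriv P.eval = fun z => P.derivative.eval z / P.eval z := by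
  ext z
  rw [logDeriv_apply, Polynomial.deriv]

theorem Polynomial.circleIntegral_logDeriv_eval (P : ℂ[X]) {R : ℝ} (hR : 0 ≤ R)
    (hP : ∀ z ∈ sphere (0 : ℂ) R, P.eval z ≠ 0) :
    ∮ z in C(0, R), logDeriv P.eval z = 2 * π * I * (P.roots.filter (‖·‖ < R)).card := by
  have hroots : ∀ w ∈ P.roots, ‖w‖ ≠ R := fun w hw hwR =>
    hP w (by simpa using hwR) (isRoot_of_mem_roots hw)
  rw [← circleIntegral_multiset_sum_inv_sub hR _ hroots]
  refine circleIntegral.integral_congr hR fun z hz => ?_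
  simp only [P.logDeriv_eval]
  rw [(IsAlgClosed.splits P).eval_derivative_div_eval_of_ne_zero (hP z hz)]
  simp only [one_div]

/-- A polynomial version of Rouché's theorem. -/
theorem Polynomial.card_roots_filter_norm_lt_of_dominant {P : ℂ[X]} {R : ℝ} (hR : 0 < R)
    {k : ℕ} (hdom : ∀ z : ℂ, ‖z‖ = R →
      ‖P.eval z - P.coeff k * z ^ k‖ < ‖P.coeff k * z ^ k‖) :
    (P.roots.filter (‖·‖ < R)).card = k := by
  have hdom' : ∀ z ∈ sphere (0 : ℂ) R,
      ‖P.eval z - P.coeff k * z ^ k‖ < ‖P.coeff k * z ^ k‖ :=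
    fun z hz => hdom z (mem_sphere_zero_iff_norm.1 hz)
  have hz0 : ∀ z ∈ sphere (0 : ℂ) R, z ≠ 0 := fun z hz =>
    norm_ne_zero_iff.1 (by rw [mem_sphere_zero_iff_norm.1 hz]; exact hR.ne')
  have hm : ∀ z ∈ sphere (0 : ℂ) R, P.coeff k * z ^ k ≠ 0 := fun z hz h =>
    (norm_nonneg _).not_gt (by simpa [h] using hdom' z hz)
  have hP : ∀ z ∈ sphere (0 : ℂ) R, P.eval z ≠ 0 := fun z hz h => by
    simpa [h] using hdom' z hz
  -- `P / (a_k z^k)` stays in the disc `|w - 1| < 1`, where `log` is holomorphic.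
  have hquot : ∀ z ∈ sphere (0 : ℂ) R, P.eval z / (P.coeff k * z ^ k) ∈ slitPlane := by
    intro z hz
    have hnear : ‖P.eval z / (P.coeff k * z ^ k) - 1‖ < 1 := by
      rw [div_sub_one (hm z hz), norm_div, div_lt_one (norm_pos_iff.2 (hm z hz))]
      exact hdom' z hz
    simpa using mem_slitPlane_of_norm_lt_one hnear
  have hlog : ∀ z ∈ sphere (0 : ℂ) R, logDeriv P.eval z - k * z⁻¹
      = logDeriv (fun z => P.eval z / (P.coeff k * z ^ k)) z := fun z hz => by
    rw [logDeriv_div z (hP z hz) (hm z hz) (P.differentiable z) (by fun_prop),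
      logDeriv_const_mul z _ (left_ne_zero_of_mul (hm z hz)), logDeriv_pow, div_eq_mul_inv]
  have hint : CircleIntegrable (logDeriv P.eval) 0 R := by
    rw [P.logDeriv_eval]
    exact (ContinuousOn.div (by fun_prop) (by fun_prop) hP).circleIntegrable hR.le
  have hinv : CircleIntegrable (fun z => (k : ℂ) * z⁻¹) 0 R :=
    (continuousOn_const.mul (continuousOn_id.inv₀ hz0)).circleIntegrable hR.le
  have hzero : ∮ z in C(0, R), logDeriv P.eval z - k * z⁻¹ = 0 := by
    rw [circleIntegral.integral_congr hR.le hlog]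
    exact circleIntegral_logDeriv_eq_zero_of_mapsTo_slitPlane hR.le
      (fun z hz => (P.differentiable z).div (by fun_prop) (hm z hz)) hquot
  have hcenter : ∮ z in C(0, R), z⁻¹ = 2 * π * I := by
    simpa using circleIntegral.integral_sub_center_inv 0 hR.ne'
  rw [circleIntegral.integral_sub hint hinv, circleIntegral.integral_const_mul, hcenter,
    P.circleIntegral_logDeriv_eval hR.le hP, sub_eq_zero, mul_comm (k : ℂ)] at hzero
  exact_mod_cast mul_left_cancel₀ two_pi_I_ne_zero hzero

theorem apply_le_of_concave_of_apply_eq_apply_succ {f : ℕ → ℝ} {n i : ℕ}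
    (hconc : ∀ j, j + 2 ≤ n → f j + f (j + 2) ≤ 2 * f (j + 1))
    (hi : i + 1 ≤ n) (heq : f i = f (i + 1)) {j : ℕ} (hj : j ≤ n) : f j ≤ f i := by
  set d : ℕ → ℝ := fun j => f (j + 1) - f j
  have hd : AntitoneOn d (Set.Iio n) :=
    antitoneOn_of_succ_le Set.ordConnected_Iio fun a _ _ ha => by
      have := hconc a (by simp only [Order.succ_eq_add_one, Set.mem_Iio] at ha; omega)
      simp only [d, Order.succ_eq_add_one]
      linarith
  have hdi : d i = 0 := by simp [d, heq]
  rcases le_total j i with hji | hij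
  · have hmono : MonotoneOn f (Set.Iic i) :=
      monotoneOn_of_le_succ Set.ordConnected_Iic fun a _ ha hsa => by
        simp only [Order.succ_eq_add_one, Set.mem_Iic] at hsa ⊢
        have := hd (a := a) (b := i) (by simp only [Set.mem_Iio]; omega)
          (by simp only [Set.mem_Iio]; omega) (by omega)
        simp only [d] at this hdi
        linarith
    exact hmono (Set.mem_Iic.2 hji) (Set.mem_Iic.2 le_rfl) hji
  · have hanti : AntitoneOn f (Set.Icc i n) :=
      antitoneOn_of_succ_le Set.ordConnected_Icc fun a _ ha hsa => by
        simp only [Order.succ_eq_add_one, Set.mem_Icc] at ha hsa ⊢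
        have := hd (a := i) (b := a) (by simp only [Set.mem_Iio]; omega)
          (by simp only [Set.mem_Iio]; omega) ha.1
        simp only [d] at this hdi
        linarith
    exact hanti ⟨le_rfl, by omega⟩ ⟨hij, hj⟩ hij

theorem mul_pow_le_of_logConcave {c : ℕ → ℝ} {B : ℝ} {n k : ℕ} (hB : 0 < B)
    (hc : ∀ j ≤ n, 0 < c j)
    (hlc : ∀ j, j + 2 ≤ n → B * (c j * c (j + 2)) ≤ c (j + 1) ^ 2)
    (hk : 1 ≤ k) (hkn : k ≤ n) {j : ℕ} (hj : j ≤ n) :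
    c j * (√B * c (k - 1) / c k) ^ j
      ≤ c k * (√B * c (k - 1) / c k) ^ k * B ^ (-((j : ℝ) - k) ^ 2 / 2) := by
  set R := √B * c (k - 1) / c k
  have hck := hc k hkn
  have hck' := hc (k - 1) (by omega)
  have hcj := hc j hj
  have hR : 0 < R := by positivity
  have hlogR : Real.log R = Real.log B / 2 + Real.log (c (k - 1)) - Real.log (c k) := by
    rw [Real.log_div (by positivity) hck.ne', Real.log_mul (by positivity) hck'.ne',
      Real.log_sqrt hB.le]
  set f : ℕ → ℝ := fun j =>
    Real.log (c j) + j * Real.log R + ((j : ℝ) - k) ^ 2 / 2 * Real.log B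
  have hconc : ∀ i, i + 2 ≤ n → f i + f (i + 2) ≤ 2 * f (i + 1) := fun i hi => by
    have hci := hc i (by omega)
    have hci' := hc (i + 2) hi
    have h := Real.log_le_log (by positivity) (hlc i hi)
    rw [Real.log_mul hB.ne' (by positivity), Real.log_mul hci.ne' hci'.ne', Real.log_pow] at h
    simp only [f]
    push_cast
    linear_combination h
  have heq : f (k - 1) = f (k - 1 + 1) := by
    simp only [f, Nat.sub_add_cancel hk, Nat.cast_sub hk, hlogR]
    push_cast
    ring
  have hmax := apply_le_of_concave_of_apply_eq_apply_succ hconc (by omega) heq hj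
  rw [heq, Nat.sub_add_cancel hk] at hmax
  rw [← Real.log_le_log_iff (by positivity) (by positivity),
    Real.log_mul hcj.ne' (by positivity), Real.log_mul (by positivity) (by positivity),
    Real.log_mul hck.ne' (by positivity), Real.log_pow, Real.log_pow, Real.log_rpow hB]
  simp only [f] at hmax
  linear_combination hmax

theorem sum_range_lt_tsum_of_pos {u : ℕ → ℝ} (hu : Summable u) (hpos : ∀ m, 0 < u m)
    (M : ℕ) : ∑ m ∈ range M, u m < ∑' m, u m :=
  calc ∑ m ∈ range M, u m < ∑ m ∈ range (M + 1), u m := by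
        rw [sum_range_succ]; linarith [hpos M]
    _ ≤ ∑' m, u m := hu.sum_le_tsum _ fun m _ => (hpos m).le

theorem sum_erase_rpow_neg_sq_lt_one {B : ℝ} (hB : 0 < B)
    (hS : 1 - 2 * ∑' m : ℕ, B ^ (-((m : ℝ) + 1) ^ 2 / 2) = 0) {n k : ℕ} (hk : k ≤ n) :
    ∑ j ∈ (range (n + 1)).erase k, B ^ (-((j : ℝ) - k) ^ 2 / 2) < 1 := by
  set u : ℕ → ℝ := fun m => B ^ (-((m : ℝ) + 1) ^ 2 / 2)
  have hu : Summable u := by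
    by_contra h
    rw [tsum_eq_zero_of_not_summable h] at hS
    norm_num at hS
  have hhalf : ∀ M, ∑ m ∈ range M, u m < 1 / 2 := fun M =>
    (sum_range_lt_tsum_of_pos hu (fun m => Real.rpow_pos_of_pos hB _) M).trans_eq (by linarith)
  set w : ℕ → ℝ := fun j => B ^ (-((j : ℝ) - k) ^ 2 / 2)
  have hbelow : ∑ j ∈ range k, w j = ∑ m ∈ range k, u m := by
    rw [← sum_range_reflect]
    refine sum_congr rfl fun m hm => ?_
    have hm := mem_range.1 hm
    simp only [w, u, Nat.cast_sub (by omega : m ≤ k - 1), Nat.cast_sub (by omega : 1 ≤ k)]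
    ring_nf
  have habove : ∑ j ∈ Ico (k + 1) (n + 1), w j = ∑ m ∈ range (n - k), u m := by
    rw [sum_Ico_eq_sum_range, show n + 1 - (k + 1) = n - k by omega]
    refine sum_congr rfl fun m _ => ?_
    simp only [w, u]
    push_cast
    ring_nf
  have hsplit : ∑ j ∈ (range (n + 1)).erase k, w j
      = ∑ j ∈ range k, w j + ∑ j ∈ Ico (k + 1) (n + 1), w j := by
    have h := add_sum_erase (range (n + 1)) w (mem_range.2 (by omega : k < n + 1))
    rw [← sum_range_add_sum_Ico _ (by omega : k ≤ n + 1),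
      sum_eq_sum_Ico_succ_bot (by omega)] at h
    linarith
  rw [hsplit, hbelow, habove]
  linarith [hhalf k, hhalf (n - k)]

theorem Polynomial.norm_eval_sub_coeff_mul_pow_lt {P : ℂ[X]} {n k : ℕ}
    (hdeg : P.natDegree ≤ n) (hk : k ≤ n) {z : ℂ} (hz : P.coeff k * z ^ k ≠ 0)
    {w : ℕ → ℝ} (hw : ∀ j ≤ n, ‖P.coeff j * z ^ j‖ ≤ ‖P.coeff k * z ^ k‖ * w j)
    (hsum : ∑ j ∈ (range (n + 1)).erase k, w j < 1) :
    ‖P.eval z - P.coeff k * z ^ k‖ < ‖P.coeff k * z ^ k‖ := by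
  rw [eval_eq_sum_range' (Nat.lt_succ_of_le hdeg),
    ← sum_erase_eq_sub (mem_range.2 (Nat.lt_succ_of_le hk))]
  calc ‖∑ j ∈ (range (n + 1)).erase k, P.coeff j * z ^ j‖
      ≤ ∑ j ∈ (range (n + 1)).erase k, ‖P.coeff k * z ^ k‖ * w j :=
        (norm_sum_le _ _).trans <| sum_le_sum fun j hj =>
          hw j (Nat.lt_succ_iff.1 (mem_range.1 (mem_of_mem_erase hj)))
    _ = ‖P.coeff k * z ^ k‖ * ∑ j ∈ (range (n + 1)).erase k, w j := (mul_sum ..).symm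
    _ < ‖P.coeff k * z ^ k‖ := mul_lt_of_lt_one_right (norm_pos_iff.2 hz) hsum

theorem Multiset.card_filter_eq_le_one {α β : Type*} [LinearOrder β] {s : Multiset α}
    {g : α → β} {R : ℕ → β}
    (hR : ∀ k, 1 ≤ k → k < card s → card (s.filter (g · < R k)) = k) (ρ : β) :
    card (s.filter (g · = ρ)) ≤ 1 := by
  by_contra! h
  -- With `k` elements below `ρ` and two at `ρ`, `R (k + 1)` fits on neither side of `ρ`.
  set k := card (s.filter (g · < ρ))
  have hle : k + 2 ≤ card (s.filter (g · ≤ ρ)) := by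
    have hdisj : s.filter (fun x => g x < ρ ∧ g x = ρ) = 0 :=
      Multiset.filter_eq_nil.2 fun x _ hx => hx.1.ne hx.2
    have hunion : s.filter (g · < ρ) + s.filter (g · = ρ) = s.filter (g · ≤ ρ) := by
      rw [Multiset.filter_add_filter, hdisj, add_zero]
      exact Multiset.filter_congr fun x _ => le_iff_lt_or_eq.symm
    rw [← hunion, Multiset.card_add]
    omega
  rcases lt_or_ge (k + 1) (card s) with hk | hk
  · have hRk := hR (k + 1) (by omega) hk
    rcases le_or_gt (R (k + 1)) ρ with hρ | hρ
    · have := Multiset.card_le_card (Multiset.monotone_filter_right s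
        (fun x (hx : g x < R (k + 1)) => hx.trans_le hρ))
      omega
    · have := Multiset.card_le_card (Multiset.monotone_filter_right s
        (fun x (hx : g x ≤ ρ) => hx.trans_lt hρ))
      omega
  · have := Multiset.card_le_card (Multiset.filter_le (g · ≤ ρ) s)
    omega

theorem Multiset.count_le_one_of_card_filter_eq_le_one {α β : Type*} [DecidableEq α]
    [DecidableEq β] {s : Multiset α} {g : α → β}
    (h : ∀ ρ, card (s.filter (g · = ρ)) ≤ 1) (a : α) : s.count a ≤ 1 :=
  calc s.count a = (s.filter (g · = g a)).count a :=
        (Multiset.count_filter_of_pos (p := (g · = g a)) rfl).symm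
    _ ≤ card (s.filter (g · = g a)) := Multiset.count_le_card _ _
    _ ≤ 1 := h (g a)

theorem Multiset.eq_of_card_filter_eq_le_one {α β : Type*} [DecidableEq β] {s : Multiset α}
    {g : α → β} (h : ∀ ρ, card (s.filter (g · = ρ)) ≤ 1) {a b : α} (ha : a ∈ s)
    (hb : b ∈ s) (hab : g a = g b) : a = b := by
  by_contra hne
  have hsub : ({a, b} : Multiset α) ≤ s.filter (g · = g a) :=
    (Multiset.le_iff_subset (by simpa using hne)).2 fun x hx => by
      rcases Multiset.mem_cons.1 hx with rfl | hx
      · exact Multiset.mem_filter.2 ⟨ha, rfl⟩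
      · rw [Multiset.mem_singleton.1 hx]
        exact Multiset.mem_filter.2 ⟨hb, hab.symm⟩
  have := (Multiset.card_le_card hsub).trans (h (g a))
  simp at this

theorem stmt_6_general (B : ℝ)
    (hB : 1 < B ∧ 1 - 2 * ∑' k : ℕ, B ^ (-((k : ℝ) + 1) ^ 2 / 2) = 0)
    (n : ℕ)
    (P : Polynomial ℂ) (hdeg : P.natDegree = n)
    (hcoeff : ∀ k, k ≤ n → P.coeff k ≠ 0)
    (hq : ∀ k, 2 ≤ k → k ≤ n →
      B ≤ ‖(P.coeff (k - 1)) ^ 2 / (P.coeff (k - 2) * P.coeff k)‖) :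
    (∀ z : ℂ, P.IsRoot z → P.rootMultiplicity z = 1) ∧
    (∀ z w : ℂ, P.IsRoot z → P.IsRoot w → z ≠ w →
      ‖z‖ ≠ ‖w‖) := by
  have hB0 : 0 < B := one_pos.trans hB.1
  have hP : P ≠ 0 := fun h => hcoeff n le_rfl (by simp [h])
  have hc : ∀ j ≤ n, 0 < ‖P.coeff j‖ := fun j hj => norm_pos_iff.2 (hcoeff j hj)
  have hlc : ∀ j, j + 2 ≤ n →
      B * (‖P.coeff j‖ * ‖P.coeff (j + 2)‖) ≤ ‖P.coeff (j + 1)‖ ^ 2 := fun j hj => by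
    have h := hq (j + 2) (by omega) hj
    rwa [Nat.add_sub_cancel, Nat.add_sub_assoc (by omega), norm_div, norm_pow, norm_mul,
      le_div_iff₀ (mul_pos (hc j (by omega)) (hc _ hj))] at h
  have hcount : ∀ k, 1 ≤ k → k < P.roots.card →
      (P.roots.filter (‖·‖ < √B * ‖P.coeff (k - 1)‖ / ‖P.coeff k‖)).card = k := by
    intro k hk hkn
    rw [IsAlgClosed.card_roots_eq_natDegree, hdeg] at hkn
    have hR : 0 < √B * ‖P.coeff (k - 1)‖ / ‖P.coeff k‖ := by
      have := hc k hkn.le; have := hc (k - 1) (by omega); positivity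
    refine card_roots_filter_norm_lt_of_dominant hR fun z hz => ?_
    have hz0 : z ≠ 0 := norm_ne_zero_iff.1 (hz ▸ hR.ne')
    refine norm_eval_sub_coeff_mul_pow_lt hdeg.le hkn.le
      (mul_ne_zero (hcoeff k hkn.le) (pow_ne_zero _ hz0)) (fun j hj => ?_)
      (sum_erase_rpow_neg_sq_lt_one hB0 hB.2 hkn.le)
    simp only [norm_mul, norm_pow, hz]
    exact mul_pow_le_of_logConcave hB0 hc hlc hk hkn.le hj
  have hmod := Multiset.card_filter_eq_le_one hcount
  refine ⟨fun z hz => ?_, fun z w hz hw hzw => mt ?_ hzw⟩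
  · rw [← count_roots]
    exact le_antisymm (Multiset.count_le_one_of_card_filter_eq_le_one hmod z)
      (Multiset.one_le_count_iff_mem.2 ((mem_roots hP).2 hz))
  · exact Multiset.eq_of_card_filter_eq_le_one hmod ((mem_roots hP).2 hz)
      ((mem_roots hP).2 hw)

/-- If `P` is a complex polynomial of degree `n ≥ 2` with nonzero coefficients and
`|q_k(P)| ≥ b_∞` for all `k = 2, …, n`, then all zeros of `P` are simple and the
moduli of the zeros are pairwise different. -/
theorem stmt_6 (B : ℝ)
    (hB : 1 < B ∧ 1 - 2 * ∑' k : ℕ, B ^ (-((k : ℝ) + 1) ^ 2 / 2) = 0)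
    (n : ℕ) (hn : 2 ≤ n)
    (P : Polynomial ℂ) (hdeg : P.natDegree = n)
    (hcoeff : ∀ k, k ≤ n → P.coeff k ≠ 0)
    (hq : ∀ k, 2 ≤ k → k ≤ n →
      B ≤ ‖(P.coeff (k - 1)) ^ 2 / (P.coeff (k - 2) * P.coeff k)‖) :
    (∀ z : ℂ, P.IsRoot z → P.rootMultiplicity z = 1) ∧
    (∀ z w : ℂ, P.IsRoot z → P.IsRoot w → z ≠ w →
      ‖z‖ ≠ ‖w‖) :=
  stmt_6_general B hB n P hdeg hcoeff hq
end

section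
/- For every positive integer n there exists a complex polynomial P(z) = ∑_{k=0}^{2n} a_k z^k of degree 2n with a_k ∈ ℂ \ {0} for all k, such that |q_k(P)| = b_{2n} for all k = 2, 3, …, 2n, and P has a multiple root. -/
/-!
Take `a_k = (-1)^k s_k b^{-(k-n)²/2}` for `0 ≤ k ≤ 2n`, where `s_n = 1` and `s_k = -1` otherwise.
The Gaussian exponent makes every second quotient equal to `b` in modulus. Writing
`g_k = (-1)^k a_k`, the defining equation of `b` says exactly `P(-1) = ∑ g_k = 0`, and since
`g` is symmetric about `n`, `-P'(-1) = ∑ k g_k = n ∑ g_k = 0`, so `-1` is a double root.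
-/

open Polynomial Finset

theorem Finset.sum_range_two_mul_add_one_eq_add_sum_Icc {M : Type*} [AddCommMonoid M]
    (N : ℕ) (g : ℕ → M) :
    ∑ k ∈ range (2 * N + 1), g k = g N + ∑ j ∈ Icc 1 N, (g (N - j) + g (N + j)) := by
  have hIcc : ∀ f : ℕ → M, ∑ j ∈ Icc 1 N, f j = ∑ i ∈ range N, f (i + 1) := fun f => by
    rw [← Finset.Ico_add_one_right_eq_Icc, Finset.sum_Ico_eq_sum_range]
    simp [add_comm 1]
  have hlow : ∑ i ∈ range N, g (N - (i + 1)) = ∑ i ∈ range N, g i := by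
    rw [← Finset.sum_range_reflect]
    exact Finset.sum_congr rfl fun i hi => by
      congr 1; have := Finset.mem_range.1 hi; omega
  rw [show 2 * N + 1 = N + 1 + N by ring, Finset.sum_range_add, Finset.sum_range_succ,
    hIcc, Finset.sum_add_distrib, hlow]
  simp only [add_assoc, add_comm 1]
  abel

theorem Finset.sum_range_two_mul_add_one_natCast_mul_of_symm {R : Type*} [CommSemiring R]
    (N : ℕ) (g : ℕ → R) (hg : ∀ j ≤ N, g (N - j) = g (N + j)) :
    ∑ k ∈ range (2 * N + 1), (k : R) * g k = N * ∑ k ∈ range (2 * N + 1), g k := by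
  simp only [Finset.sum_range_two_mul_add_one_eq_add_sum_Icc, mul_add, Finset.mul_sum]
  refine congrArg _ (Finset.sum_congr rfl fun j hj => ?_)
  have hjN := (Finset.mem_Icc.1 hj).2
  rw [hg j hjN, ← add_mul, ← Nat.cast_add, show N - j + (N + j) = N + N by omega,
    Nat.cast_add, add_mul]

section SumMonomials

variable {R : Type*} [CommRing R] (a : ℕ → R) (N : ℕ)

theorem coeff_sum_range_C_mul_X_pow (i : ℕ) :
    (∑ k ∈ range (N + 1), C (a k) * X ^ k).coeff i = if i ≤ N then a i else 0 := by
  simp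

theorem natDegree_sum_range_C_mul_X_pow (ha : a N ≠ 0) :
    (∑ k ∈ range (N + 1), C (a k) * X ^ k).natDegree = N := by
  refine natDegree_eq_of_le_of_coeff_ne_zero ?_ (by simpa [coeff_sum_range_C_mul_X_pow])
  exact natDegree_le_iff_coeff_eq_zero.2 fun i hi => by
    simp [not_le.2 hi]

theorem eval_neg_one_sum_range_C_mul_X_pow :
    (∑ k ∈ range (N + 1), C (a k) * X ^ k).eval (-1) = ∑ k ∈ range (N + 1), (-1) ^ k * a k := by
  simp only [eval_finsetSum, eval_C_mul, eval_pow, eval_X]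
  exact Finset.sum_congr rfl fun k _ => mul_comm _ _

theorem eval_neg_one_derivative_sum_range_C_mul_X_pow :
    (derivative (∑ k ∈ range (N + 1), C (a k) * X ^ k)).eval (-1)
      = -∑ k ∈ range (N + 1), (k : R) * ((-1) ^ k * a k) := by
  simp only [derivative_sum, eval_finsetSum, derivative_C_mul_X_pow, eval_C_mul,
    eval_pow, eval_X, ← Finset.sum_neg_distrib]
  refine Finset.sum_congr rfl fun k _ => ?_
  rcases k with _ | k
  · simp
  · simp only [Nat.add_sub_cancel, pow_succ]
    push_cast
    ring

theorem two_le_rootMultiplicity_neg_one_sum_range_C_mul_X_pow (ha : a N ≠ 0)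
    (h₀ : ∑ k ∈ range (N + 1), (-1) ^ k * a k = 0)
    (h₁ : ∑ k ∈ range (N + 1), (k : R) * ((-1) ^ k * a k) = 0) :
    2 ≤ (∑ k ∈ range (N + 1), C (a k) * X ^ k).rootMultiplicity (-1) := by
  have hP : ∑ k ∈ range (N + 1), C (a k) * X ^ k ≠ 0 := fun h => ha <| by
    simpa [h] using (coeff_sum_range_C_mul_X_pow a N N).symm
  refine (one_lt_rootMultiplicity_iff_isRoot hP).2 ⟨?_, ?_⟩
  · rw [IsRoot.def, eval_neg_one_sum_range_C_mul_X_pow, h₀]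
  · rw [IsRoot.def, eval_neg_one_derivative_sum_range_C_mul_X_pow, h₁, neg_zero]

end SumMonomials

noncomputable def gaussianWeight (b : ℝ) (n k : ℕ) : ℝ := b ^ (-((k : ℝ) - n) ^ 2 / 2)

noncomputable def signedWeight (b : ℝ) (n k : ℕ) : ℝ :=
  if k = n then gaussianWeight b n k else -gaussianWeight b n k

section Weights

variable {b : ℝ} {n : ℕ}

theorem gaussianWeight_pos (hb : 0 < b) (k : ℕ) : 0 < gaussianWeight b n k :=
  Real.rpow_pos_of_pos hb _

theorem gaussianWeight_add (j : ℕ) : gaussianWeight b n (n + j) = b ^ (-(j : ℝ) ^ 2 / 2) := by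
  rw [gaussianWeight]; push_cast; ring_nf

theorem gaussianWeight_sub {j : ℕ} (hj : j ≤ n) :
    gaussianWeight b n (n - j) = b ^ (-(j : ℝ) ^ 2 / 2) := by
  rw [gaussianWeight, Nat.cast_sub hj]; ring_nf

theorem gaussianWeight_self : gaussianWeight b n n = 1 := by
  simpa using gaussianWeight_add (b := b) (n := n) 0

theorem gaussianWeight_sq_div (hb : 0 < b) (k : ℕ) :
    gaussianWeight b n (k + 1) ^ 2 / (gaussianWeight b n k * gaussianWeight b n (k + 2)) = b := by
  simp only [gaussianWeight, ← Real.rpow_mul_natCast hb.le, ← Real.rpow_add hb,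
    ← Real.rpow_sub hb]
  convert Real.rpow_one b using 2
  push_cast
  ring

theorem abs_signedWeight (hb : 0 < b) (k : ℕ) : |signedWeight b n k| = gaussianWeight b n k := by
  unfold signedWeight
  split_ifs <;> simp [abs_of_pos (gaussianWeight_pos hb k)]

theorem signedWeight_sub_eq_add {j : ℕ} (hj : j ≤ n) :
    signedWeight b n (n - j) = signedWeight b n (n + j) := by
  rcases j.eq_zero_or_pos with rfl | hj₀
  · simp
  · simp only [signedWeight, if_neg (by omega : n - j ≠ n), if_neg (by omega : n + j ≠ n),
      gaussianWeight_sub hj, gaussianWeight_add]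

theorem sum_signedWeight :
    ∑ k ∈ range (2 * n + 1), signedWeight b n k = 1 - 2 * ∑ j ∈ Icc 1 n, b ^ (-(j : ℝ) ^ 2 / 2) := by
  rw [Finset.sum_range_two_mul_add_one_eq_add_sum_Icc, sub_eq_add_neg, Finset.mul_sum,
    ← Finset.sum_neg_distrib, signedWeight, if_pos rfl, gaussianWeight_self]
  refine congrArg _ (Finset.sum_congr rfl fun j hj => ?_)
  obtain ⟨hj₁, hjn⟩ := Finset.mem_Icc.1 hj
  rw [signedWeight_sub_eq_add hjn, signedWeight, if_neg (by omega), gaussianWeight_add]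
  ring

end Weights

noncomputable def alternatingCoeff (b : ℝ) (n k : ℕ) : ℂ := (-1) ^ k * signedWeight b n k

section AlternatingCoeff

variable {b : ℝ} {n : ℕ}

theorem norm_alternatingCoeff (hb : 0 < b) (k : ℕ) :
    ‖alternatingCoeff b n k‖ = gaussianWeight b n k := by
  rw [alternatingCoeff, norm_mul, norm_pow, norm_neg, norm_one, one_pow, one_mul,
    Complex.norm_real, Real.norm_eq_abs, abs_signedWeight hb]

theorem alternatingCoeff_ne_zero (hb : 0 < b) (k : ℕ) : alternatingCoeff b n k ≠ 0 :=
  norm_ne_zero_iff.1 <| (norm_alternatingCoeff hb k).trans_ne (gaussianWeight_pos hb k).ne'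

theorem neg_one_pow_mul_alternatingCoeff (k : ℕ) :
    (-1) ^ k * alternatingCoeff b n k = signedWeight b n k := by
  rw [alternatingCoeff, ← mul_assoc, ← mul_pow, neg_one_mul, neg_neg, one_pow, one_mul]

end AlternatingCoeff

theorem stmt_7_general (n : ℕ) (b : ℝ)
    (hb : 1 < b ∧ 1 - 2 * ∑ k ∈ Finset.Icc 1 n, b ^ (-(k : ℝ) ^ 2 / 2) = 0) :
    ∃ P : Polynomial ℂ, P.natDegree = 2 * n ∧
      (∀ k, k ≤ 2 * n → P.coeff k ≠ 0) ∧
      (∀ k, 2 ≤ k → k ≤ 2 * n →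
        ‖(P.coeff (k - 1)) ^ 2 / (P.coeff (k - 2) * P.coeff k)‖ = b) ∧
      (∃ z : ℂ, 2 ≤ P.rootMultiplicity z) := by
  obtain ⟨hb₁, hsum⟩ := hb
  have hb₀ : 0 < b := one_pos.trans hb₁
  set a := alternatingCoeff b n
  have ha := alternatingCoeff_ne_zero (n := n) hb₀
  have hcoeff : ∀ k ≤ 2 * n, (∑ k ∈ range (2 * n + 1), C (a k) * X ^ k).coeff k = a k :=
    fun k hk => by rw [coeff_sum_range_C_mul_X_pow, if_pos hk]
  have h₀ : ∑ k ∈ range (2 * n + 1), (-1) ^ k * a k = 0 := by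
    simp only [a, neg_one_pow_mul_alternatingCoeff]
    exact_mod_cast sum_signedWeight.trans hsum
  have h₁ : ∑ k ∈ range (2 * n + 1), (k : ℂ) * ((-1) ^ k * a k) = 0 := by
    simp only [a, neg_one_pow_mul_alternatingCoeff]
    rw [Finset.sum_range_two_mul_add_one_natCast_mul_of_symm n _
      fun j hj => by rw [signedWeight_sub_eq_add hj]]
    exact_mod_cast mul_eq_zero_of_right _ (sum_signedWeight.trans hsum)
  refine ⟨_, natDegree_sum_range_C_mul_X_pow a _ (ha _), fun k hk => hcoeff k hk ▸ ha k,
    fun k hk₂ hk => ?_, -1, two_le_rootMultiplicity_neg_one_sum_range_C_mul_X_pow a _ (ha _) h₀ h₁⟩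
  obtain ⟨k, rfl⟩ := Nat.exists_eq_add_of_le' hk₂
  rw [hcoeff _ (by omega), hcoeff _ (by omega), hcoeff _ hk, Nat.add_sub_cancel,
    show k + 2 - 1 = k + 1 by omega, norm_div, norm_mul, norm_pow, norm_alternatingCoeff hb₀,
    norm_alternatingCoeff hb₀, norm_alternatingCoeff hb₀, gaussianWeight_sq_div hb₀]

/-- For every positive integer `n` there is a complex polynomial of degree `2n` with
nonzero coefficients, with `|q_k(P)| = b_{2n}` for all `k = 2, …, 2n`, having a
multiple root. -/
theorem stmt_7 (n : ℕ) (hn : 0 < n) (b : ℝ)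
    (hb : 1 < b ∧ 1 - 2 * ∑ k ∈ Finset.Icc 1 n, b ^ (-(k : ℝ) ^ 2 / 2) = 0) :
    ∃ P : Polynomial ℂ, P.natDegree = 2 * n ∧
      (∀ k, k ≤ 2 * n → P.coeff k ≠ 0) ∧
      (∀ k, 2 ≤ k → k ≤ 2 * n →
        ‖(P.coeff (k - 1)) ^ 2 / (P.coeff (k - 2) * P.coeff k)‖ = b) ∧
      (∃ z : ℂ, 2 ≤ P.rootMultiplicity z) :=
  stmt_7_general n b hb
end

section
/- For every positive integer n and every ε > 0 there exists a complex polynomial P of degree 2n+1 all of whose coefficients are nonzero, such that |q_k(P)| > b_{2n} - ε for all k = 2, 3, …, 2n+1, and P has a multiple root. -/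
/-!
With `g k = b ^ (-k² / 2)`, the polynomial `Q = ∑_{k=1}^n g k • z^(n-k) (z^k - 1)²` is divisible
by `(z - 1)²`, and away from the centre its `j`-th coefficient is `b ^ (-(j - n)² / 2)`; the
equation `2 ∑ g k = 1` defining `b` makes the central coefficient `-1`, of the same modulus
`b ^ 0`. Since `(t² + (t + 2)²) / 2 - (t + 1)² = 1`, all second quotients of `Q` have modulus
exactly `b`. Now `z Q` has degree `2n + 1` but constant coefficient `0`. Adding `δ (z - 1)²` keeps
the double root at `1` and makes the constant coefficient `δ ≠ 0`; as `δ → 0`, `|q₂|` tends to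
infinity while the other coefficients and second quotients converge to those of `z Q`.
-/

open Polynomial Filter Topology Finset

namespace Polynomial

variable {K : Type*} [Field K]

def secondQuotient (f : K[X]) (k : ℕ) : K :=
  f.coeff (k - 1) ^ 2 / (f.coeff (k - 2) * f.coeff k)

lemma secondQuotient_X_mul (f : K[X]) (j : ℕ) :
    (X * f).secondQuotient (j + 3) = f.coeff (j + 1) ^ 2 / (f.coeff j * f.coeff (j + 2)) := by
  simp [secondQuotient, coeff_X_mul]

section Perturbation

variable {𝕜 : Type*} [NontriviallyNormedField 𝕜] (p r : 𝕜[X])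

lemma continuous_coeff_add_smul (k : ℕ) : Continuous fun δ : 𝕜 ↦ (p + δ • r).coeff k := by
  simp only [coeff_add, coeff_smul, smul_eq_mul]
  fun_prop

lemma tendsto_secondQuotient_add_smul {k : ℕ} (hk₂ : p.coeff (k - 2) ≠ 0) (hk : p.coeff k ≠ 0) :
    Tendsto (fun δ : 𝕜 ↦ (p + δ • r).secondQuotient k) (𝓝 0) (𝓝 (p.secondQuotient k)) := by
  have h := ((continuous_coeff_add_smul p r (k - 1)).pow 2).continuousAt (x := 0) |>.div₀
    ((continuous_coeff_add_smul p r (k - 2)).mul (continuous_coeff_add_smul p r k)).continuousAt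
    (by simpa using mul_ne_zero hk₂ hk)
  simpa [secondQuotient] using h.tendsto

lemma tendsto_norm_secondQuotient_two_add_smul (hp₀ : p.coeff 0 = 0) (hr₀ : r.coeff 0 ≠ 0)
    (hp₁ : p.coeff 1 ≠ 0) (hp₂ : p.coeff 2 ≠ 0) :
    Tendsto (fun δ : 𝕜 ↦ ‖(p + δ • r).secondQuotient 2‖) (𝓝[≠] 0) atTop := by
  have hsplit : ∀ δ : 𝕜, ‖(p + δ • r).secondQuotient 2‖ =
      ‖(p + δ • r).coeff 1 ^ 2 / (r.coeff 0 * (p + δ • r).coeff 2)‖ * ‖δ⁻¹‖ := by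
    intro δ
    have h₀ : (p + δ • r).coeff 0 = δ * r.coeff 0 := by simp [hp₀]
    simp only [secondQuotient, Nat.reduceSub, h₀, ← norm_mul]
    congr 1
    ring
  have hlim : Tendsto (fun δ : 𝕜 ↦ ‖(p + δ • r).coeff 1 ^ 2 / (r.coeff 0 * (p + δ • r).coeff 2)‖)
      (𝓝 0) (𝓝 ‖p.coeff 1 ^ 2 / (r.coeff 0 * p.coeff 2)‖) := by
    have h := ((continuous_coeff_add_smul p r 1).pow 2).continuousAt (x := 0) |>.div₀
      (continuous_const.mul (continuous_coeff_add_smul p r 2)).continuousAt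
      (by simpa using mul_ne_zero hr₀ hp₂)
    simpa using h.tendsto.norm
  simp_rw [hsplit]
  exact (hlim.mono_left nhdsWithin_le_nhds).pos_mul_atTop (by simp [*])
    tendsto_norm_inv_nhdsNE_zero_atTop

lemma eventually_coeff_add_smul_ne_zero (hp₀ : p.coeff 0 = 0) (hr₀ : r.coeff 0 ≠ 0) {N : ℕ}
    (hp : ∀ k, 1 ≤ k → k ≤ N → p.coeff k ≠ 0) :
    ∀ᶠ δ in 𝓝[≠] (0 : 𝕜), ∀ k ≤ N, (p + δ • r).coeff k ≠ 0 := by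
  refine (Set.finite_Iic N).eventually_all.2 fun k hk ↦ ?_
  rcases Nat.eq_zero_or_pos k with rfl | hk₁
  · filter_upwards [self_mem_nhdsWithin] with δ hδ
    simpa [hp₀] using mul_ne_zero hδ hr₀
  · refine nhdsWithin_le_nhds ((continuous_coeff_add_smul p r k).continuousAt.eventually_ne ?_)
    simpa using hp k hk₁ hk

lemma eventually_lt_norm_secondQuotient_add_smul (hp₀ : p.coeff 0 = 0) (hr₀ : r.coeff 0 ≠ 0)
    {N : ℕ} (hp : ∀ k, 1 ≤ k → k ≤ N → p.coeff k ≠ 0) {M : ℝ}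
    (hM : ∀ k, 3 ≤ k → k ≤ N → M < ‖p.secondQuotient k‖) :
    ∀ᶠ δ in 𝓝[≠] (0 : 𝕜), ∀ k, 2 ≤ k → k ≤ N → M < ‖(p + δ • r).secondQuotient k‖ := by
  suffices h : ∀ᶠ δ in 𝓝[≠] (0 : 𝕜), ∀ k ∈ Set.Icc 2 N, M < ‖(p + δ • r).secondQuotient k‖ from
    h.mono fun δ hδ k hk₂ hkN ↦ hδ k ⟨hk₂, hkN⟩
  refine (Set.finite_Icc 2 N).eventually_all.2 fun k ⟨hk₂, hkN⟩ ↦ ?_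
  rcases hk₂.eq_or_lt with rfl | hk₃
  · exact (tendsto_norm_secondQuotient_two_add_smul p r hp₀ hr₀ (hp 1 le_rfl (by omega))
      (hp 2 (by omega) hkN)).eventually_gt_atTop M
  · exact nhdsWithin_le_nhds <| (tendsto_secondQuotient_add_smul p r
      (hp _ (by omega) (by omega)) (hp k (by omega) hkN)).norm.eventually_const_lt (hM k hk₃ hkN)

end Perturbation

end Polynomial

noncomputable def gaussWeight (n : ℕ) (b : ℝ) (j : ℕ) : ℝ := b ^ (-((j : ℝ) - n) ^ 2 / 2)

noncomputable def gaussianPoly (n : ℕ) (b : ℝ) : ℂ[X] :=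
  ∑ k ∈ Icc 1 n, C ((b ^ (-(k : ℝ) ^ 2 / 2) : ℝ) : ℂ) * (X ^ (n - k) * (X ^ k - 1) ^ 2)

section Gaussian

variable {n : ℕ} {b : ℝ}

lemma gaussWeight_pos (hb : 0 < b) (j : ℕ) : 0 < gaussWeight n b j :=
  Real.rpow_pos_of_pos hb _

lemma gaussWeight_succ_sq (hb : 0 < b) (j : ℕ) :
    gaussWeight n b (j + 1) ^ 2 = b * (gaussWeight n b j * gaussWeight n b (j + 2)) := by
  simp only [gaussWeight]
  rw [sq, ← Real.rpow_add hb, ← Real.rpow_add hb, mul_comm, ← Real.rpow_add_one hb.ne']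
  congr 1
  push_cast
  ring

lemma coeff_gaussianPoly (j : ℕ) : (gaussianPoly n b).coeff j =
    ∑ k ∈ Icc 1 n, ((b ^ (-(k : ℝ) ^ 2 / 2) : ℝ) : ℂ) *
      ((if j = n + k then 1 else 0) - 2 * (if j = n then 1 else 0) +
        if j + k = n then 1 else 0) := by
  rw [gaussianPoly, finsetSum_coeff]
  refine sum_congr rfl fun k hk ↦ ?_
  obtain ⟨m, rfl⟩ : ∃ m, n = m + k := ⟨n - k, by have := (mem_Icc.1 hk).2; omega⟩
  have hexp : (X ^ m * (X ^ k - 1) ^ 2 : ℂ[X]) =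
      X ^ (m + k + k) - C 2 * X ^ (m + k) + X ^ m := by
    rw [map_ofNat]; ring
  simp [hexp, coeff_X_pow]

lemma coeff_gaussianPoly_self :
    (gaussianPoly n b).coeff n = -2 * ((∑ k ∈ Icc 1 n, b ^ (-(k : ℝ) ^ 2 / 2) : ℝ) : ℂ) := by
  rw [coeff_gaussianPoly, Complex.ofReal_sum, mul_sum]
  refine sum_congr rfl fun k hk ↦ ?_
  have hk₁ := (mem_Icc.1 hk).1
  simp [show k ≠ 0 by omega]
  ring

lemma coeff_gaussianPoly_of_ne {j : ℕ} (hj : j ≠ n) :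
    (gaussianPoly n b).coeff j = if j ≤ 2 * n then (gaussWeight n b j : ℂ) else 0 := by
  rw [coeff_gaussianPoly]
  by_cases hjn : j ≤ 2 * n
  · rw [if_pos hjn]
    rcases hj.lt_or_gt with hlt | hgt
    · rw [sum_eq_single_of_mem (n - j) (mem_Icc.2 ⟨by omega, by omega⟩)]
      · rw [if_neg (by omega : j ≠ n + (n - j)), if_pos (by omega : j + (n - j) = n), if_neg hj,
          gaussWeight, Nat.cast_sub hlt.le, sub_sq_comm]
        ring
      · intro k hk hkj
        simp [show j ≠ n + k by omega, show j + k ≠ n by omega, hj]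
    · rw [sum_eq_single_of_mem (j - n) (mem_Icc.2 ⟨by omega, by omega⟩)]
      · rw [if_pos (by omega : j = n + (j - n)), if_neg (by omega : j + (j - n) ≠ n), if_neg hj,
          gaussWeight, Nat.cast_sub hgt.le]
        ring
      · intro k hk hkj
        simp [show j ≠ n + k by omega, show j + k ≠ n by omega, hj]
  · rw [if_neg hjn]
    refine sum_eq_zero fun k hk ↦ ?_
    have hk₂ := (mem_Icc.1 hk).2
    simp [show j ≠ n + k by omega, show j + k ≠ n by omega, hj]

lemma norm_coeff_gaussianPoly (hb : 0 < b)
    (hsum : 1 - 2 * ∑ k ∈ Icc 1 n, b ^ (-(k : ℝ) ^ 2 / 2) = 0) {j : ℕ} (hj : j ≤ 2 * n) :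
    ‖(gaussianPoly n b).coeff j‖ = gaussWeight n b j := by
  rcases eq_or_ne j n with rfl | hjn
  · rw [coeff_gaussianPoly_self, show (∑ k ∈ Icc 1 j, b ^ (-(k : ℝ) ^ 2 / 2)) = 1 / 2 by linarith]
    simp [gaussWeight]
  · rw [coeff_gaussianPoly_of_ne hjn, if_pos hj, Complex.norm_real, Real.norm_eq_abs,
      abs_of_pos (gaussWeight_pos hb j)]

lemma natDegree_gaussianPoly_le : (gaussianPoly n b).natDegree ≤ 2 * n :=
  natDegree_le_iff_coeff_eq_zero.2 fun j hj ↦ by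
    rw [coeff_gaussianPoly_of_ne (by omega), if_neg (by omega)]

lemma X_sub_one_sq_dvd_gaussianPoly : (X - C 1) ^ 2 ∣ gaussianPoly n b := by
  refine dvd_sum fun k _ ↦
    dvd_mul_of_dvd_right (dvd_mul_of_dvd_right (pow_dvd_pow_of_dvd ?_ 2) _) _
  simpa using sub_dvd_pow_sub_pow (X : ℂ[X]) 1 k

lemma norm_secondQuotient_X_mul_gaussianPoly (hb : 0 < b)
    (hsum : 1 - 2 * ∑ k ∈ Icc 1 n, b ^ (-(k : ℝ) ^ 2 / 2) = 0) {k : ℕ} (hk₃ : 3 ≤ k)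
    (hk : k ≤ 2 * n + 1) : ‖(X * gaussianPoly n b).secondQuotient k‖ = b := by
  obtain ⟨j, rfl⟩ : ∃ j, k = j + 3 := ⟨k - 3, by omega⟩
  rw [secondQuotient_X_mul, norm_div, norm_mul, norm_pow,
    norm_coeff_gaussianPoly hb hsum (by omega), norm_coeff_gaussianPoly hb hsum (by omega),
    norm_coeff_gaussianPoly hb hsum (by omega), gaussWeight_succ_sq hb]
  have := gaussWeight_pos (n := n) hb j
  have := gaussWeight_pos (n := n) hb (j + 2)
  field_simp

end Gaussian

/-- For every positive integer `n` and every `ε > 0` there is a complex polynomial of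
degree `2n+1` with nonzero coefficients, with `|q_k(P)| > b_{2n} - ε` for all
`k = 2, …, 2n+1`, having a multiple root. -/
theorem stmt_8 (n : ℕ) (hn : 0 < n) (b : ℝ)
    (hb : 1 < b ∧ 1 - 2 * ∑ k ∈ Finset.Icc 1 n, b ^ (-(k : ℝ) ^ 2 / 2) = 0)
    (ε : ℝ) (hε : 0 < ε) :
    ∃ P : Polynomial ℂ, P.natDegree = 2 * n + 1 ∧
      (∀ k, k ≤ 2 * n + 1 → P.coeff k ≠ 0) ∧
      (∀ k, 2 ≤ k → k ≤ 2 * n + 1 →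
        b - ε < ‖(P.coeff (k - 1)) ^ 2 / (P.coeff (k - 2) * P.coeff k)‖) ∧
      (∃ z : ℂ, 2 ≤ P.rootMultiplicity z) := by
  obtain ⟨hb₁, hsum⟩ := hb
  have hb₀ : 0 < b := zero_lt_one.trans hb₁
  set p : ℂ[X] := X * gaussianPoly n b
  set r : ℂ[X] := (X - C 1) ^ 2
  have hp₀ : p.coeff 0 = 0 := by simp [p]
  have hr₀ : r.coeff 0 ≠ 0 := by simp [r, coeff_zero_eq_eval_zero]
  have hp : ∀ k, 1 ≤ k → k ≤ 2 * n + 1 → p.coeff k ≠ 0 := fun k hk₁ hk ↦ by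
    obtain ⟨j, rfl⟩ : ∃ j, k = j + 1 := ⟨k - 1, by omega⟩
    rw [coeff_X_mul, ← norm_ne_zero_iff, norm_coeff_gaussianPoly hb₀ hsum (by omega)]
    exact (gaussWeight_pos hb₀ j).ne'
  have hq : ∀ k, 3 ≤ k → k ≤ 2 * n + 1 → b - ε < ‖p.secondQuotient k‖ := fun k hk₃ hk ↦ by
    rw [norm_secondQuotient_X_mul_gaussianPoly hb₀ hsum hk₃ hk]
    linarith
  obtain ⟨δ, hcoeff, hquot⟩ := ((eventually_coeff_add_smul_ne_zero p r hp₀ hr₀ hp).and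
    (eventually_lt_norm_secondQuotient_add_smul p r hp₀ hr₀ hp hq)).exists
  refine ⟨p + δ • r, ?_, hcoeff, hquot, 1, ?_⟩
  · refine natDegree_eq_of_le_of_coeff_ne_zero (natDegree_add_le_of_degree_le ?_ ?_)
      (hcoeff _ le_rfl)
    · exact natDegree_mul_le.trans
        (by simpa [add_comm] using natDegree_gaussianPoly_le (n := n) (b := b))
    · exact (natDegree_smul_le _ _).trans (by rw [natDegree_pow, natDegree_X_sub_C]; omega)
  · have hP : p + δ • r ≠ 0 := fun h ↦ hcoeff 0 (Nat.zero_le _) (by rw [h, coeff_zero])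
    refine (le_rootMultiplicity_iff hP).2
      (dvd_add (dvd_mul_of_dvd_right X_sub_one_sq_dvd_gaussianPoly _) ?_)
    rw [smul_eq_C_mul]
    exact dvd_mul_left _ _
end

section
/- For every ε > 0 there exists an entire function f(z) = ∑_{k=0}^∞ a_k z^k with a_k ∈ ℂ \ {0} for all k, such that |q_k(f)| > b_∞ - ε for all k ≥ 2, and f has a multiple root. -/
/-!
Let `G x = B ^ (-x ^ 2 / 2)`. The coefficients `m k = G (k - j)` have all second quotients
exactly `B`, and the equation defining `B = b_∞` says `∑_{n ∈ ℤ} G n = 2`. Subtracting `2` from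
the peak coefficient `m j = 1` leaves every `|q_k|` unchanged and makes both `∑_{k ∈ ℤ} a_k` and,
by symmetry, `∑_{k ∈ ℤ} k a_k` vanish, i.e. `z = 1` is a double root of the two-sided series.
Truncating to `k ≥ 0` loses a tail at negative indices that is super-exponentially small in `j`;
adding it back at `a_0` and `a_1` perturbs only `q_2` and `q_3`, by a relative error `O(B ^ (-j))`.
-/

open Filter

lemma HasSum.nat_of_neg_add_one {E : Type*} [NormedAddCommGroup E] [CompleteSpace E]
    {f : ℤ → E} {a b : E} (hf : HasSum f a) (hneg : HasSum (fun n : ℕ => f (-(n + 1))) b) :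
    HasSum (fun n : ℕ => f n) (a - b) := by
  have hnat := (hf.summable.comp_injective Nat.cast_injective).hasSum
  rw [← (hnat.of_nat_of_neg_add_one hneg).unique hf, add_sub_cancel_right]
  exact hnat

lemma HasSum.int_comp_sub {E : Type*} [AddCommMonoid E] [TopologicalSpace E] {f : ℤ → E} {a : E}
    (hf : HasSum f a) (c : ℤ) : HasSum (fun n => f (n - c)) a :=
  (Equiv.subRight c).hasSum_iff.mpr hf

section PowerSeries

variable {𝕜 : Type*} [RCLike 𝕜] {a : ℕ → 𝕜}

lemma summable_mul_pow_of_forall_summable (ha : ∀ R : ℝ, 0 < R → Summable fun k => ‖a k‖ * R ^ k)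
    (z : 𝕜) : Summable fun k => a k * z ^ k :=
  (ha (‖z‖ + 1) (by positivity)).of_norm_bounded fun k => by
    rw [norm_mul, norm_pow]
    gcongr
    linarith

theorem hasDerivAt_tsum_mul_pow (ha : ∀ R : ℝ, 0 < R → Summable fun k => ‖a k‖ * R ^ k)
    (z : 𝕜) : HasDerivAt (fun z => ∑' k, a k * z ^ k) (∑' k, a k * (k * z ^ (k - 1))) z := by
  set R := ‖z‖ + 1
  have hR : 1 ≤ R := by simp [R]
  refine hasDerivAt_tsum_of_isPreconnected (ha (2 * R) (by positivity)) Metric.isOpen_ball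
    (convex_ball 0 R).isPreconnected (fun k y _ => (hasDerivAt_pow k y).const_mul (a k))
    (fun k y hy => ?_) (Metric.mem_ball_self (by positivity))
    (hasSum_single 0 fun k hk => by simp [zero_pow hk]).summable (by simp [R])
  have hy : ‖y‖ ≤ R := (mem_ball_zero_iff.1 hy).le
  rw [norm_mul, norm_mul, norm_pow, RCLike.norm_natCast, mul_pow]
  gcongr
  · exact_mod_cast Nat.lt_two_pow_self.le
  · exact (pow_le_pow_left₀ (norm_nonneg y) hy _).trans (pow_le_pow_right₀ hR (Nat.sub_le k 1))

end PowerSeries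

lemma sub_lt_sq_sub_div {B ε δ p q r u v : ℝ} (hp : 0 < p) (hq : 0 < q) (hr : 0 < r)
    (hqpr : q ^ 2 = B * (p * r)) (hu : 0 ≤ u) (hu' : u ≤ δ * q) (hv : 0 ≤ v)
    (hv' : v ≤ 2 * δ * p) (hδ : δ ≤ 1 / 4) (hε : 4 * B * δ < ε) :
    B - ε < (q - u) ^ 2 / ((p + v) * r) := by
  have hBpr : 0 < B * (p * r) := by rw [← hqpr]; positivity
  have hB : 0 < B := pos_of_mul_pos_left hBpr (by positivity)
  have hδ0 : 0 ≤ δ := nonneg_of_mul_nonneg_left (hu.trans hu') hq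
  rw [lt_div_iff₀ (by positivity)]
  calc (B - ε) * ((p + v) * r) < B * (1 - 4 * δ) * ((p + v) * r) := by
        gcongr
        linarith
    _ ≤ B * (1 - 4 * δ) * ((1 + 2 * δ) * (p * r)) :=
        mul_le_mul_of_nonneg_left (by nlinarith) (mul_nonneg hB.le (by linarith))
    _ = B * ((1 - 4 * δ) * (1 + 2 * δ)) * (p * r) := by ring
    _ ≤ B * (1 - δ) ^ 2 * (p * r) := by
        gcongr
        nlinarith
    _ = ((1 - δ) * q) ^ 2 := by rw [mul_pow, hqpr]; ring
    _ ≤ (q - u) ^ 2 := by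
        gcongr
        · nlinarith
        · nlinarith

namespace SecondQuotient

noncomputable def gauss (B x : ℝ) : ℝ := B ^ (-x ^ 2 / 2)

section Gauss

variable {B : ℝ}

lemma gauss_pos (hB : 0 < B) (x : ℝ) : 0 < gauss B x := Real.rpow_pos_of_pos hB _

@[simp] lemma gauss_zero : gauss B 0 = 1 := by simp [gauss]

@[simp] lemma gauss_neg (x : ℝ) : gauss B (-x) = gauss B x := by simp [gauss]

lemma gauss_add_one (hB : 0 < B) (x : ℝ) :
    gauss B (x + 1) = gauss B x * B ^ (-(x + 1 / 2)) := by
  rw [gauss, gauss, ← Real.rpow_add hB]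
  ring_nf

lemma sq_gauss_add_one (hB : 0 < B) (x : ℝ) :
    gauss B (x + 1) ^ 2 = B * (gauss B x * gauss B (x + 2)) := by
  rw [sq, gauss, gauss, gauss, ← Real.rpow_add hB, ← Real.rpow_add hB, mul_comm B,
    ← Real.rpow_add_one hB.ne']
  ring_nf

lemma sq_gauss_nat_sub (hB : 0 < B) (l j : ℕ) :
    gauss B ((l + 1 : ℕ) - j) ^ 2 = B * (gauss B (l - j) * gauss B ((l + 2 : ℕ) - j)) := by
  rw [show ((l + 1 : ℕ) : ℝ) - j = (l - j) + 1 by push_cast; ring,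
    show ((l + 2 : ℕ) : ℝ) - j = (l - j) + 2 by push_cast; ring]
  exact sq_gauss_add_one hB _

lemma gauss_le_gauss (hB : 1 ≤ B) {x y : ℝ} (hx : 0 ≤ x) (hxy : x ≤ y) :
    gauss B y ≤ gauss B x :=
  Real.rpow_le_rpow_of_exponent_le hB (by nlinarith)

lemma gauss_nat_add_le (hB : 1 ≤ B) (j k : ℕ) :
    gauss B (j + k) ≤ gauss B j * ((B⁻¹) ^ j) ^ k := by
  have hB0 : 0 < B := by linarith
  rw [← pow_mul, inv_pow, ← Real.rpow_natCast, ← Real.rpow_neg hB0.le, gauss, gauss,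
    ← Real.rpow_add hB0]
  exact Real.rpow_le_rpow_of_exponent_le hB (by push_cast; nlinarith [sq_nonneg (k : ℝ)])

lemma summable_gauss_mul_pow (hB : 1 < B) (c : ℝ) {x : ℝ} (hx : 0 < x) :
    Summable fun k : ℕ => gauss B (k + c) * x ^ k := by
  have hB0 : 0 < B := by linarith
  refine summable_of_ratio_test_tendsto_lt_one zero_lt_one
    (Eventually.of_forall fun k => (mul_pos (gauss_pos hB0 _) (pow_pos hx k)).ne') ?_
  have hratio : ∀ k : ℕ, ‖gauss B ((k + 1 : ℕ) + c) * x ^ (k + 1)‖ / ‖gauss B (k + c) * x ^ k‖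
      = x * B ^ (-(c + 1 / 2)) * (B⁻¹) ^ k := by
    intro k
    have hpos := gauss_pos hB0 (k + c)
    have hBk : (B⁻¹) ^ k = B ^ (-(k : ℝ)) := by
      rw [Real.rpow_neg hB0.le, Real.rpow_natCast, inv_pow]
    rw [Real.norm_of_nonneg (mul_pos (gauss_pos hB0 _) (pow_pos hx _)).le,
      Real.norm_of_nonneg (mul_pos hpos (pow_pos hx _)).le,
      show ((k + 1 : ℕ) : ℝ) + c = (k + c) + 1 by push_cast; ring, gauss_add_one hB0,
      hBk, mul_assoc x, ← Real.rpow_add hB0, pow_succ]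
    field_simp
    ring_nf
  simp_rw [hratio]
  simpa using (tendsto_pow_atTop_nhds_zero_of_lt_one (by positivity)
    (inv_lt_one_of_one_lt₀ hB)).const_mul (x * B ^ (-(c + 1 / 2)))

lemma summable_gauss (hB : 1 < B) (c : ℝ) : Summable fun k : ℕ => gauss B (k + c) := by
  simpa using summable_gauss_mul_pow hB c one_pos

lemma summable_succ_mul_gauss (hB : 1 < B) (c : ℝ) :
    Summable fun k : ℕ => ((k : ℝ) + 1) * gauss B (k + c) := by
  refine (summable_gauss_mul_pow hB c two_pos).of_nonneg_of_le
    (fun k => mul_nonneg (by positivity) (gauss_pos (by linarith) _).le) fun k => ?_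
  rw [mul_comm]
  gcongr
  · exact (gauss_pos (by linarith) _).le
  · exact_mod_cast Nat.lt_two_pow_self

lemma hasSum_int_gauss {s : ℝ} (hs : HasSum (fun k : ℕ => gauss B (k + 1)) s) :
    HasSum (fun n : ℤ => gauss B n) (2 * s + 1) := by
  convert HasSum.of_add_one_of_neg_add_one (f := fun n : ℤ => gauss B n)
    (by simpa using hs) (by simpa only [Int.cast_neg, Int.cast_add, Int.cast_natCast,
      Int.cast_one, gauss_neg] using hs) using 1
  simp only [Int.cast_zero, gauss_zero]
  ring

lemma hasSum_int_mul_gauss (hB : 1 < B) : HasSum (fun n : ℤ => n * gauss B n) 0 := by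
  have h := (summable_succ_mul_gauss hB 1).hasSum
  convert HasSum.of_add_one_of_neg_add_one (f := fun n : ℤ => n * gauss B n)
    (by simpa using h) (by simpa only [Int.cast_neg, Int.cast_add, Int.cast_natCast,
      Int.cast_one, gauss_neg, neg_mul] using h.neg) using 1
  simp

end Gauss

-- The mass and the first absolute moment of `k ↦ gauss B (k - j)` on the negative integers.
noncomputable def tailMass (B : ℝ) (j : ℕ) : ℝ := ∑' k : ℕ, gauss B (k + (j + 1))

noncomputable def tailMoment (B : ℝ) (j : ℕ) : ℝ := ∑' k : ℕ, ((k : ℝ) + 1) * gauss B (k + (j + 1))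

section Shifted

variable {B s : ℝ} (hs : HasSum (fun k : ℕ => gauss B (k + 1)) s) (j : ℕ)
include hs

lemma hasSum_int_gauss_sub : HasSum (fun n : ℤ => gauss B (n - j)) (2 * s + 1) := by
  simpa using (hasSum_int_gauss hs).int_comp_sub j

variable (hB : 1 < B)
include hB

lemma hasSum_gauss_nat_sub :
    HasSum (fun k : ℕ => gauss B (k - j)) (2 * s + 1 - tailMass B j) := by
  refine (hasSum_int_gauss_sub hs j).nat_of_neg_add_one
    ((summable_gauss hB (j + 1)).hasSum.congr_fun fun k => ?_)
  rw [show ((-(k + 1 : ℤ) : ℤ) : ℝ) - j = -(k + (j + 1)) by push_cast; ring, gauss_neg]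

lemma hasSum_mul_gauss_nat_sub :
    HasSum (fun k : ℕ => k * gauss B (k - j)) (j * (2 * s + 1) + tailMoment B j) := by
  have hcentred : HasSum (fun n : ℤ => (n - j) * gauss B (n - j)) 0 := by
    simpa using (hasSum_int_mul_gauss hB).int_comp_sub j
  have hint : HasSum (fun n : ℤ => n * gauss B (n - j)) (j * (2 * s + 1)) := by
    convert hcentred.add ((hasSum_int_gauss_sub hs j).mul_left (j : ℝ)) using 1
    · ext n; ring
    · ring
  have hneg : HasSum (fun k : ℕ => ((-(k + 1 : ℤ) : ℤ) : ℝ) * gauss B ((-(k + 1 : ℤ) : ℤ) - j))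
      (-tailMoment B j) :=
    (summable_succ_mul_gauss hB (j + 1)).hasSum.neg.congr_fun fun k => by
      rw [show ((-(k + 1 : ℤ) : ℤ) : ℝ) - j = -(k + (j + 1)) by push_cast; ring, gauss_neg]
      push_cast
      ring
  simpa only [Int.cast_natCast, sub_neg_eq_add] using hint.nat_of_neg_add_one hneg

end Shifted

section Tails

variable {B : ℝ} (hB : 1 < B) {j : ℕ}
include hB

lemma tailMass_nonneg : 0 ≤ tailMass B j :=
  tsum_nonneg fun _ => (gauss_pos (by linarith) _).le

lemma tailMoment_nonneg : 0 ≤ tailMoment B j :=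
  tsum_nonneg fun _ => mul_nonneg (by positivity) (gauss_pos (by linarith) _).le

lemma tailMass_le_tailMoment : tailMass B j ≤ tailMoment B j :=
  (summable_gauss hB _).tsum_le_tsum
    (fun k => le_mul_of_one_le_left (gauss_pos (by linarith) _).le (by simp))
    (summable_succ_mul_gauss hB _)

lemma tailMoment_le (hr : (B⁻¹) ^ j ≤ 1 / 4) :
    tailMoment B j ≤ 2 * (B⁻¹) ^ j * gauss B j := by
  set r := (B⁻¹) ^ j
  have hr0 : 0 ≤ r := by positivity
  have hterm : ∀ k : ℕ, ((k : ℝ) + 1) * gauss B (k + (j + 1)) ≤ gauss B j * r * (2 * r) ^ k := by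
    intro k
    have hgauss : gauss B (k + (j + 1)) ≤ gauss B j * r ^ (k + 1) := by
      rw [show (k : ℝ) + (j + 1) = j + (k + 1 : ℕ) by push_cast; ring]
      exact gauss_nat_add_le hB.le j (k + 1)
    have hk : (k : ℝ) + 1 ≤ 2 ^ k := by exact_mod_cast Nat.lt_two_pow_self
    calc ((k : ℝ) + 1) * gauss B (k + (j + 1)) ≤ 2 ^ k * (gauss B j * r ^ (k + 1)) :=
          mul_le_mul hk hgauss (gauss_pos (by linarith) _).le (by positivity)
      _ = gauss B j * r * (2 * r) ^ k := by ring
  calc tailMoment B j ≤ ∑' k : ℕ, gauss B j * r * (2 * r) ^ k :=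
        (summable_succ_mul_gauss hB _).tsum_le_tsum hterm
          ((summable_geometric_of_lt_one (by positivity) (by linarith)).mul_left _)
    _ = gauss B j * r * (1 - 2 * r)⁻¹ := by
        rw [tsum_mul_left, tsum_geometric_of_lt_one (by positivity) (by linarith)]
    _ ≤ gauss B j * r * 2 := by
        have h2r : (1 - 2 * r)⁻¹ ≤ 2 := by
          rw [inv_le_iff_one_le_mul₀ (by linarith)]
          linarith
        exact mul_le_mul_of_nonneg_left h2r (mul_nonneg (gauss_pos (by linarith) j).le hr0)
    _ = 2 * r * gauss B j := by ring

lemma tailMoment_le_gauss_one_sub (hj : 1 ≤ j) (hr : (B⁻¹) ^ j ≤ 1 / 4) :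
    tailMoment B j ≤ 2 * (B⁻¹) ^ j * gauss B (1 - j) := by
  have hmono : gauss B j ≤ gauss B (1 - j) := by
    rw [← gauss_neg (1 - j), neg_sub]
    exact gauss_le_gauss hB.le (by simpa using hj) (by linarith)
  exact (tailMoment_le hB hr).trans (by gcongr)

end Tails

/-- A Gaussian centred at `j`, with the sign of its peak coefficient flipped; the corrections at
`0` and `1` compensate for the mass the Gaussian puts on negative indices. -/
noncomputable def coeff (B : ℝ) (j k : ℕ) : ℝ :=
  gauss B (k - j) + (if k = 0 then tailMass B j + tailMoment B j else 0)
    - (if k = 1 then tailMoment B j else 0) - (if k = j then 2 else 0)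

section Coeff

variable {B : ℝ} {j : ℕ}

lemma hasSum_coeff (hB : 1 < B) (hs : HasSum (fun k : ℕ => gauss B (k + 1)) (1 / 2)) :
    HasSum (coeff B j) 0 := by
  have h := (((hasSum_gauss_nat_sub hs j hB).add
    (hasSum_ite_eq 0 (tailMass B j + tailMoment B j))).sub
    (hasSum_ite_eq 1 (tailMoment B j))).sub (hasSum_ite_eq j 2)
  rwa [show 2 * (1 / 2 : ℝ) + 1 - tailMass B j + (tailMass B j + tailMoment B j)
    - tailMoment B j - 2 = 0 by ring] at h

lemma hasSum_mul_coeff (hB : 1 < B) (hs : HasSum (fun k : ℕ => gauss B (k + 1)) (1 / 2)) :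
    HasSum (fun k : ℕ => k * coeff B j k) 0 := by
  have hcoeff : ∀ k : ℕ, k * coeff B j k = k * gauss B (k - j)
      - (if k = 1 then tailMoment B j else 0) - (if k = j then 2 * (j : ℝ) else 0) := by
    intro k
    unfold coeff
    split_ifs <;> simp_all [mul_sub, mul_comm]
  have h := (((hasSum_mul_gauss_nat_sub hs j hB).sub (hasSum_ite_eq 1 (tailMoment B j))).sub
    (hasSum_ite_eq j (2 * (j : ℝ)))).congr_fun hcoeff
  rwa [show j * (2 * (1 / 2 : ℝ) + 1) + tailMoment B j - tailMoment B j - 2 * j = 0 by ring] at h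

lemma coeff_zero (hj : j ≠ 0) :
    coeff B j 0 = gauss B j + (tailMass B j + tailMoment B j) := by
  simp [coeff, Ne.symm hj]

lemma coeff_one (hj : j ≠ 1) : coeff B j 1 = gauss B (1 - j) - tailMoment B j := by
  simp [coeff, Ne.symm hj]

lemma abs_coeff_of_two_le (hB : 0 < B) {k : ℕ} (hk : 2 ≤ k) : |coeff B j k| = gauss B (k - j) := by
  have hk0 : k ≠ 0 := by omega
  have hk1 : k ≠ 1 := by omega
  by_cases hkj : k = j
  · subst hkj
    norm_num [coeff, hk0, hk1]
  · simp [coeff, hk0, hk1, hkj, abs_of_pos (gauss_pos hB _)]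

end Coeff

section Quotients

variable {B : ℝ} (hB : 1 < B) {j : ℕ} (hj : 2 ≤ j) (hr : (B⁻¹) ^ j ≤ 1 / 8)
include hB hj

lemma coeff_zero_pos : 0 < coeff B j 0 := by
  rw [coeff_zero (by omega)]
  have := gauss_pos (by linarith : 0 < B) j
  linarith [tailMass_nonneg hB (j := j), tailMoment_nonneg hB (j := j)]

include hr

lemma coeff_one_pos : 0 < coeff B j 1 := by
  rw [coeff_one (by omega)]
  have hU := tailMoment_le_gauss_one_sub hB (j := j) (by omega) (by linarith)
  have := gauss_pos (by linarith : 0 < B) (1 - j)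
  nlinarith [pow_nonneg (inv_nonneg.2 (by linarith : (0 : ℝ) ≤ B)) j]

lemma coeff_ne_zero (k : ℕ) : coeff B j k ≠ 0 := by
  match k with
  | 0 => exact (coeff_zero_pos hB hj).ne'
  | 1 => exact (coeff_one_pos hB hj hr).ne'
  | k + 2 =>
    rw [← abs_ne_zero, abs_coeff_of_two_le (by linarith) (by omega)]
    exact (gauss_pos (by linarith) _).ne'

lemma sub_lt_quotient_two {ε : ℝ} (hε : 8 * B * (B⁻¹) ^ j < ε) :
    B - ε < |coeff B j 1| ^ 2 / (|coeff B j 0| * |coeff B j 2|) := by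
  have hB0 : 0 < B := by linarith
  have hsq := sq_gauss_nat_sub hB0 0 j
  simp only [Nat.cast_zero, zero_sub, gauss_neg, zero_add, Nat.cast_one] at hsq
  rw [abs_of_pos (coeff_one_pos hB hj hr), abs_of_pos (coeff_zero_pos hB hj), coeff_one (by omega),
    coeff_zero (by omega), abs_coeff_of_two_le hB0 le_rfl]
  refine sub_lt_sq_sub_div (δ := 2 * (B⁻¹) ^ j) (gauss_pos hB0 _) (gauss_pos hB0 _)
    (gauss_pos hB0 _) (by simpa using hsq) (tailMoment_nonneg hB)
    (tailMoment_le_gauss_one_sub hB (by omega) (by linarith))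
    (add_nonneg (tailMass_nonneg hB) (tailMoment_nonneg hB)) ?_ (by linarith) (by linarith)
  linarith [tailMass_le_tailMoment hB (j := j), tailMoment_le hB (j := j) (by linarith),
    gauss_pos hB0 j]

lemma le_quotient_three : B ≤ |coeff B j 2| ^ 2 / (|coeff B j 1| * |coeff B j 3|) := by
  have hB0 : 0 < B := by linarith
  have hsq := sq_gauss_nat_sub hB0 1 j
  have hpos := coeff_one_pos hB hj hr
  rw [abs_of_pos hpos, abs_coeff_of_two_le hB0 le_rfl, abs_coeff_of_two_le hB0 (by omega)]
  rw [coeff_one (by omega)] at hpos ⊢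
  calc B = gauss B ((1 + 1 : ℕ) - j) ^ 2 / (gauss B (1 - j) * gauss B ((1 + 2 : ℕ) - j)) := by
        rw [hsq, Nat.cast_one, mul_div_assoc,
          div_self (mul_pos (gauss_pos hB0 _) (gauss_pos hB0 _)).ne', mul_one]
    _ ≤ _ := div_le_div_of_nonneg_left (sq_nonneg _) (mul_pos hpos (gauss_pos hB0 _))
        (mul_le_mul_of_nonneg_right (by linarith [tailMoment_nonneg hB (j := j)])
          (gauss_pos hB0 _).le)

omit hj hr in
lemma quotient_of_four_le (l : ℕ) :
    |coeff B j (l + 3)| ^ 2 / (|coeff B j (l + 2)| * |coeff B j (l + 4)|) = B := by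
  have hB0 : 0 < B := by linarith
  rw [abs_coeff_of_two_le hB0 (by omega), abs_coeff_of_two_le hB0 (by omega),
    abs_coeff_of_two_le hB0 (by omega), sq_gauss_nat_sub hB0 (l + 2) j, mul_div_assoc,
    div_self (mul_pos (gauss_pos hB0 _) (gauss_pos hB0 _)).ne', mul_one]

lemma sub_lt_sq_abs_coeff_div {ε : ℝ} (hε : 8 * B * (B⁻¹) ^ j < ε) {k : ℕ} (hk : 2 ≤ k) :
    B - ε < |coeff B j (k - 1)| ^ 2 / (|coeff B j (k - 2)| * |coeff B j k|) := by
  have hε0 : 0 < ε := lt_of_le_of_lt (by positivity) hε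
  obtain ⟨l, rfl⟩ : ∃ l, k = l + 2 := ⟨k - 2, by omega⟩
  match l with
  | 0 => exact sub_lt_quotient_two hB hj hr hε
  | 1 => exact (sub_lt_self B hε0).trans_le (le_quotient_three hB hj hr)
  | l + 2 =>
    rw [show l + 2 + 2 - 1 = l + 3 by omega, show l + 2 + 2 - 2 = l + 2 by omega,
      show l + 2 + 2 = l + 4 by omega, quotient_of_four_le hB]
    exact sub_lt_self B hε0

end Quotients

lemma summable_abs_coeff_mul_pow {B : ℝ} (hB : 1 < B) (j : ℕ) {R : ℝ} (hR : 0 < R) :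
    Summable fun k => |coeff B j k| * R ^ k := by
  refine (summable_gauss_mul_pow hB (-j) hR).of_norm_bounded_eventually ?_
  rw [Nat.cofinite_eq_atTop]
  filter_upwards [eventually_ge_atTop 2] with k hk
  rw [Real.norm_of_nonneg (by positivity), abs_coeff_of_two_le (by linarith) hk, sub_eq_add_neg]

end SecondQuotient

open SecondQuotient

/-- For every `ε > 0` there exists an entire function `f(z) = ∑ a_k z^k` with all
`a_k ≠ 0`, with `|q_k(f)| > b_∞ - ε` for all `k ≥ 2`, having a multiple root. -/
theorem stmt_9 (B : ℝ)
    (hB : 1 < B ∧ 1 - 2 * ∑' k : ℕ, B ^ (-((k : ℝ) + 1) ^ 2 / 2) = 0)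
    (ε : ℝ) (hε : 0 < ε) :
    ∃ (a : ℕ → ℂ) (f : ℂ → ℂ),
      (∀ k, a k ≠ 0) ∧
      (∀ z : ℂ, HasSum (fun k : ℕ => a k * z ^ k) (f z)) ∧
      (∀ k, 2 ≤ k → B - ε < ‖(a (k - 1)) ^ 2 / (a (k - 2) * a k)‖) ∧
      (∃ z : ℂ, f z = 0 ∧ deriv f z = 0) := by
  obtain ⟨hB, hmass⟩ := hB
  have hs : HasSum (fun k : ℕ => gauss B (k + 1)) (1 / 2) := by
    have h := (summable_gauss hB 1).hasSum
    rwa [show ∑' k : ℕ, gauss B (k + 1) = 1 / 2 by unfold gauss; linarith] at h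
  obtain ⟨j, hj, hr, hrε⟩ : ∃ j : ℕ, 2 ≤ j ∧ (B⁻¹) ^ j ≤ 1 / 8 ∧ 8 * B * (B⁻¹) ^ j < ε := by
    have h := tendsto_pow_atTop_nhds_zero_of_lt_one (inv_nonneg.2 (zero_le_one.trans hB.le))
      (inv_lt_one_of_one_lt₀ hB)
    exact ((eventually_ge_atTop 2).and ((h.eventually (ge_mem_nhds (by norm_num))).and
      ((h.const_mul (8 * B)).eventually (gt_mem_nhds (by simpa using hε))))).exists
  have hentire : ∀ R : ℝ, 0 < R → Summable fun k => ‖(coeff B j k : ℂ)‖ * R ^ k := fun R hR => by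
    simpa using summable_abs_coeff_mul_pow hB j hR
  refine ⟨fun k => coeff B j k, fun z => ∑' k, (coeff B j k : ℂ) * z ^ k,
    fun k => Complex.ofReal_ne_zero.2 (coeff_ne_zero hB hj hr k),
    fun z => (summable_mul_pow_of_forall_summable hentire z).hasSum, fun k hk => ?_, 1, ?_, ?_⟩
  · simpa [norm_div, norm_mul, norm_pow] using sub_lt_sq_abs_coeff_div hB hj hr hrε hk
  · simpa using Complex.hasSum_ofReal.2 (hasSum_coeff hB hs) |>.tsum_eq
  · rw [(hasDerivAt_tsum_mul_pow hentire 1).deriv]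
    simpa [mul_comm] using Complex.hasSum_ofReal.2 (hasSum_mul_coeff hB hs) |>.tsum_eq
end

section
/- Let P(z) = a_0 + a_1 z + a_2 z² + a_3 z³ be a complex polynomial of degree 3 with a_k ∈ ℂ \ {0} for k = 0,1,2,3. If |q_2(P)| > √(9 + 6√3) and |q_3(P)| > √(9 + 6√3), then all three zeros of P are simple; moreover, the moduli of the zeros of P are pairwise different. -/
/-!
Suppose two roots `a, b` (possibly equal) have the same modulus. Rescaling all roots by a
square root of `a b` leaves the second quotients unchanged and makes `a, b = z, z̄` with
`‖z‖ = 1`; with `u = z + z̄ ∈ [-2, 2]` and `c` the rescaled third root they become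
`(u + c)² / (1 + u c)` and `(1 + u c)² / ((u + c) c)`. Replacing `c` by `c⁻¹` exchanges the
two, so `‖c‖ ≤ 1` may be assumed.
For `m = ‖u + c‖` the two hypotheses then force both `ρ < m`, through the sextic
`m⁶ + κ³m⁴ + κ⁵m² > κ⁶`, and `m < ρ`, through `m² - 2κm + 3κ > 0`; the threshold
`κ = √(9 + 6√3)` is exactly the value for which these two polynomials share the root `ρ`.
-/

open Polynomial

local notation "κ" => √(9 + 6 * √3)

lemma sq_kappa : κ ^ 2 = 9 + 6 * √3 := Real.sq_sqrt (by positivity)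

lemma three_lt_kappa : 3 < κ := by
  rw [Real.lt_sqrt (by norm_num)]
  have : 0 < √3 := by positivity
  linarith

/-- The smaller root of `m ^ 2 - 2 κ m + 3 κ`. -/
noncomputable def criticalModulus : ℝ := (1 + √3) * (κ - 3) / 2

local notation "ρ" => criticalModulus

lemma criticalModulus_quadratic : ρ ^ 2 - 2 * κ * ρ + 3 * κ = 0 := by
  have hs : √3 ^ 2 = 3 := Real.sq_sqrt (by norm_num)
  unfold criticalModulus
  linear_combination (3 / 2 - 3 / 2 * κ + 3 / 2 * √3) * hs
    + (-3 / 4 - √3 / 2 + √3 ^ 2 / 4) * sq_kappa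

lemma criticalModulus_sextic : ρ ^ 6 + κ ^ 3 * ρ ^ 4 + κ ^ 5 * ρ ^ 2 = κ ^ 6 := by
  have hs : √3 ^ 2 = 3 := Real.sq_sqrt (by norm_num)
  have cubic : ρ ^ 3 + κ ^ 3 * ρ - 2 * κ ^ 3 = 0 := by
    unfold criticalModulus
    linear_combination
      (-9 + 9 * κ - 63 / 4 * √3 + 27 / 4 * √3 * κ - 27 / 4 * √3 ^ 2
        + 3 / 4 * √3 ^ 2 * κ) * hs
      + (27 / 8 - 27 / 8 * κ + 1 / 2 * κ ^ 2 + 33 / 8 * √3 - 9 / 8 * √3 * κ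
        + 1 / 2 * √3 * κ ^ 2 - 3 / 8 * √3 ^ 2 + 3 / 8 * √3 ^ 2 * κ - 9 / 8 * √3 ^ 3
        + 1 / 8 * √3 ^ 3 * κ) * sq_kappa
  linear_combination (ρ ^ 3 + 2 * κ ^ 3) * cubic + κ ^ 5 * criticalModulus_quadratic

lemma criticalModulus_add_three_lt : ρ + 3 < 2 * κ := by
  have h3 := three_lt_kappa
  have hs : √3 < 3 := (Real.sqrt_lt' (by norm_num)).2 (by norm_num)
  unfold criticalModulus
  nlinarith

lemma criticalModulus_lt_of_sextic_lt {m : ℝ} (hm : 0 ≤ m)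
    (h : κ ^ 6 < m ^ 6 + κ ^ 3 * m ^ 4 + κ ^ 5 * m ^ 2) : ρ < m := by
  by_contra! hmρ
  have := criticalModulus_sextic
  have hκ : 0 < κ := by linarith [three_lt_kappa]
  have h2 : m ^ 2 ≤ ρ ^ 2 := pow_le_pow_left₀ hm hmρ 2
  have h4 : m ^ 4 ≤ ρ ^ 4 := pow_le_pow_left₀ hm hmρ 4
  have h6 : m ^ 6 ≤ ρ ^ 6 := pow_le_pow_left₀ hm hmρ 6
  nlinarith [pow_pos hκ 3, pow_pos hκ 5]

lemma lt_criticalModulus_of_lt_sq {m : ℝ} (hm : m ≤ 3) (h : κ * (2 * m - 3) < m ^ 2) :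
    m < ρ := by
  have factor : (m - ρ) * (m - (2 * κ - ρ)) = m ^ 2 - 2 * κ * m + 3 * κ := by
    linear_combination -criticalModulus_quadratic
  have := criticalModulus_add_three_lt
  nlinarith

lemma cube_lt_of_mul_lt_sq {k r m B : ℝ} (hk : 0 < k) (hm : 0 ≤ m) (hB : 0 ≤ B)
    (h3 : k * B < m ^ 2) (h2 : k * m * r < B ^ 2) : k ^ 3 * r < m ^ 3 := by
  have hsq : (k * B) ^ 2 < (m ^ 2) ^ 2 := pow_lt_pow_left₀ h3 (by positivity) two_ne_zero
  have : k ^ 3 * r * m < m ^ 3 * m := by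
    calc k ^ 3 * r * m = k ^ 2 * (k * m * r) := by ring
      _ < k ^ 2 * B ^ 2 := mul_lt_mul_of_pos_left h2 (by positivity)
      _ < m ^ 3 * m := by linarith
  exact lt_of_mul_lt_mul_right this hm

lemma sextic_lt_of_mul_lt_sq {k r m B : ℝ} (hk : 0 < k) (hr : 0 ≤ r) (hm : 0 ≤ m)
    (hB : 1 - r * m - r ^ 2 ≤ B) (h3 : k * B < m ^ 2) (hcube : k ^ 3 * r < m ^ 3) :
    k ^ 6 < m ^ 6 + k ^ 3 * m ^ 4 + k ^ 5 * m ^ 2 := by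
  have hkr : 0 ≤ k ^ 3 * r := by positivity
  calc k ^ 6
        = k ^ 5 * (k * (1 - r * m - r ^ 2)) + (k ^ 3 * r) * (k ^ 3 * m) + (k ^ 3 * r) ^ 2 := by
          ring
    _ < k ^ 5 * m ^ 2 + m ^ 3 * (k ^ 3 * m) + (m ^ 3) ^ 2 := by
        have first : k ^ 5 * (k * (1 - r * m - r ^ 2)) < k ^ 5 * m ^ 2 :=
          mul_lt_mul_of_pos_left ((mul_le_mul_of_nonneg_left hB hk.le).trans_lt h3) (by positivity)
        have second : (k ^ 3 * r) * (k ^ 3 * m) ≤ m ^ 3 * (k ^ 3 * m) := by gcongr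
        have third : (k ^ 3 * r) ^ 2 ≤ (m ^ 3) ^ 2 := by gcongr
        linarith
    _ = m ^ 6 + k ^ 3 * m ^ 4 + k ^ 5 * m ^ 2 := by ring

/-- The real core of the argument, for `m = ‖u + c‖`, `B = ‖1 + u c‖` and `r = ‖c‖`. -/
lemma false_of_kappa_lt_of_triangle {u r m B : ℝ} (hu : 0 ≤ u) (hu2 : u ≤ 2) (hr : 0 ≤ r)
    (hr1 : r ≤ 1) (hm : |u - r| ≤ m) (hm' : m ≤ u + r) (hB : 0 ≤ B)
    (hB2 : B ^ 2 = m ^ 2 + (1 - u ^ 2) * (1 - r ^ 2))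
    (h3 : κ * B < m ^ 2) (h2 : κ * m * r < B ^ 2) : False := by
  have hκ : 0 < κ := by linarith [three_lt_kappa]
  have hm0 : 0 ≤ m := (abs_nonneg _).trans hm
  have hum : u ≤ m + r := by linarith [le_abs_self (u - r)]
  have hr2 : 0 ≤ 1 - r ^ 2 := by nlinarith
  have hB_ge : 1 - r * m - r ^ 2 ≤ B := by
    refine le_of_sq_le_sq ?_ hB
    have hdiff : B ^ 2 - (1 - r * m - r ^ 2) ^ 2 = ((m + r) ^ 2 - u ^ 2) * (1 - r ^ 2) := by
      rw [hB2]; ring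
    have : u ^ 2 ≤ (m + r) ^ 2 := pow_le_pow_left₀ hu hum 2
    nlinarith
  have hB_ge' : 2 * m - 3 ≤ B := by
    rcases lt_or_ge (m + r) 2 with hmr | hmr
    · nlinarith
    · refine le_of_sq_le_sq ?_ hB
      have hr_sq : (2 - m) ^ 2 ≤ r ^ 2 := sq_le_sq' (by linarith) (by linarith)
      have : -3 * (1 - r ^ 2) ≤ (1 - u ^ 2) * (1 - r ^ 2) :=
        mul_le_mul_of_nonneg_right (by nlinarith) hr2
      nlinarith
  have hρm := criticalModulus_lt_of_sextic_lt hm0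
    (sextic_lt_of_mul_lt_sq hκ hr hm0 hB_ge h3 (cube_lt_of_mul_lt_sq hκ hm0 hB h3 h2))
  have hmρ := lt_criticalModulus_of_lt_sq (by linarith)
    ((mul_le_mul_of_nonneg_left hB_ge' hκ.le).trans_lt h3)
  exact lt_asymm hρm hmρ

lemma mul_norm_lt_of_lt_norm_div {K : Type*} [NormedDivisionRing K] {k : ℝ} (hk : 0 ≤ k)
    {x y : K} (h : k < ‖x / y‖) : k * ‖y‖ < ‖x‖ := by
  rcases eq_or_ne y 0 with rfl | hy
  · simp only [div_zero, norm_zero] at h; linarith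
  · rwa [norm_div, lt_div_iff₀ (norm_pos_iff.2 hy)] at h

lemma norm_one_add_ofReal_mul_sq (u : ℝ) (c : ℂ) :
    ‖1 + u * c‖ ^ 2 = ‖(u : ℂ) + c‖ ^ 2 + (1 - u ^ 2) * (1 - ‖c‖ ^ 2) := by
  simp only [Complex.sq_norm, Complex.normSq_apply, Complex.add_re, Complex.add_im,
    Complex.mul_re, Complex.mul_im, Complex.ofReal_re, Complex.ofReal_im, Complex.one_re,
    Complex.one_im]
  ring

lemma false_of_kappa_lt_of_norm_le_one {u : ℝ} (hu : |u| ≤ 2) {c : ℂ} (hc : ‖c‖ ≤ 1)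
    (h3 : κ < ‖(u + c) ^ 2 / (1 + u * c)‖) (h2 : κ < ‖(1 + u * c) ^ 2 / ((u + c) * c)‖) :
    False := by
  have hκ : 0 ≤ κ := Real.sqrt_nonneg _
  have h3' := mul_norm_lt_of_lt_norm_div hκ h3
  have h2' := mul_norm_lt_of_lt_norm_div hκ h2
  rw [norm_pow] at h3' h2'
  rw [norm_mul, ← mul_assoc] at h2'
  refine false_of_kappa_lt_of_triangle (abs_nonneg u) hu (norm_nonneg c) hc ?_ ?_
    (norm_nonneg _) (by rw [sq_abs]; exact norm_one_add_ofReal_mul_sq u c) h3' h2'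
  · simpa [Complex.norm_real] using abs_norm_sub_norm_le (u : ℂ) (-c)
  · simpa [Complex.norm_real] using norm_add_le (u : ℂ) c

lemma div_sq_div_div {K : Type*} [Field K] {x y c : K} (hc : c ≠ 0) :
    (x / c) ^ 2 / (y / c) = x ^ 2 / (y * c) := by
  rcases eq_or_ne y 0 with rfl | hy
  · simp
  · field_simp

lemma div_sq_div_mul_inv {K : Type*} [Field K] {x y c : K} (hc : c ≠ 0) :
    (y / c) ^ 2 / (x / c * c⁻¹) = y ^ 2 / x := by
  rcases eq_or_ne x 0 with rfl | hx
  · simp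
  · field_simp

lemma false_of_kappa_lt {u : ℝ} (hu : |u| ≤ 2) {c : ℂ}
    (h3 : κ < ‖(u + c) ^ 2 / (1 + u * c)‖) (h2 : κ < ‖(1 + u * c) ^ 2 / ((u + c) * c)‖) :
    False := by
  rcases le_or_gt ‖c‖ 1 with hc | hc
  · exact false_of_kappa_lt_of_norm_le_one hu hc h3 h2
  have hc0 : c ≠ 0 := norm_pos_iff.1 (one_pos.trans hc)
  have hu_inv : (u : ℂ) + c⁻¹ = (1 + u * c) / c := by field_simp; ring
  have hone_inv : 1 + (u : ℂ) * c⁻¹ = (u + c) / c := by field_simp; ring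
  -- `c ↦ c⁻¹` reverses the normalized cubic, which exchanges its two second quotients.
  refine false_of_kappa_lt_of_norm_le_one hu (c := c⁻¹) ?_ ?_ ?_
  · rw [norm_inv]; exact inv_le_one_of_one_le₀ hc.le
  · rwa [hu_inv, hone_inv, div_sq_div_div hc0]
  · rwa [hu_inv, hone_inv, div_sq_div_mul_inv hc0]

lemma norm_ne_norm_of_kappa_lt {a b c : ℂ}
    (h3 : κ < ‖(a + b + c) ^ 2 / (a * b + a * c + b * c)‖)
    (h2 : κ < ‖(a * b + a * c + b * c) ^ 2 / ((a + b + c) * (a * b * c))‖) :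
    ‖a‖ ≠ ‖b‖ := by
  intro hab
  have habc : a * b * c ≠ 0 := by
    rintro h
    rw [h, mul_zero, div_zero, norm_zero] at h2
    exact (Real.sqrt_nonneg _).not_gt h2
  obtain ⟨μ, hμ⟩ := IsAlgClosed.exists_eq_mul_self (a * b)
  have hμ0 : μ ≠ 0 := by
    rintro rfl
    exact left_ne_zero_of_mul habc (by rw [hμ, mul_zero])
  obtain ⟨z, rfl⟩ : ∃ z, a = μ * z := ⟨a / μ, by field_simp⟩
  obtain ⟨w, rfl⟩ : ∃ w, b = μ * w := ⟨b / μ, by field_simp⟩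
  obtain ⟨d, rfl⟩ : ∃ d, c = μ * d := ⟨c / μ, by field_simp⟩
  have hzw : z * w = 1 := mul_left_cancel₀ (mul_ne_zero hμ0 hμ0) (by linear_combination hμ)
  have hz : ‖z‖ = 1 := by
    rw [norm_mul, norm_mul, mul_right_inj' (norm_ne_zero_iff.2 hμ0)] at hab
    have : ‖z‖ * ‖w‖ = 1 := by rw [← norm_mul, hzw, norm_one]
    rw [← hab] at this
    nlinarith [norm_nonneg z]
  obtain ⟨u, hu, hsum⟩ : ∃ u : ℝ, |u| ≤ 2 ∧ z + w = u := by
    have hw : w = (starRingEnd ℂ) z := by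
      refine mul_left_cancel₀ (norm_ne_zero_iff.1 (hz.trans_ne one_ne_zero)) ?_
      rw [hzw, Complex.mul_conj, Complex.normSq_eq_norm_sq, hz]
      simp
    refine ⟨2 * z.re, ?_, by rw [hw, Complex.add_conj]⟩
    rw [abs_mul, abs_two]
    linarith [Complex.abs_re_le_norm z]
  have e1 : μ * z + μ * w + μ * d = μ * (u + d) := by rw [← hsum]; ring
  have e2 : μ * z * (μ * w) + μ * z * (μ * d) + μ * w * (μ * d) = μ ^ 2 * (1 + u * d) := by
    rw [← hsum]; linear_combination μ ^ 2 * hzw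
  have e3 : μ * (u + d) * (μ * z * (μ * w) * (μ * d)) = μ ^ 4 * ((u + d) * d) := by
    linear_combination μ ^ 4 * ((u + d) * d) * hzw
  apply false_of_kappa_lt hu (c := d)
  · rwa [e1, e2, mul_pow, mul_div_mul_left _ _ (pow_ne_zero 2 hμ0)] at h3
  · rwa [e1, e2, e3, mul_pow, ← pow_mul, mul_div_mul_left _ _ (pow_ne_zero 4 hμ0)] at h2

lemma Multiset.exists_eq_of_mem_erase {α : Type*} [DecidableEq α] {s : Multiset α} {a b : α}
    (hs : card s = 3) (ha : a ∈ s) (hb : b ∈ s.erase a) : ∃ c, s = {a, b, c} := by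
  obtain ⟨c, hc⟩ := card_eq_one.1 (by simp [card_erase_of_mem, ha, hb, hs] :
    card ((s.erase a).erase b) = 1)
  exact ⟨c, by rw [← cons_erase ha, ← cons_erase hb, hc]; rfl⟩

lemma Polynomial.coeffs_of_roots_eq {K : Type*} [Field K] {P : K[X]} {a b c : K}
    (hdeg : P.natDegree = 3) (hroots : P.roots = {a, b, c}) :
    P.coeff 2 = P.coeff 3 * -(a + b + c) ∧ P.coeff 1 = P.coeff 3 * (a * b + a * c + b * c) ∧
      P.coeff 0 = P.coeff 3 * -(a * b * c) := by
  have h := C_leadingCoeff_mul_prod_multiset_X_sub_C (p := P) (by rw [hroots, hdeg]; rfl)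
  simp only [hroots, leadingCoeff, hdeg, Multiset.insert_eq_cons, Multiset.map_cons,
    Multiset.prod_cons, Multiset.map_singleton, Multiset.prod_singleton, ← mul_assoc,
    Cubic.C_mul_prod_X_sub_C_eq] at h
  rw [← h, Cubic.coeff_eq_b, Cubic.coeff_eq_c, Cubic.coeff_eq_d, Cubic.coeff_eq_a]
  exact ⟨rfl, rfl, rfl⟩

lemma norm_ne_norm_of_roots_eq {P : ℂ[X]} (hdeg : P.natDegree = 3)
    (hq2 : κ < ‖(P.coeff 1) ^ 2 / (P.coeff 0 * P.coeff 2)‖)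
    (hq3 : κ < ‖(P.coeff 2) ^ 2 / (P.coeff 1 * P.coeff 3)‖)
    {a b c : ℂ} (hroots : P.roots = {a, b, c}) : ‖a‖ ≠ ‖b‖ := by
  have hL : P.coeff 3 ≠ 0 := by
    rw [← hdeg]; exact leadingCoeff_ne_zero.2 (ne_zero_of_natDegree_gt (n := 0) (by omega))
  obtain ⟨h2, h1, h0⟩ := coeffs_of_roots_eq hdeg hroots
  refine norm_ne_norm_of_kappa_lt (c := c) ?_ ?_
  · rwa [h1, h2, mul_pow, neg_sq, mul_right_comm, ← sq,
      mul_div_mul_left _ _ (pow_ne_zero 2 hL)] at hq3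
  · rwa [h0, h1, h2, mul_pow, show P.coeff 3 * -(a * b * c) * (P.coeff 3 * -(a + b + c)) =
      P.coeff 3 ^ 2 * ((a + b + c) * (a * b * c)) by ring,
      mul_div_mul_left _ _ (pow_ne_zero 2 hL)] at hq2

theorem stmt_10_general (P : Polynomial ℂ) (hdeg : P.natDegree = 3)
    (hq2 : Real.sqrt (9 + 6 * Real.sqrt 3) <
      ‖(P.coeff 1) ^ 2 / (P.coeff 0 * P.coeff 2)‖)
    (hq3 : Real.sqrt (9 + 6 * Real.sqrt 3) <
      ‖(P.coeff 2) ^ 2 / (P.coeff 1 * P.coeff 3)‖) :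
    (∀ z : ℂ, P.IsRoot z → P.rootMultiplicity z = 1) ∧
    (∀ z w : ℂ, P.IsRoot z → P.IsRoot w → z ≠ w →
      ‖z‖ ≠ ‖w‖) := by
  have hP : P ≠ 0 := ne_zero_of_natDegree_gt (n := 0) (by omega)
  have hcard : P.roots.card = 3 := IsAlgClosed.card_roots_eq_natDegree.trans hdeg
  refine ⟨fun z hz => ?_, fun z w hz hw hzw => ?_⟩
  · have hz' : z ∈ P.roots := (mem_roots hP).2 hz
    rw [← count_roots]
    by_contra hne
    have hzz : z ∈ P.roots.erase z := by
      rw [← Multiset.count_pos, Multiset.count_erase_self]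
      have := Multiset.count_pos.2 hz'
      omega
    obtain ⟨c, hc⟩ := Multiset.exists_eq_of_mem_erase hcard hz' hzz
    exact norm_ne_norm_of_roots_eq hdeg hq2 hq3 hc rfl
  · obtain ⟨c, hc⟩ := Multiset.exists_eq_of_mem_erase hcard ((mem_roots hP).2 hz)
      (Multiset.mem_erase_of_ne hzw.symm |>.2 ((mem_roots hP).2 hw))
    exact norm_ne_norm_of_roots_eq hdeg hq2 hq3 hc

/-- If `P` is a complex polynomial of degree `3` with nonzero coefficients and
`|q_2(P)| > √(9+6√3)`, `|q_3(P)| > √(9+6√3)`, then all zeros of `P` are simple and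
the moduli of the zeros are pairwise different. -/
theorem stmt_10 (P : Polynomial ℂ) (hdeg : P.natDegree = 3)
    (hcoeff : ∀ k, k ≤ 3 → P.coeff k ≠ 0)
    (hq2 : Real.sqrt (9 + 6 * Real.sqrt 3) <
      ‖(P.coeff 1) ^ 2 / (P.coeff 0 * P.coeff 2)‖)
    (hq3 : Real.sqrt (9 + 6 * Real.sqrt 3) <
      ‖(P.coeff 2) ^ 2 / (P.coeff 1 * P.coeff 3)‖) :
    (∀ z : ℂ, P.IsRoot z → P.rootMultiplicity z = 1) ∧
    (∀ z w : ℂ, P.IsRoot z → P.IsRoot w → z ≠ w →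
      ‖z‖ ≠ ‖w‖) :=
  stmt_10_general P hdeg hq2 hq3
end

section
/- For every positive integer n and every ε > 0 there exists a polynomial P of degree 2n with all coefficients real and nonzero, such that |q_k(P)| > b_{2n} - ε for all k = 2, 3, …, 2n, and P has a nonreal root. -/
/-!
Take `P = X^n - ∑_{1 ≤ |j| ≤ n} q^{-j²/2} X^{n+j}`. The exponents `-(k-n)²/2` have constant second
difference `-1`, so every second quotient of `P` has absolute value exactly `q`. By the symmetry of
the coefficients about `X^n`, with `θ = ∑_{j=1}^n q^{-j²/2}` and `θ₂ = ∑_{j=1}^n j² q^{-j²/2}`,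
`P(1) = 1 - 2θ`, `P'(1) = n P(1)` and `P''(1) = n(n-1) P(1) - 2θ₂`.
For `q` slightly below `b_{2n}`, `P(1)` is negative and small, and then `P(1) P''(1) > P'(1)²`.
This violates Laguerre's inequality `P P'' ≤ P'²`, valid for real polynomials with only real roots.
-/

open Polynomial Finset Filter Topology

lemma laguerre_X_sub_C_mul {Q : ℝ[X]} {x : ℝ} (a : ℝ)
    (hQ : Q.eval x * (derivative (derivative Q)).eval x ≤ ((derivative Q).eval x) ^ 2) :
    ((X - C a) * Q).eval x * (derivative (derivative ((X - C a) * Q))).eval x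
      ≤ ((derivative ((X - C a) * Q)).eval x) ^ 2 := by
  simp only [derivative_mul, derivative_add, derivative_sub, derivative_X, derivative_C, sub_zero,
    one_mul, eval_add, eval_mul, eval_sub, eval_X, eval_C]
  -- the defect `P'² - P P''` of `(X - a) Q` is `Q² + (x - a)²` times the defect of `Q`
  nlinarith [sq_nonneg (Q.eval x), mul_le_mul_of_nonneg_left hQ (sq_nonneg (x - a))]

lemma exists_isRoot_of_forall_im_eq_zero {P : ℝ[X]} (hP : 0 < P.natDegree)
    (hroots : ∀ z : ℂ, (P.map (algebraMap ℝ ℂ)).IsRoot z → z.im = 0) : ∃ a : ℝ, P.IsRoot a := by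
  obtain ⟨z, hz⟩ := Complex.exists_root (f := P.map (algebraMap ℝ ℂ)) (by
    rw [degree_map, degree_eq_natDegree (ne_zero_of_natDegree_gt hP)]
    exact_mod_cast hP)
  refine ⟨z.re, ?_⟩
  have hz_re : z = (z.re : ℂ) := Complex.ext rfl (by simp [hroots z hz])
  rw [hz_re, IsRoot, eval_map, ← Complex.coe_algebraMap, eval₂_at_apply] at hz
  exact (map_eq_zero _).mp hz

theorem laguerre_inequality {P : ℝ[X]}
    (hroots : ∀ z : ℂ, (P.map (algebraMap ℝ ℂ)).IsRoot z → z.im = 0) (x : ℝ) :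
    P.eval x * (derivative (derivative P)).eval x ≤ ((derivative P).eval x) ^ 2 := by
  induction h : P.natDegree using Nat.strong_induction_on generalizing P with
  | _ N ih =>
  rcases Nat.eq_zero_or_pos N with rfl | hN
  · rw [eq_C_of_natDegree_eq_zero h]
    simp
  obtain ⟨a, ha⟩ := exists_isRoot_of_forall_im_eq_zero (h ▸ hN) hroots
  rw [← mul_divByMonic_eq_iff_isRoot.mpr ha] at hroots ⊢
  refine laguerre_X_sub_C_mul a (ih _ ?_ (fun z hz => hroots z ?_) rfl)
  · rw [natDegree_divByMonic _ (monic_X_sub_C a), natDegree_X_sub_C]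
    omega
  · simp [Polynomial.map_mul, hz.eq_zero]

lemma sum_range_two_mul_add_one_sub (n : ℕ) (h : ℝ → ℝ) :
    ∑ k ∈ range (2 * n + 1), h (k - n) = h 0 + ∑ j ∈ Icc 1 n, (h j + h (-j)) := by
  induction n with
  | zero => simp
  | succ n ih =>
    rw [show 2 * (n + 1) + 1 = 2 * n + 1 + 1 + 1 by ring, sum_range_succ, sum_range_succ',
      sum_Icc_succ_top (by omega)]
    push_cast
    simp only [show ∀ k : ℕ, (k : ℝ) + 1 - (n + 1) = k - n from fun k => by ring, ih]
    ring_nf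

lemma eval_one_derivative_C_mul_X_pow (a : ℝ) (k : ℕ) :
    (derivative (C a * X ^ k)).eval 1 = a * k := by
  simp only [derivative_C_mul_X_pow, eval_mul, eval_C, eval_pow, eval_X, one_pow, mul_one]

lemma eval_one_derivative_derivative_C_mul_X_pow (a : ℝ) (k : ℕ) :
    (derivative (derivative (C a * X ^ k))).eval 1 = a * (k * (k - 1)) := by
  rcases k with _ | k
  · simp
  · simp only [derivative_C_mul_X_pow, eval_mul, eval_C, eval_pow, eval_X, one_pow, mul_one]
    push_cast
    ring

noncomputable def signedGaussCoeff (q t : ℝ) : ℝ := if t = 0 then 1 else -q ^ (-t ^ 2 / 2)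

noncomputable def signedGaussPoly (n : ℕ) (q : ℝ) : ℝ[X] :=
  ∑ k ∈ range (2 * n + 1), C (signedGaussCoeff q (k - n)) * X ^ k

noncomputable def thetaSum (n : ℕ) (q : ℝ) : ℝ := ∑ j ∈ Icc 1 n, q ^ (-(j : ℝ) ^ 2 / 2)

noncomputable def thetaMoment (n : ℕ) (q : ℝ) : ℝ :=
  ∑ j ∈ Icc 1 n, (j : ℝ) ^ 2 * q ^ (-(j : ℝ) ^ 2 / 2)

section
variable {q : ℝ}

lemma signedGaussCoeff_neg (t : ℝ) : signedGaussCoeff q (-t) = signedGaussCoeff q t := by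
  simp [signedGaussCoeff]

lemma signedGaussCoeff_of_ne_zero {t : ℝ} (ht : t ≠ 0) :
    signedGaussCoeff q t = -q ^ (-t ^ 2 / 2) :=
  if_neg ht

lemma abs_signedGaussCoeff (hq : 0 < q) (t : ℝ) : |signedGaussCoeff q t| = q ^ (-t ^ 2 / 2) := by
  rcases eq_or_ne t 0 with rfl | ht
  · simp [signedGaussCoeff]
  · rw [signedGaussCoeff_of_ne_zero ht, abs_neg, abs_of_pos (Real.rpow_pos_of_pos hq _)]

lemma signedGaussCoeff_ne_zero (hq : 0 < q) (t : ℝ) : signedGaussCoeff q t ≠ 0 :=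
  abs_ne_zero.mp ((abs_signedGaussCoeff hq t).symm ▸ (Real.rpow_pos_of_pos hq _).ne')

lemma abs_secondQuotient_signedGaussCoeff (hq : 0 < q) (t : ℝ) :
    |signedGaussCoeff q (t - 1) ^ 2 / (signedGaussCoeff q (t - 2) * signedGaussCoeff q t)| = q := by
  rw [abs_div, abs_mul, abs_pow, abs_signedGaussCoeff hq, abs_signedGaussCoeff hq,
    abs_signedGaussCoeff hq, ← Real.rpow_natCast, ← Real.rpow_mul hq.le, ← Real.rpow_add hq,
    ← Real.rpow_sub hq]
  convert Real.rpow_one q using 2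
  push_cast
  ring

variable (n : ℕ)

lemma coeff_signedGaussPoly {k : ℕ} (hk : k ≤ 2 * n) :
    (signedGaussPoly n q).coeff k = signedGaussCoeff q (k - n) := by
  rw [signedGaussPoly, finsetSum_coeff, sum_eq_single k]
  · simp
  · intro j _ hj
    simp [coeff_C_mul, coeff_X_pow, Ne.symm hj]
  · simp only [mem_range, coeff_C_mul_X_pow]
    omega

lemma natDegree_signedGaussPoly (hq : 0 < q) : (signedGaussPoly n q).natDegree = 2 * n := by
  refine le_antisymm (natDegree_sum_le_of_forall_le _ _ fun k hk => ?_) (le_natDegree_of_ne_zero ?_)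
  · exact (natDegree_C_mul_X_pow_le _ _).trans (Nat.lt_succ_iff.mp (mem_range.mp hk))
  · rw [coeff_signedGaussPoly n le_rfl]
    exact signedGaussCoeff_ne_zero hq _

lemma abs_secondQuotient_signedGaussPoly (hq : 0 < q) {k : ℕ} (hk2 : 2 ≤ k) (hk : k ≤ 2 * n) :
    |(signedGaussPoly n q).coeff (k - 1) ^ 2
      / ((signedGaussPoly n q).coeff (k - 2) * (signedGaussPoly n q).coeff k)| = q := by
  rw [coeff_signedGaussPoly n (by omega), coeff_signedGaussPoly n (by omega),
    coeff_signedGaussPoly n hk, Nat.cast_sub (by omega), Nat.cast_sub hk2, Nat.cast_one,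
    Nat.cast_ofNat, sub_right_comm _ 1, sub_right_comm _ 2]
  exact abs_secondQuotient_signedGaussCoeff hq _

lemma sum_range_signedGaussCoeff_mul (g : ℝ → ℝ) (c : ℝ)
    (hg : ∀ t, g (n + t) + g (n - t) = 2 * g n + 2 * c * t ^ 2) :
    ∑ k ∈ range (2 * n + 1), signedGaussCoeff q (k - n) * g k
      = g n * (1 - 2 * thetaSum n q) - 2 * c * thetaMoment n q := by
  have h := sum_range_two_mul_add_one_sub n (fun t => signedGaussCoeff q t * g (t + n))
  simp only [sub_add_cancel, signedGaussCoeff_neg] at h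
  have hsum : ∑ j ∈ Icc 1 n, (signedGaussCoeff q j * g (j + n) + signedGaussCoeff q j * g (-j + n))
      = -(2 * g n) * thetaSum n q - 2 * c * thetaMoment n q := by
    rw [thetaSum, thetaMoment, mul_sum, mul_sum, ← sum_sub_distrib]
    refine sum_congr rfl fun j hj => ?_
    have hj0 : (j : ℝ) ≠ 0 := Nat.cast_ne_zero.mpr (by have := (mem_Icc.mp hj).1; omega)
    rw [signedGaussCoeff_of_ne_zero hj0, ← mul_add, add_comm (j : ℝ), neg_add_eq_sub, hg]
    ring
  rw [h, hsum, signedGaussCoeff, if_pos rfl, zero_add]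
  ring

lemma eval_one_signedGaussPoly : (signedGaussPoly n q).eval 1 = 1 - 2 * thetaSum n q := by
  have h := sum_range_signedGaussCoeff_mul n (q := q) (fun _ => 1) 0 fun _ => by ring
  rw [signedGaussPoly, eval_finsetSum]
  simpa using h

lemma eval_one_derivative_signedGaussPoly :
    (derivative (signedGaussPoly n q)).eval 1 = n * (1 - 2 * thetaSum n q) := by
  have h := sum_range_signedGaussCoeff_mul n (q := q) (fun t => t) 0 fun _ => by ring
  rw [signedGaussPoly, derivative_sum, eval_finsetSum,
    sum_congr rfl fun k _ => eval_one_derivative_C_mul_X_pow _ _]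
  simpa using h

lemma eval_one_derivative_derivative_signedGaussPoly :
    (derivative (derivative (signedGaussPoly n q))).eval 1
      = n * (n - 1) * (1 - 2 * thetaSum n q) - 2 * thetaMoment n q := by
  have h := sum_range_signedGaussCoeff_mul n (q := q) (fun t => t * (t - 1)) 1 fun _ => by ring
  rw [signedGaussPoly, derivative_sum, derivative_sum, eval_finsetSum,
    sum_congr rfl fun k _ => eval_one_derivative_derivative_C_mul_X_pow _ _]
  simpa using h

lemma exists_root_im_ne_zero_signedGaussPoly (hq : 0 ≤ q) (h₁ : 1 < 2 * thetaSum n q)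
    (h₂ : 2 * (n - 1) * thetaSum n q < n) :
    ∃ z : ℂ, ((signedGaussPoly n q).map (algebraMap ℝ ℂ)).IsRoot z ∧ z.im ≠ 0 := by
  by_contra! hreal
  have hlag := laguerre_inequality hreal 1
  rw [eval_one_signedGaussPoly, eval_one_derivative_signedGaussPoly,
    eval_one_derivative_derivative_signedGaussPoly] at hlag
  have hmoment : thetaSum n q ≤ thetaMoment n q :=
    sum_le_sum fun j hj => le_mul_of_one_le_left (Real.rpow_nonneg hq _)
      (one_le_pow₀ (by exact_mod_cast (mem_Icc.mp hj).1))
  nlinarith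

end

lemma thetaSum_lt_thetaSum_of_lt {n : ℕ} (hn : 0 < n) {p q : ℝ} (hp : 0 < p) (hpq : p < q) :
    thetaSum n q < thetaSum n p :=
  sum_lt_sum_of_nonempty (nonempty_Icc.mpr hn) fun j hj => Real.rpow_lt_rpow_of_neg hp hpq <| by
    have : (1 : ℝ) ≤ j := by exact_mod_cast (mem_Icc.mp hj).1
    nlinarith

lemma exists_near_of_two_mul_thetaSum_eq_one {n : ℕ} (hn : 0 < n) {b : ℝ} (hb : 1 < b)
    (hbθ : 2 * thetaSum n b = 1) {ε : ℝ} (hε : 0 < ε) :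
    ∃ q, 1 < q ∧ b - ε < q ∧ 1 < 2 * thetaSum n q ∧ 2 * (n - 1) * thetaSum n q < n := by
  have hcont : ContinuousAt (thetaSum n) b :=
    tendsto_finsetSum _ fun j _ => Real.continuousAt_rpow_const b _ (Or.inl (by positivity))
  have hnear : ∀ᶠ q in 𝓝 b, (n - 1) * (2 * thetaSum n q) < n :=
    ((hcont.const_mul 2).const_mul _).eventually_lt_const (by simp only [hbθ]; linarith)
  obtain ⟨q, hqθ, hq, hqb⟩ := ((hnear.filter_mono (nhdsWithin_le_nhds (s := Set.Iio b))).and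
    (Ioo_mem_nhdsLT (max_lt hb (sub_lt_self b hε)))).exists
  have hθ := thetaSum_lt_thetaSum_of_lt hn (by linarith [le_max_left 1 (b - ε)]) hqb
  exact ⟨q, (le_max_left _ _).trans_lt hq, (le_max_right _ _).trans_lt hq, by linarith, by linarith⟩

/-- For every positive integer `n` and `ε > 0` there exists a real polynomial of degree
`2n` with nonzero coefficients, with `|q_k(P)| > b_{2n} - ε` for all `k = 2, …, 2n`,
having a nonreal root. -/
theorem stmt_13 (n : ℕ) (hn : 0 < n) (b : ℝ)
    (hb : 1 < b ∧ 1 - 2 * ∑ k ∈ Finset.Icc 1 n, b ^ (-(k : ℝ) ^ 2 / 2) = 0)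
    (ε : ℝ) (hε : 0 < ε) :
    ∃ P : Polynomial ℝ, P.natDegree = 2 * n ∧
      (∀ k, k ≤ 2 * n → P.coeff k ≠ 0) ∧
      (∀ k, 2 ≤ k → k ≤ 2 * n →
        b - ε < |(P.coeff (k - 1)) ^ 2 / (P.coeff (k - 2) * P.coeff k)|) ∧
      (∃ z : ℂ, (P.map (algebraMap ℝ ℂ)).IsRoot z ∧ z.im ≠ 0) := by
  have hbθ : 2 * thetaSum n b = 1 := by
    rw [thetaSum]
    linarith [hb.2]
  obtain ⟨q, hq1, hεq, h₁, h₂⟩ := exists_near_of_two_mul_thetaSum_eq_one hn hb.1 hbθ hε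
  have hq : 0 < q := one_pos.trans hq1
  refine ⟨signedGaussPoly n q, natDegree_signedGaussPoly n hq, fun k hk => ?_, fun k hk2 hk => ?_,
    exists_root_im_ne_zero_signedGaussPoly n hq.le h₁ h₂⟩
  · rw [coeff_signedGaussPoly n hk]
    exact signedGaussCoeff_ne_zero hq _
  · rwa [abs_secondQuotient_signedGaussPoly n hq hk2 hk]
end

section
/- Let n be a positive integer and let P(z) = ∑_{k=0}^{2n+1} a_k z^k be a polynomial with a_k ∈ ℝ \ {0} for all k. If |q_k(P)| ≥ b_{2n+2} for all k = 2, 3, …, 2n+1, then all zeros of P are real. -/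
/-!
Put `s = √b`. The hypothesis `|q_k(P)| ≥ b` says that `k ↦ |a_k|` is `s²`-log-concave, and this
survives multiplication by `r^k`. On a circle `|x| = r_k` on which the `k`-th term `a_k x^k` beats
its two neighbours by a factor `s`, log-concavity therefore makes the `j`-th term smaller than the
`k`-th one by the factor `s^(-(j-k)²)`. The defining equation `2 ∑_{d=1}^{n+1} s^(-d²) = 1` of
`b = b_{2n+2}` is exactly what is needed for the `k`-th term to beat all the others together, so
`P(x)` has the sign of `a_k x^k` on that circle. Comparing consecutive radii on the suitable side of
`0` gives, for each `k = 1, …, 2n+1`, a real root with `r_{k-1} < |x| < r_k`: these are `deg P`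
distinct real roots.
-/

open Finset Polynomial

theorem pow_sq_mul_le_of_logConcave {g : ℕ → ℝ} {s : ℝ} {L : ℕ} (hs : 0 ≤ s)
    (hg : ∀ i ≤ L, 0 < g i)
    (hlc : ∀ i, i + 2 ≤ L → s ^ 2 * (g i * g (i + 2)) ≤ g (i + 1) ^ 2)
    (h01 : 1 ≤ L → s * g 1 ≤ g 0) {d : ℕ} (hd : d ≤ L) : s ^ d ^ 2 * g d ≤ g 0 := by
  have hratio : ∀ i, i + 1 ≤ L → s ^ (2 * i + 1) * g (i + 1) ≤ g i := by
    intro i hi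
    induction i with
    | zero => simpa using h01 hi
    | succ i ih =>
      refine le_of_mul_le_mul_left ?_ (hg (i + 1) (by omega))
      have hg2 := (hg (i + 2) hi).le
      calc g (i + 1) * (s ^ (2 * (i + 1) + 1) * g (i + 1 + 1))
          = s ^ 2 * (s ^ (2 * i + 1) * g (i + 1) * g (i + 2)) := by ring
        _ ≤ s ^ 2 * (g i * g (i + 2)) := by gcongr; exact ih (by omega)
        _ ≤ g (i + 1) * g (i + 1) := by rw [← sq]; exact hlc i hi
  induction d with
  | zero => simp
  | succ d ih =>
    calc s ^ (d + 1) ^ 2 * g (d + 1) = s ^ d ^ 2 * (s ^ (2 * d + 1) * g (d + 1)) := by ring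
      _ ≤ s ^ d ^ 2 * g d := by gcongr; exact hratio d hd
      _ ≤ g 0 := ih (by omega)

theorem sum_range_add_sum_range_sub_lt {c : ℕ → ℝ} (hc : Antitone c) {n : ℕ} (hn : 0 < c n)
    {k : ℕ} (hk : k ≤ 2 * n + 1) :
    ∑ i ∈ range k, c i + ∑ i ∈ range (2 * n + 1 - k), c i < 2 * ∑ i ∈ range (n + 1), c i := by
  suffices h : ∀ a ≤ n, ∑ i ∈ range a, c i + ∑ i ∈ range (2 * n + 1 - a), c i
      < 2 * ∑ i ∈ range (n + 1), c i by
    rcases le_or_gt k n with hkn | hkn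
    · exact h k hkn
    · have h' := h (2 * n + 1 - k) (by omega)
      rw [Nat.sub_sub_self hk] at h'
      linarith
  intro a ha
  have hhead : ∑ i ∈ range (n + 1), c i
      = ∑ i ∈ range a, c i + ∑ i ∈ range (n - a), c (a + i) + c n := by
    rw [show n + 1 = a + (n - a) + 1 by omega, sum_range_succ, sum_range_add,
      show a + (n - a) = n by omega]
  have htail : ∑ i ∈ range (2 * n + 1 - a), c i
      = ∑ i ∈ range (n + 1), c i + ∑ i ∈ range (n - a), c (n + 1 + i) := by
    rw [show 2 * n + 1 - a = n + 1 + (n - a) by omega, sum_range_add]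
  have hcmp : ∑ i ∈ range (n - a), c (n + 1 + i) ≤ ∑ i ∈ range (n - a), c (a + i) :=
    sum_le_sum fun i _ => hc (by omega)
  linarith

theorem abs_sum_range_sub_lt {f c : ℕ → ℝ} {N k : ℕ} (hk : k ≤ N) (hf : f k ≠ 0)
    (hlow : ∀ i < k, |f (k - 1 - i)| ≤ c i * |f k|)
    (hhigh : ∀ i < N - k, |f (k + 1 + i)| ≤ c i * |f k|)
    (hc : ∑ i ∈ range k, c i + ∑ i ∈ range (N - k), c i < 1) :
    |∑ i ∈ range (N + 1), f i - f k| < |f k| := by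
  have hsplit : ∑ i ∈ range (N + 1), f i - f k
      = ∑ i ∈ range k, f (k - 1 - i) + ∑ i ∈ range (N - k), f (k + 1 + i) := by
    rw [show N + 1 = k + 1 + (N - k) by omega, sum_range_add, sum_range_succ,
      sum_range_reflect]
    ring
  have hfk : 0 < |f k| := abs_pos.2 hf
  calc |∑ i ∈ range (N + 1), f i - f k|
      ≤ ∑ i ∈ range k, |f (k - 1 - i)| + ∑ i ∈ range (N - k), |f (k + 1 + i)| := by
        rw [hsplit]
        exact (abs_add_le _ _).trans (add_le_add (abs_sum_le_sum_abs _ _)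
          (abs_sum_le_sum_abs _ _))
    _ ≤ ∑ i ∈ range k, c i * |f k| + ∑ i ∈ range (N - k), c i * |f k| := by
        gcongr with i hi i hi
        · exact hlow i (mem_range.1 hi)
        · exact hhigh i (mem_range.1 hi)
    _ = (∑ i ∈ range k, c i + ∑ i ∈ range (N - k), c i) * |f k| := by
        rw [← sum_mul, ← sum_mul, add_mul]
    _ < |f k| := mul_lt_of_lt_one_left hfk hc

theorem exists_mem_Ioo_eq_zero_of_mul_neg {f : ℝ → ℝ} {a b : ℝ} (hab : a ≤ b)
    (hf : ContinuousOn f (Set.Icc a b)) (h : f a * f b < 0) : ∃ t ∈ Set.Ioo a b, f t = 0 := by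
  rcases mul_neg_iff.1 h with ⟨ha, hb⟩ | ⟨ha, hb⟩
  · exact intermediate_value_Ioo' hab hf ⟨hb, ha⟩
  · exact intermediate_value_Ioo hab hf ⟨ha, hb⟩

theorem mul_pos_of_abs_sub_lt_abs {a b : ℝ} (h : |a - b| < |b|) : 0 < a * b := by
  rcases abs_cases (a - b) with ⟨h1, _⟩ | ⟨h1, _⟩ <;>
    rcases abs_cases b with ⟨h2, _⟩ | ⟨h2, _⟩ <;> nlinarith

theorem exists_abs_mem_Ioo_eq_zero_of_sign {f : ℝ → ℝ} (hf : Continuous f) {u v a b : ℝ}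
    {k : ℕ} (hu : 0 < u) (huv : u < v) (hfu : ∀ x, |x| = u → 0 < f x * (a * x ^ k))
    (hfv : ∀ x, |x| = v → 0 < f x * (b * x ^ (k + 1))) :
    ∃ x, f x = 0 ∧ u < |x| ∧ |x| < v := by
  have hab : a * b ≠ 0 := by
    have h1 := hfu u (abs_of_pos hu)
    have h2 := hfv v (abs_of_pos (hu.trans huv))
    refine mul_ne_zero ?_ ?_ <;> rintro rfl <;> simp_all
  obtain ⟨σ, hσ, hσab⟩ : ∃ σ : ℝ, |σ| = 1 ∧ σ * (a * b) < 0 := by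
    rcases hab.lt_or_gt with hneg | hpos
    · exact ⟨1, abs_one, by simpa using hneg⟩
    · exact ⟨-1, by simp, by simpa using hpos⟩
  have habs : ∀ t, 0 ≤ t → |σ * t| = t := fun t ht => by
    rw [abs_mul, hσ, one_mul, abs_of_nonneg ht]
  have hterms : (a * (σ * u) ^ k) * (b * (σ * v) ^ (k + 1)) < 0 := by
    have hσ2 : σ ^ 2 = 1 := by rw [← sq_abs, hσ, one_pow]
    have : (a * (σ * u) ^ k) * (b * (σ * v) ^ (k + 1))
        = σ * (a * b) * (u ^ k * v ^ (k + 1) * (σ ^ 2) ^ k) := by ring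
    rw [this, hσ2, one_pow, mul_one]
    have hv : 0 < v := hu.trans huv
    exact mul_neg_of_neg_of_pos hσab (by positivity)
  have hsign : f (σ * u) * f (σ * v) < 0 := by
    have h1 := hfu _ (habs u hu.le)
    have h2 := hfv _ (habs v (hu.le.trans huv.le))
    nlinarith [mul_pos h1 h2]
  obtain ⟨t, ⟨hut, htv⟩, ht⟩ := exists_mem_Ioo_eq_zero_of_mul_neg huv.le
    (hf.comp (continuous_const_mul σ)).continuousOn hsign
  exact ⟨σ * t, ht, by rwa [habs t (by linarith)], by rwa [habs t (by linarith)]⟩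

theorem abs_eval_sub_coeff_mul_pow_lt {P : ℝ[X]} {s x : ℝ} {N k : ℕ} (hs : 0 < s) (hx : x ≠ 0)
    (hdeg : P.natDegree = N) (hcoeff : ∀ j ≤ N, P.coeff j ≠ 0)
    (hlc : ∀ j, j + 2 ≤ N → s ^ 2 * (|P.coeff j| * |P.coeff (j + 2)|) ≤ |P.coeff (j + 1)| ^ 2)
    (hk : k ≤ N) (hup : k < N → s * (|P.coeff (k + 1)| * |x|) ≤ |P.coeff k|)
    (hdown : 0 < k → s * |P.coeff (k - 1)| ≤ |P.coeff k| * |x|)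
    (hw : ∑ i ∈ range k, (s ^ (i + 1) ^ 2)⁻¹ + ∑ i ∈ range (N - k), (s ^ (i + 1) ^ 2)⁻¹ < 1) :
    |P.eval x - P.coeff k * x ^ k| < |P.coeff k * x ^ k| := by
  set f : ℕ → ℝ := fun j => P.coeff j * x ^ j with hf
  have habs : ∀ j, |f j| = |P.coeff j| * |x| ^ j := fun j => by rw [hf, abs_mul, abs_pow]
  have hpos : ∀ j ≤ N, 0 < |f j| := fun j hj =>
    abs_pos.2 (mul_ne_zero (hcoeff j hj) (pow_ne_zero j hx))
  have hlcf : ∀ j, j + 2 ≤ N → s ^ 2 * (|f j| * |f (j + 2)|) ≤ |f (j + 1)| ^ 2 := by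
    intro j hj
    simp only [habs]
    calc s ^ 2 * (|P.coeff j| * |x| ^ j * (|P.coeff (j + 2)| * |x| ^ (j + 2)))
        = s ^ 2 * (|P.coeff j| * |P.coeff (j + 2)|) * (|x| ^ (j + 1)) ^ 2 := by ring
      _ ≤ |P.coeff (j + 1)| ^ 2 * (|x| ^ (j + 1)) ^ 2 := by gcongr; exact hlc j hj
      _ = (|P.coeff (j + 1)| * |x| ^ (j + 1)) ^ 2 := by ring
  have hhigh : ∀ i < N - k, |f (k + 1 + i)| ≤ (s ^ (i + 1) ^ 2)⁻¹ * |f k| := by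
    intro i hi
    rw [le_inv_mul_iff₀ (by positivity), show k + 1 + i = k + (i + 1) by ring]
    refine pow_sq_mul_le_of_logConcave (g := fun i => |f (k + i)|) hs.le
      (fun i hi => hpos _ (by omega)) (fun i hi => hlcf (k + i) (by omega)) (fun h1 => ?_)
      (show i + 1 ≤ N - k by omega)
    calc s * |f (k + 1)| = s * (|P.coeff (k + 1)| * |x|) * |x| ^ k := by rw [habs]; ring
      _ ≤ |P.coeff k| * |x| ^ k := by gcongr; exact hup (by omega)
      _ = |f (k + 0)| := (habs k).symm
  have hlow : ∀ i < k, |f (k - 1 - i)| ≤ (s ^ (i + 1) ^ 2)⁻¹ * |f k| := by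
    intro i hi
    rw [le_inv_mul_iff₀ (by positivity), show k - 1 - i = k - (i + 1) by omega]
    refine pow_sq_mul_le_of_logConcave (g := fun i => |f (k - i)|) hs.le
      (fun i hi => hpos _ (by omega)) (fun i hi => ?_) (fun h1 => ?_) (show i + 1 ≤ k by omega)
    · have h := hlcf (k - (i + 2)) (by omega)
      rwa [show k - (i + 2) + 2 = k - i by omega, show k - (i + 2) + 1 = k - (i + 1) by omega,
        mul_comm |f (k - (i + 2))|] at h
    · obtain ⟨m, rfl⟩ : ∃ m, k = m + 1 := ⟨k - 1, by omega⟩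
      rw [Nat.add_sub_cancel] at hdown ⊢
      calc s * |f m| = s * |P.coeff m| * |x| ^ m := by rw [habs]; ring
        _ ≤ |P.coeff (m + 1)| * |x| * |x| ^ m := by gcongr ?_ * _; exact hdown m.succ_pos
        _ = |f (m + 1 - 0)| := by rw [Nat.sub_zero, habs]; ring
  rw [eval_eq_sum_range, hdeg]
  exact abs_sum_range_sub_lt hk (abs_pos.1 (hpos k hk)) hlow hhigh hw

/-- At radius `dominanceRadius a s k` the term `a k * r ^ k` exceeds both of its neighbours by a
factor at least `s`, see `mul_mul_dominanceRadius_le` and `mul_le_mul_dominanceRadius`. -/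
noncomputable def dominanceRadius (a : ℕ → ℝ) (s : ℝ) : ℕ → ℝ
  | 0 => a 0 / (s * a 1)
  | k + 1 => s * a k / a (k + 1)

section dominanceRadius

variable {a : ℕ → ℝ} {s : ℝ} {N k : ℕ}

theorem dominanceRadius_pos (hs : 0 < s) (ha : ∀ j ≤ N, 0 < a j) (hN : 1 ≤ N) (hk : k ≤ N) :
    0 < dominanceRadius a s k := by
  cases k with
  | zero => exact div_pos (ha 0 (by omega)) (mul_pos hs (ha 1 hN))
  | succ k => exact div_pos (mul_pos hs (ha k (by omega))) (ha (k + 1) hk)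

theorem mul_mul_dominanceRadius_le (hs : 0 < s) (ha : ∀ j ≤ N, 0 < a j)
    (hlc : ∀ j, j + 2 ≤ N → s ^ 2 * (a j * a (j + 2)) ≤ a (j + 1) ^ 2) (hk : k < N) :
    s * (a (k + 1) * dominanceRadius a s k) ≤ a k := by
  cases k with
  | zero =>
    have := (ha 1 hk).ne'
    exact (by simp only [dominanceRadius]; field_simp : _ = a 0).le
  | succ k =>
    have h1 := ha (k + 1) (by omega)
    simp only [dominanceRadius]
    rw [← le_div_iff₀' hs, mul_div_assoc', div_le_div_iff₀ h1 hs]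
    nlinarith [hlc k hk]

theorem mul_le_mul_dominanceRadius (ha : ∀ j ≤ N, 0 < a j) (hk : 0 < k) (hkN : k ≤ N) :
    s * a (k - 1) ≤ a k * dominanceRadius a s k := by
  obtain ⟨k, rfl⟩ : ∃ m, k = m + 1 := ⟨k - 1, by omega⟩
  have := (ha (k + 1) hkN).ne'
  exact (by simp only [dominanceRadius]; field_simp : s * a k = _).le

theorem dominanceRadius_lt_succ (hs : 1 < s) (ha : ∀ j ≤ N, 0 < a j)
    (hlc : ∀ j, j + 2 ≤ N → s ^ 2 * (a j * a (j + 2)) ≤ a (j + 1) ^ 2) (hk : k + 1 ≤ N) :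
    dominanceRadius a s k < dominanceRadius a s (k + 1) := by
  have hs0 : 0 < s := one_pos.trans hs
  cases k with
  | zero =>
    have h0 := ha 0 (by omega)
    have h1 := ha 1 hk
    simp only [dominanceRadius]
    rw [div_lt_div_iff₀ (mul_pos hs0 h1) h1]
    nlinarith [mul_lt_mul_of_pos_right (one_lt_mul hs.le hs) (mul_pos h0 h1)]
  | succ k =>
    have h0 := ha k (by omega)
    have h1 := ha (k + 1) (by omega)
    have h2 := ha (k + 2) hk
    simp only [dominanceRadius]
    rw [div_lt_div_iff₀ h1 h2]
    nlinarith [hlc k hk, mul_pos h0 h2, mul_pos hs0 (mul_pos h0 h2)]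

end dominanceRadius

theorem exists_isRoot_abs_mem_Ioo {P : ℝ[X]} {s : ℝ} {N k : ℕ} (hs : 1 < s)
    (hdeg : P.natDegree = N) (hcoeff : ∀ j ≤ N, P.coeff j ≠ 0)
    (hlc : ∀ j, j + 2 ≤ N → s ^ 2 * (|P.coeff j| * |P.coeff (j + 2)|) ≤ |P.coeff (j + 1)| ^ 2)
    (hw : ∀ k ≤ N,
      ∑ i ∈ range k, (s ^ (i + 1) ^ 2)⁻¹ + ∑ i ∈ range (N - k), (s ^ (i + 1) ^ 2)⁻¹ < 1)
    (hk : k < N) :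
    ∃ x, P.IsRoot x ∧ dominanceRadius (|P.coeff ·|) s k < |x| ∧
      |x| < dominanceRadius (|P.coeff ·|) s (k + 1) := by
  have hs0 : 0 < s := one_pos.trans hs
  have ha : ∀ j ≤ N, 0 < |P.coeff j| := fun j hj => abs_pos.2 (hcoeff j hj)
  have hsign : ∀ m ≤ N, ∀ x, |x| = dominanceRadius (|P.coeff ·|) s m →
      0 < P.eval x * (P.coeff m * x ^ m) := by
    intro m hm x hx
    have hx0 : x ≠ 0 := abs_pos.1 (hx ▸ dominanceRadius_pos hs0 ha (by omega) hm)
    refine mul_pos_of_abs_sub_lt_abs (abs_eval_sub_coeff_mul_pow_lt hs0 hx0 hdeg hcoeff hlc hm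
      (fun hmN => ?_) (fun hm0 => ?_) (hw m hm))
    · rw [hx]; exact mul_mul_dominanceRadius_le hs0 ha hlc hmN
    · rw [hx]; exact mul_le_mul_dominanceRadius ha hm0 hm
  exact exists_abs_mem_Ioo_eq_zero_of_sign P.continuous
    (dominanceRadius_pos hs0 ha (by omega) hk.le) (dominanceRadius_lt_succ hs ha hlc hk)
    (hsign k hk.le) (hsign (k + 1) hk)

theorem exists_finset_card_eq_of_abs_mem_Ioo {p : ℝ → Prop} {r : ℕ → ℝ} {N : ℕ}
    (h : ∀ k < N, ∃ x, p x ∧ r k < |x| ∧ |x| < r (k + 1)) :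
    ∃ S : Finset ℝ, S.card = N ∧ ∀ x ∈ S, p x := by
  suffices hm : ∀ m ≤ N, ∃ S : Finset ℝ, S.card = m ∧ ∀ x ∈ S, p x ∧ |x| < r m by
    obtain ⟨S, hS, hp⟩ := hm N le_rfl
    exact ⟨S, hS, fun x hx => (hp x hx).1⟩
  intro m hm
  induction m with
  | zero => exact ⟨∅, rfl, by simp⟩
  | succ m ih =>
    obtain ⟨S, hS, hp⟩ := ih (by omega)
    obtain ⟨x, hx, hlo, hhi⟩ := h m hm
    have hxS : x ∉ S := fun hxS => (hp x hxS).2.not_gt hlo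
    refine ⟨insert x S, by rw [card_insert_of_notMem hxS, hS], fun y hy => ?_⟩
    rcases mem_insert.1 hy with rfl | hyS
    · exact ⟨hx, hhi⟩
    · exact ⟨(hp y hyS).1, (hp y hyS).2.trans (hlo.trans hhi)⟩

theorem Polynomial.im_eq_zero_of_natDegree_le_card {P : ℝ[X]} (hP : P ≠ 0) {S : Finset ℝ}
    (hS : ∀ x ∈ S, P.IsRoot x) (hcard : P.natDegree ≤ S.card) {z : ℂ}
    (hz : (P.map (algebraMap ℝ ℂ)).IsRoot z) : z.im = 0 := by
  have hroots : Multiset.card P.roots = P.natDegree := by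
    refine le_antisymm (card_roots' P) (hcard.trans ?_)
    refine (card_le_card fun x hx => ?_).trans (Multiset.toFinset_card_le P.roots)
    exact Multiset.mem_toFinset.2 ((mem_roots hP).2 (hS x hx))
  have hz' : z ∈ (P.map (algebraMap ℝ ℂ)).roots :=
    (mem_roots (Polynomial.map_ne_zero hP)).2 hz
  rw [← roots_map_of_injective_of_card_eq_natDegree (algebraMap ℝ ℂ).injective hroots] at hz'
  obtain ⟨x, -, rfl⟩ := Multiset.mem_map.1 hz'
  exact Complex.ofReal_im x

theorem sqrt_sq_mul_abs_mul_le_of_le_abs_div {a₀ a₁ a₂ b : ℝ} (hb : 0 ≤ b) (h₀ : a₀ ≠ 0)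
    (h₂ : a₂ ≠ 0) (h : b ≤ |a₁ ^ 2 / (a₀ * a₂)|) : √b ^ 2 * (|a₀| * |a₂|) ≤ |a₁| ^ 2 := by
  rwa [abs_div, abs_mul, abs_pow, le_div_iff₀ (by positivity), ← Real.sq_sqrt hb] at h

theorem Real.rpow_neg_sq_div_two {b : ℝ} (hb : 0 ≤ b) (k : ℕ) :
    b ^ (-(k : ℝ) ^ 2 / 2) = (√b ^ k ^ 2)⁻¹ := by
  rw [Real.sqrt_eq_rpow, ← Real.rpow_natCast (b ^ (1 / 2 : ℝ)), ← Real.rpow_mul hb,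
    ← Real.rpow_neg hb]
  push_cast
  ring_nf

theorem stmt_14_general (n : ℕ) (b : ℝ)
    (hb : 1 < b ∧ 1 - 2 * ∑ k ∈ Finset.Icc 1 (n + 1), b ^ (-(k : ℝ) ^ 2 / 2) = 0)
    (P : Polynomial ℝ) (hdeg : P.natDegree = 2 * n + 1)
    (hcoeff : ∀ k, k ≤ 2 * n + 1 → P.coeff k ≠ 0)
    (hq : ∀ k, 2 ≤ k → k ≤ 2 * n + 1 →
      b ≤ |(P.coeff (k - 1)) ^ 2 / (P.coeff (k - 2) * P.coeff k)|) :
    ∀ z : ℂ, (P.map (algebraMap ℝ ℂ)).IsRoot z → z.im = 0 := by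
  obtain ⟨hb1, hbsum⟩ := hb
  have hs : 1 < √b := Real.sqrt_one ▸ Real.sqrt_lt_sqrt zero_le_one hb1
  have hlc : ∀ j, j + 2 ≤ 2 * n + 1 →
      √b ^ 2 * (|P.coeff j| * |P.coeff (j + 2)|) ≤ |P.coeff (j + 1)| ^ 2 := fun j hj =>
    sqrt_sq_mul_abs_mul_le_of_le_abs_div (by linarith) (hcoeff j (by omega)) (hcoeff _ hj)
      (by simpa using hq (j + 2) (by omega) hj)
  have hhalf : ∑ i ∈ range (n + 1), (√b ^ (i + 1) ^ 2)⁻¹ = 1 / 2 := by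
    rw [range_eq_Ico, sum_Ico_add' (fun k => (√b ^ k ^ 2)⁻¹) 0 (n + 1) 1,
      ← sum_congr rfl fun k _ => Real.rpow_neg_sq_div_two (by linarith) k]
    change ∑ k ∈ Icc 1 (n + 1), b ^ (-(k : ℝ) ^ 2 / 2) = 1 / 2
    linarith
  have hw : ∀ k ≤ 2 * n + 1, ∑ i ∈ range k, (√b ^ (i + 1) ^ 2)⁻¹
      + ∑ i ∈ range (2 * n + 1 - k), (√b ^ (i + 1) ^ 2)⁻¹ < 1 := fun k hk => by
    have hanti : Antitone fun i : ℕ => (√b ^ (i + 1) ^ 2)⁻¹ := fun i j hij =>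
      inv_anti₀ (by positivity) (pow_le_pow_right₀ hs.le (by gcongr))
    have := sum_range_add_sum_range_sub_lt hanti (by positivity) hk
    linarith
  have hP : P ≠ 0 := fun h => hcoeff 0 (Nat.zero_le _) (by simp [h])
  obtain ⟨S, hS, hroots⟩ := exists_finset_card_eq_of_abs_mem_Ioo
    (r := dominanceRadius (|P.coeff ·|) √b) fun k hk =>
    exists_isRoot_abs_mem_Ioo hs hdeg hcoeff hlc hw hk
  exact fun z hz => im_eq_zero_of_natDegree_le_card hP hroots (hdeg.trans hS.symm).le hz

/-- If `P` is a real polynomial of degree `2n+1` with nonzero coefficients and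
`|q_k(P)| ≥ b_{2n+2}` for all `k = 2, …, 2n+1`, then all (complex) zeros of `P`
are real. -/
theorem stmt_14 (n : ℕ) (hn : 0 < n) (b : ℝ)
    (hb : 1 < b ∧ 1 - 2 * ∑ k ∈ Finset.Icc 1 (n + 1), b ^ (-(k : ℝ) ^ 2 / 2) = 0)
    (P : Polynomial ℝ) (hdeg : P.natDegree = 2 * n + 1)
    (hcoeff : ∀ k, k ≤ 2 * n + 1 → P.coeff k ≠ 0)
    (hq : ∀ k, 2 ≤ k → k ≤ 2 * n + 1 →
      b ≤ |(P.coeff (k - 1)) ^ 2 / (P.coeff (k - 2) * P.coeff k)|) :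
    ∀ z : ℂ, (P.map (algebraMap ℝ ℂ)).IsRoot z → z.im = 0 :=
  stmt_14_general n b hb P hdeg hcoeff hq
end

section
/- For every positive integer n and every ε > 0 there exists a polynomial P of degree 2n+1 with all coefficients real and nonzero, such that |q_k(P)| > b_{2n} - ε for all k = 2, 3, …, 2n+1, and P has a nonreal root. -/
/-
Take `t = b^(-1/2)` and `P = ∑_{k ≤ 2n+1} ± t^(k²) X^k`, the sign being `-` only at `k = n`.
Since `2(k+1)² = k² + (k+2)² - 2`, every `|q_k(P)|` equals `t⁻² = b`. At `x₀ = t^(-2n)` the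
`k`-th term of `P` becomes `± t^((k-n)²) / t^(n²)`, so folding the sum around `k = n` and using
`∑_{j=1}^n t^(j²) = 1/2` computes `P(x₀)`, `x₀ P'(x₀)` and `x₀² P''(x₀)` exactly. They violate
Laguerre's inequality `P P'' ≤ P'²`, which holds for linear factors and is preserved by products,
hence holds for every real-rooted polynomial.
-/

open Polynomial Finset

lemma Finset.sum_range_two_mul_add_two {M : Type*} [AddCommMonoid M] (f : ℕ → M) (n : ℕ) :
    ∑ k ∈ range (2 * n + 2), f k
      = f n + ∑ j ∈ Icc 1 n, (f (n - j) + f (n + j)) + f (2 * n + 1) := by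
  rw [← Ico_add_one_right_eq_Icc, sum_Ico_eq_sum_range, add_tsub_cancel_right, sum_add_distrib,
    sum_range_succ, show 2 * n + 1 = n + (n + 1) by ring, sum_range_add, sum_range_succ',
    ← sum_range_reflect]
  simp only [add_zero, Nat.sub_sub, add_comm 1]
  abel

namespace Polynomial

section Laguerre

variable {R : Type*} [CommRing R] [LinearOrder R] [IsStrictOrderedRing R]

def LaguerreIneq (f : R[X]) : Prop :=
  ∀ x, f.eval x * (derivative (derivative f)).eval x ≤ (derivative f).eval x ^ 2

-- `(fg)'² - fg(fg)'' = g²(f'² - ff'') + f²(g'² - gg'')`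
lemma LaguerreIneq.mul {f g : R[X]} (hf : LaguerreIneq f) (hg : LaguerreIneq g) :
    LaguerreIneq (f * g) := by
  intro x
  simp only [derivative_mul, derivative_add, eval_add, eval_mul]
  nlinarith [mul_le_mul_of_nonneg_left (hf x) (sq_nonneg (g.eval x)),
    mul_le_mul_of_nonneg_left (hg x) (sq_nonneg (f.eval x))]

lemma Splits.laguerreIneq {f : R[X]} (hf : f.Splits) : LaguerreIneq f := by
  induction hf using Submonoid.closure_induction with
  | mem f hf => obtain ⟨a, rfl⟩ | ⟨a, rfl⟩ := hf <;> simp [LaguerreIneq]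
  | one => simp [LaguerreIneq]
  | mul f g _ _ hf hg => exact hf.mul hg

end Laguerre

lemma splits_of_forall_isRoot_im_eq_zero {f : ℝ[X]}
    (hf : ∀ z : ℂ, (f.map (algebraMap ℝ ℂ)).IsRoot z → z.im = 0) : f.Splits :=
  Splits.of_splits_map _ (IsAlgClosed.splits _) fun z hz =>
    ⟨z.re, Complex.ext rfl (hf z (isRoot_of_mem_roots hz)).symm⟩

section SumMonomial

variable {R : Type*} [CommRing R] (s : Finset ℕ) (c : ℕ → R) (x : R)

lemma mul_eval_derivative_sum_monomial :
    x * (derivative (∑ k ∈ s, monomial k (c k))).eval x = ∑ k ∈ s, k * c k * x ^ k := by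
  simp only [derivative_sum, eval_finsetSum, derivative_monomial, eval_monomial, mul_sum]
  refine sum_congr rfl fun k _ => ?_
  rcases k with _ | k
  · simp
  · simp only [add_tsub_cancel_right, pow_succ]; ring

lemma sq_mul_eval_derivative_derivative_sum_monomial :
    x ^ 2 * (derivative (derivative (∑ k ∈ s, monomial k (c k)))).eval x
      = ∑ k ∈ s, k * (k - 1) * c k * x ^ k := by
  simp only [derivative_sum, eval_finsetSum, derivative_monomial, eval_monomial, mul_sum]
  refine sum_congr rfl fun k _ => ?_
  rcases k with _ | _ | k
  · simp
  · simp
  · simp only [add_tsub_cancel_right, pow_succ]; push_cast; ring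

end SumMonomial

end Polynomial

def flipThetaCoeff (n : ℕ) (t : ℝ) (k : ℕ) : ℝ :=
  (if k = n then -1 else 1) * t ^ k ^ 2

noncomputable def flipThetaPoly (n : ℕ) (t : ℝ) : ℝ[X] :=
  ∑ k ∈ range (2 * n + 2), monomial k (flipThetaCoeff n t k)

section FlipTheta

variable {n : ℕ} {t : ℝ}

lemma flipThetaCoeff_ne_zero (ht : t ≠ 0) (k : ℕ) : flipThetaCoeff n t k ≠ 0 := by
  unfold flipThetaCoeff
  split_ifs <;> simp [ht]

lemma abs_flipThetaCoeff (k : ℕ) : |flipThetaCoeff n t k| = |t| ^ k ^ 2 := by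
  unfold flipThetaCoeff
  split_ifs <;> simp [abs_pow]

lemma abs_flipThetaCoeff_sq_div (ht : t ≠ 0) (k : ℕ) :
    |flipThetaCoeff n t (k + 1) ^ 2 / (flipThetaCoeff n t k * flipThetaCoeff n t (k + 2))|
      = (t ^ 2)⁻¹ := by
  have ht' : |t| ≠ 0 := abs_ne_zero.mpr ht
  rw [abs_div, abs_mul, abs_pow, abs_flipThetaCoeff, abs_flipThetaCoeff, abs_flipThetaCoeff,
    ← pow_mul, ← pow_add, show k ^ 2 + (k + 2) ^ 2 = (k + 1) ^ 2 * 2 + 2 by ring, pow_add,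
    ← abs_pow, pow_abs, abs_of_nonneg (sq_nonneg t)]
  field_simp

lemma coeff_flipThetaPoly (j : ℕ) :
    (flipThetaPoly n t).coeff j = if j < 2 * n + 2 then flipThetaCoeff n t j else 0 := by
  simp [flipThetaPoly, coeff_monomial]

lemma natDegree_flipThetaPoly (ht : t ≠ 0) : (flipThetaPoly n t).natDegree = 2 * n + 1 :=
  natDegree_eq_of_le_of_coeff_ne_zero
    (natDegree_le_iff_coeff_eq_zero.mpr fun j hj => by
      rw [coeff_flipThetaPoly, if_neg (by omega)])
    (by rw [coeff_flipThetaPoly, if_pos (by omega)]; exact flipThetaCoeff_ne_zero ht _)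

lemma flipThetaCoeff_mul_inv_pow (ht : t ≠ 0) {k d : ℕ} (h : k ^ 2 + n ^ 2 = d ^ 2 + 2 * n * k) :
    t ^ n ^ 2 * (flipThetaCoeff n t k * (t ^ (2 * n))⁻¹ ^ k)
      = (if k = n then -1 else 1) * t ^ d ^ 2 := by
  rw [flipThetaCoeff, inv_pow, ← pow_mul]
  field_simp
  rw [← pow_add, ← pow_add, add_comm (n ^ 2), h, add_comm]

lemma flipThetaCoeff_weighted_sum (ht : t ≠ 0) (w : ℕ → ℝ) :
    t ^ n ^ 2 * ∑ k ∈ range (2 * n + 2), w k * flipThetaCoeff n t k * (t ^ (2 * n))⁻¹ ^ k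
      = -w n + ∑ j ∈ Icc 1 n, (w (n - j) + w (n + j)) * t ^ j ^ 2
        + w (2 * n + 1) * t ^ (n + 1) ^ 2 := by
  have term : ∀ k d, k ^ 2 + n ^ 2 = d ^ 2 + 2 * n * k →
      t ^ n ^ 2 * (w k * flipThetaCoeff n t k * (t ^ (2 * n))⁻¹ ^ k)
        = w k * ((if k = n then -1 else 1) * t ^ d ^ 2) := by
    intro k d h
    rw [← flipThetaCoeff_mul_inv_pow ht h]
    ring
  rw [sum_range_two_mul_add_two, mul_add, mul_add, mul_sum, term n 0 (by ring),
    term (2 * n + 1) (n + 1) (by ring), if_pos rfl, if_neg (by omega)]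
  congr 2
  · ring
  · refine sum_congr rfl fun j hj => ?_
    obtain ⟨hj1, hjn⟩ := mem_Icc.mp hj
    rw [mul_add, term (n - j) j ?_, term (n + j) j (by ring), if_neg (by omega), if_neg (by omega)]
    · ring
    · zify [hjn]
      ring
  · ring

lemma two_mul_add_one_mul_pow_lt (ht0 : 0 < t) (ht : t ≤ 1 / 2) (n : ℕ) :
    (2 * n + 1) * t ^ (n + 1) ^ 2 < 2 * t := by
  have hpow : ((2 * n + 1 : ℕ) : ℝ) < 2 ^ (2 * n + 1) := by exact_mod_cast Nat.lt_two_pow_self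
  have hsmall : t ^ (n ^ 2 + 2 * n) ≤ (1 / 2) ^ (2 * n) :=
    (pow_le_pow_of_le_one ht0.le (by linarith) (by nlinarith)).trans
      (pow_le_pow_left₀ ht0.le ht _)
  calc (2 * n + 1) * t ^ (n + 1) ^ 2 = t * ((2 * n + 1) * t ^ (n ^ 2 + 2 * n)) := by ring
    _ ≤ t * ((2 * n + 1) * (1 / 2) ^ (2 * n)) := by gcongr
    _ < t * 2 := by
      gcongr
      rw [one_div_pow, ← div_eq_mul_one_div, div_lt_iff₀ (by positivity), ← pow_succ']
      exact_mod_cast hpow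
    _ = 2 * t := mul_comm _ _

section Evaluation

variable (hS : ∑ j ∈ Icc 1 n, t ^ j ^ 2 = 1 / 2) (ht : t ≠ 0)
include hS ht

lemma eval_flipThetaPoly :
    t ^ n ^ 2 * (flipThetaPoly n t).eval (t ^ (2 * n))⁻¹ = t ^ (n + 1) ^ 2 := by
  have h := flipThetaCoeff_weighted_sum (n := n) ht (fun _ => 1)
  simp only [one_mul] at h
  rw [flipThetaPoly, eval_finsetSum]
  simp only [eval_monomial, h, ← two_mul, ← mul_sum, hS]
  ring

lemma mul_eval_derivative_flipThetaPoly :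
    t ^ n ^ 2 * ((t ^ (2 * n))⁻¹ * (derivative (flipThetaPoly n t)).eval (t ^ (2 * n))⁻¹)
      = (2 * n + 1) * t ^ (n + 1) ^ 2 := by
  rw [flipThetaPoly, mul_eval_derivative_sum_monomial, flipThetaCoeff_weighted_sum ht]
  have h : ∀ j ∈ Icc 1 n, ((n - j : ℕ) + (n + j : ℕ) : ℝ) * t ^ j ^ 2 = 2 * n * t ^ j ^ 2 := by
    intro j hj
    rw [Nat.cast_sub (mem_Icc.mp hj).2]
    push_cast
    ring
  rw [sum_congr rfl h, ← mul_sum, hS]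
  push_cast
  ring

lemma sq_mul_eval_derivative_derivative_flipThetaPoly :
    t ^ n ^ 2 * (((t ^ (2 * n))⁻¹) ^ 2 *
        (derivative (derivative (flipThetaPoly n t))).eval (t ^ (2 * n))⁻¹)
      = 2 * ∑ j ∈ Icc 1 n, (j : ℝ) ^ 2 * t ^ j ^ 2 + 2 * n * (2 * n + 1) * t ^ (n + 1) ^ 2 := by
  rw [flipThetaPoly, sq_mul_eval_derivative_derivative_sum_monomial,
    flipThetaCoeff_weighted_sum ht (fun k => (k : ℝ) * (k - 1))]
  have h : ∀ j ∈ Icc 1 n,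
      (((n - j : ℕ) : ℝ) * ((n - j : ℕ) - 1) + ((n + j : ℕ) : ℝ) * ((n + j : ℕ) - 1)) * t ^ j ^ 2
        = (2 * n ^ 2 - 2 * n) * t ^ j ^ 2 + 2 * ((j : ℝ) ^ 2 * t ^ j ^ 2) := by
    intro j hj
    rw [Nat.cast_sub (mem_Icc.mp hj).2]
    push_cast
    ring
  rw [sum_congr rfl h, sum_add_distrib, ← mul_sum, ← mul_sum, hS]
  push_cast
  ring

end Evaluation

lemma not_laguerreIneq_flipThetaPoly (hn : 0 < n) (ht : 0 < t)
    (hS : ∑ j ∈ Icc 1 n, t ^ j ^ 2 = 1 / 2) : ¬ LaguerreIneq (flipThetaPoly n t) := by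
  intro hL
  have hone : 1 ∈ Icc 1 n := mem_Icc.mpr ⟨le_rfl, hn⟩
  have ht_half : t ≤ 1 / 2 := by
    have := single_le_sum (fun j _ => (pow_pos ht (j ^ 2)).le) hone
    rwa [hS, one_pow, pow_one] at this
  have htS : t ≤ ∑ j ∈ Icc 1 n, (j : ℝ) ^ 2 * t ^ j ^ 2 := by
    have := single_le_sum (f := fun j : ℕ => (j : ℝ) ^ 2 * t ^ j ^ 2)
      (fun j _ => by positivity) hone
    simpa using this
  have laguerre_at_center :
      t ^ (n + 1) ^ 2 * (2 * ∑ j ∈ Icc 1 n, (j : ℝ) ^ 2 * t ^ j ^ 2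
          + 2 * n * (2 * n + 1) * t ^ (n + 1) ^ 2)
        ≤ ((2 * n + 1) * t ^ (n + 1) ^ 2) ^ 2 := by
    set P := flipThetaPoly n t
    set x₀ := (t ^ (2 * n))⁻¹
    calc _ = (t ^ n ^ 2 * P.eval x₀) *
          (t ^ n ^ 2 * (x₀ ^ 2 * (derivative (derivative P)).eval x₀)) := by
          rw [eval_flipThetaPoly hS ht.ne',
            sq_mul_eval_derivative_derivative_flipThetaPoly hS ht.ne']
      _ = (t ^ n ^ 2 * x₀) ^ 2 * (P.eval x₀ * (derivative (derivative P)).eval x₀) := by ring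
      _ ≤ (t ^ n ^ 2 * x₀) ^ 2 * (derivative P).eval x₀ ^ 2 := by gcongr; exact hL x₀
      _ = (t ^ n ^ 2 * (x₀ * (derivative P).eval x₀)) ^ 2 := by ring
      _ = _ := by rw [mul_eval_derivative_flipThetaPoly hS ht.ne']
  nlinarith [two_mul_add_one_mul_pow_lt ht ht_half n, pow_pos ht ((n + 1) ^ 2)]

end FlipTheta

/-- For every positive integer `n` and `ε > 0` there exists a real polynomial of degree
`2n+1` with nonzero coefficients, with `|q_k(P)| > b_{2n} - ε` for all `k = 2, …, 2n+1`,
having a nonreal root. -/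
theorem stmt_15 (n : ℕ) (hn : 0 < n) (b : ℝ)
    (hb : 1 < b ∧ 1 - 2 * ∑ k ∈ Finset.Icc 1 n, b ^ (-(k : ℝ) ^ 2 / 2) = 0)
    (ε : ℝ) (hε : 0 < ε) :
    ∃ P : Polynomial ℝ, P.natDegree = 2 * n + 1 ∧
      (∀ k, k ≤ 2 * n + 1 → P.coeff k ≠ 0) ∧
      (∀ k, 2 ≤ k → k ≤ 2 * n + 1 →
        b - ε < |(P.coeff (k - 1)) ^ 2 / (P.coeff (k - 2) * P.coeff k)|) ∧
      (∃ z : ℂ, (P.map (algebraMap ℝ ℂ)).IsRoot z ∧ z.im ≠ 0) := by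
  obtain ⟨hb1, hbsum⟩ := hb
  have hb0 : 0 < b := by linarith
  set t := b ^ (-(1 : ℝ) / 2)
  have ht : 0 < t := Real.rpow_pos_of_pos hb0 _
  have hpow : ∀ k : ℕ, t ^ k = b ^ (-(k : ℝ) / 2) := fun k => by
    rw [← Real.rpow_natCast, ← Real.rpow_mul hb0.le]
    ring_nf
  have hS : ∑ j ∈ Icc 1 n, t ^ j ^ 2 = 1 / 2 := by
    simp only [hpow, Nat.cast_pow]
    linarith
  have htb : (t ^ 2)⁻¹ = b := by
    rw [hpow, ← Real.rpow_neg hb0.le]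
    norm_num
  refine ⟨flipThetaPoly n t, natDegree_flipThetaPoly ht.ne', fun k hk => ?_,
    fun k hk2 hk => ?_, ?_⟩
  · rw [coeff_flipThetaPoly, if_pos (by omega)]
    exact flipThetaCoeff_ne_zero ht.ne' k
  · obtain ⟨k, rfl⟩ := Nat.exists_eq_add_of_le' hk2
    rw [show k + 2 - 1 = k + 1 by omega, add_tsub_cancel_right, coeff_flipThetaPoly,
      coeff_flipThetaPoly, coeff_flipThetaPoly, if_pos (by omega), if_pos (by omega),
      if_pos (by omega), abs_flipThetaCoeff_sq_div ht.ne', htb]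
    linarith
  · by_contra! hreal
    exact not_laguerreIneq_flipThetaPoly hn ht hS
      (splits_of_forall_isRoot_im_eq_zero hreal).laguerreIneq
end

section
/- Let P(z) = a_0 + a_1 z + a_2 z² + a_3 z³ be a polynomial of degree 3 with a_k ∈ ℝ \ {0} for k = 0,1,2,3. If |q_2(P)| ≥ √(9 + 6√3) and |q_3(P)| ≥ √(9 + 6√3), then all zeros of P are real. -/
/-!
A real cubic with a non-real root `z` has discriminant `-4 (Im z)² (a² |r - z|²)² < 0`, `r` being
its real root. On the other hand, rescaling the variable brings the cubic to the form
`X³ + κX² + κxX + y`, where the two hypotheses become `|x| ≤ 1` and `|y| ≤ x²`. The discriminant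
is a concave quadratic in `y`, and at `y = ±x²` it is `x²` times a concave quadratic in `x`, so it
is nonnegative as soon as it is at the four corners `x = ±1`, `y = ±1`. There it equals
`κ⁴ - 8κ³ + 18κ² - 27`, `κ⁴ + 8κ³ - 18κ² - 27` and (twice) `κ⁴ - 18κ² - 27`, which vanishes
exactly at `κ² = 9 + 6√3`.
-/

theorem nonneg_of_concave_quadratic {k l n m y : ℝ} (hk : 0 ≤ k) (hy : |y| ≤ m)
    (hm : 0 ≤ n + l * m - k * m ^ 2) (hm' : 0 ≤ n - l * m - k * m ^ 2) :
    0 ≤ n + l * y - k * y ^ 2 := by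
  obtain ⟨hy₁, hy₂⟩ := abs_le.mp hy
  rcases ((abs_nonneg y).trans hy).eq_or_lt with rfl | hm0
  · obtain rfl : y = 0 := by linarith
    simpa using hm
  · have hinterp : 2 * m * (n + l * y - k * y ^ 2) = (m + y) * (n + l * m - k * m ^ 2)
        + (m - y) * (n - l * m - k * m ^ 2) + 2 * m * k * ((m - y) * (m + y)) := by ring
    have hmy : 0 ≤ m + y := by linarith
    have hmy' : 0 ≤ m - y := by linarith
    refine nonneg_of_mul_nonneg_right (a := 2 * m) ?_ (by positivity)
    rw [hinterp]
    have hright := mul_nonneg hmy hm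
    have hleft := mul_nonneg hmy' hm'
    have hgap : 0 ≤ 2 * m * k * ((m - y) * (m + y)) := by positivity
    linarith

theorem Cubic.discr_nonneg_of_abs_le {κ x y : ℝ} (hκ : 0 ≤ κ) (hκ4 : 18 * κ ^ 2 + 27 ≤ κ ^ 4)
    (hx : |x| ≤ 1) (hy : |y| ≤ x ^ 2) : 0 ≤ (⟨1, κ, κ * x, y⟩ : Cubic ℝ).discr := by
  have hκ2 : 14 ≤ κ ^ 2 := by nlinarith
  -- `κ⁴ - 8κ³ + 18κ² - 27 = (κ² - 4κ)² + 2κ² - 27`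
  have h₁ : 0 ≤ (κ ^ 4 - 4 * κ ^ 3) + (18 * κ ^ 2 - 4 * κ ^ 3) * x - 27 * x ^ 2 :=
    nonneg_of_concave_quadratic (m := 1) (by norm_num) hx
      (by nlinarith [sq_nonneg (κ ^ 2 - 4 * κ)]) (by linarith)
  have h₂ : 0 ≤ (κ ^ 4 + 4 * κ ^ 3) + (-4 * κ ^ 3 - 18 * κ ^ 2) * x - 27 * x ^ 2 :=
    nonneg_of_concave_quadratic (m := 1) (by norm_num) hx (by linarith) (by nlinarith)
  have hg := nonneg_of_concave_quadratic (k := 27) (n := κ ^ 4 * x ^ 2 - 4 * κ ^ 3 * x ^ 3)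
    (l := 18 * κ ^ 2 * x - 4 * κ ^ 3) (by norm_num) hy
    (by have := mul_nonneg (sq_nonneg x) h₁; linear_combination this)
    (by have := mul_nonneg (sq_nonneg x) h₂; linear_combination this)
  simp only [Cubic.discr]
  linear_combination hg

theorem Cubic.discr_nonneg_of_abs_mul_le {P : Cubic ℝ} {κ : ℝ} (hκ : 0 < κ)
    (hκ4 : 18 * κ ^ 2 + 27 ≤ κ ^ 4) (ha : P.a ≠ 0) (hb : P.b ≠ 0)
    (hac : κ * |P.a * P.c| ≤ P.b ^ 2) (hbd : κ * |P.b * P.d| ≤ P.c ^ 2) : 0 ≤ P.discr := by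
  set x := κ * (P.a * P.c) / P.b ^ 2 with hx
  set y := κ ^ 3 * P.a ^ 2 * (P.b * P.d) / P.b ^ 4 with hy
  have hx1 : |x| ≤ 1 := by
    rwa [abs_div, abs_mul, abs_of_pos hκ, abs_of_nonneg (sq_nonneg P.b),
      div_le_one (by positivity)]
  have hyx : |y| ≤ x ^ 2 := by
    rw [abs_div, abs_mul, abs_of_nonneg (by positivity : 0 ≤ κ ^ 3 * P.a ^ 2),
      abs_of_nonneg (by positivity : 0 ≤ P.b ^ 4), div_pow, ← pow_mul]
    gcongr
    calc κ ^ 3 * P.a ^ 2 * |P.b * P.d| = κ ^ 2 * P.a ^ 2 * (κ * |P.b * P.d|) := by ring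
      _ ≤ κ ^ 2 * P.a ^ 2 * P.c ^ 2 := by gcongr
      _ = (κ * (P.a * P.c)) ^ 2 := by ring
  -- the normal form is `P(μX) / (aμ³)` with `μ = b / (aκ)`
  have hscale : P.discr * (κ ^ 6 * P.a ^ 2) = P.b ^ 6 * (⟨1, κ, κ * x, y⟩ : Cubic ℝ).discr := by
    simp only [Cubic.discr, hx, hy]
    field_simp
  have hnormal := Cubic.discr_nonneg_of_abs_le hκ.le hκ4 hx1 hyx
  refine nonneg_of_mul_nonneg_left (b := κ ^ 6 * P.a ^ 2) ?_ (by positivity)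
  rw [hscale]
  positivity

theorem Cubic.discr_neg_of_isRoot_of_im_ne_zero {P : Cubic ℝ} (ha : P.a ≠ 0) {z : ℂ}
    (hz : (P.toPoly.map (algebraMap ℝ ℂ)).IsRoot z) (hzim : z.im ≠ 0) : P.discr < 0 := by
  obtain ⟨p, q⟩ := z
  change q ≠ 0 at hzim
  have h : (P.a : ℂ) * ⟨p, q⟩ ^ 3 + P.b * ⟨p, q⟩ ^ 2 + P.c * ⟨p, q⟩ + P.d = 0 := by
    simpa [Cubic.toPoly] using hz
  simp only [Complex.ext_iff, pow_succ, pow_zero, one_mul, Complex.add_re, Complex.add_im,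
    Complex.mul_re, Complex.mul_im, Complex.ofReal_re, Complex.ofReal_im, Complex.zero_re,
    Complex.zero_im] at h
  obtain ⟨hre, him⟩ := h
  have hc : P.c = P.a * (q ^ 2 - 3 * p ^ 2) - 2 * P.b * p :=
    mul_left_cancel₀ hzim (by linear_combination him)
  have hd : P.d = (p ^ 2 + q ^ 2) * (2 * P.a * p + P.b) := by
    linear_combination hre - p * hc
  have hdisc : P.discr = -4 * q ^ 2 * ((P.b + 3 * p * P.a) ^ 2 + P.a ^ 2 * q ^ 2) ^ 2 := by
    rw [Cubic.discr, hc, hd]; ring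
  have hpos : 0 < q ^ 2 * ((P.b + 3 * p * P.a) ^ 2 + P.a ^ 2 * q ^ 2) ^ 2 := by positivity
  linarith

/-- If `P` is a real cubic with nonzero coefficients and
`|q_2(P)| ≥ √(9+6√3)`, `|q_3(P)| ≥ √(9+6√3)`, then all (complex) zeros of `P`
are real. -/
theorem stmt_16 (P : Polynomial ℝ) (hdeg : P.natDegree = 3)
    (hcoeff : ∀ k, k ≤ 3 → P.coeff k ≠ 0)
    (hq2 : Real.sqrt (9 + 6 * Real.sqrt 3) ≤
      |(P.coeff 1) ^ 2 / (P.coeff 0 * P.coeff 2)|)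
    (hq3 : Real.sqrt (9 + 6 * Real.sqrt 3) ≤
      |(P.coeff 2) ^ 2 / (P.coeff 1 * P.coeff 3)|) :
    ∀ z : ℂ, (P.map (algebraMap ℝ ℂ)).IsRoot z → z.im = 0 := by
  intro z hz
  by_contra hzim
  set κ := Real.sqrt (9 + 6 * Real.sqrt 3)
  have hκ : 0 < κ := by positivity
  have hκ4 : 18 * κ ^ 2 + 27 ≤ κ ^ 4 := by
    have h3 := Real.sq_sqrt (show (0 : ℝ) ≤ 3 by norm_num)
    have hκ2 : κ ^ 2 = 9 + 6 * Real.sqrt 3 := Real.sq_sqrt (by positivity)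
    nlinarith
  let C : Cubic ℝ := Cubic.equiv.symm ⟨P, Polynomial.degree_le_of_natDegree_le hdeg.le⟩
  have hC : C.toPoly = P := congrArg Subtype.val (Cubic.equiv.apply_symm_apply _)
  have habs {u v w : ℝ} (hv : v ≠ 0) (hw : w ≠ 0) (h : κ ≤ |u ^ 2 / (v * w)|) :
      κ * |v * w| ≤ u ^ 2 := by
    rwa [abs_div, abs_of_nonneg (sq_nonneg u), le_div_iff₀ (by positivity)] at h
  refine (Cubic.discr_neg_of_isRoot_of_im_ne_zero (hcoeff 3 le_rfl) (hC ▸ hz) hzim).not_ge ?_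
  exact Cubic.discr_nonneg_of_abs_mul_le hκ hκ4 (hcoeff 3 le_rfl) (hcoeff 2 (by norm_num))
    (by simpa [C, mul_comm] using habs (hcoeff 1 (by norm_num)) (hcoeff 3 le_rfl) hq3)
    (by simpa [C, mul_comm] using habs (hcoeff 0 (by norm_num)) (hcoeff 2 (by norm_num)) hq2)
end

section
/- For every ε > 0 there exists a polynomial P of degree 3 with all coefficients real and nonzero, such that |q_2(P)| > √(9 + 6√3) - ε and |q_3(P)| > √(9 + 6√3) - ε, and P has a nonreal root. -/
/-!
Take `P = X³ - qX² + qX + 1`, whose second quotients are `-q` and `q`. Its discriminant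
`q⁴ - 18q² - 27 = (q² - 9 - 6√3)(q² - 9 + 6√3)` is negative exactly when `q² < 9 + 6√3`.
A real cubic with negative discriminant has a nonreal root, since over `ℂ` the discriminant is
`a⁴ ∏ (xᵢ - xⱼ)²`, a square of a real number when all roots `xᵢ` are real.
So `q` slightly below `√(9 + 6√3)` works.
-/

open Polynomial

namespace Cubic

theorem exists_isRoot_im_ne_zero_of_discr_neg {P : Cubic ℝ} (ha : P.a ≠ 0) (hd : P.discr < 0) :
    ∃ z : ℂ, (P.toPoly.map (algebraMap ℝ ℂ)).IsRoot z ∧ z.im ≠ 0 := by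
  obtain ⟨x, y, z, hroots⟩ := (splits_iff_roots_eq_three (φ := algebraMap ℝ ℂ) ha).mp
    (IsAlgClosed.splits _)
  by_contra! hreal
  have hofReal_re : ∀ w ∈ (map (algebraMap ℝ ℂ) P).roots, (w.re : ℂ) = w := by
    intro w hw
    rw [map_roots] at hw
    exact Complex.ext rfl ((Complex.ofReal_im _).trans (hreal w (isRoot_of_mem_roots hw)).symm)
  have hx := hofReal_re x (by simp [hroots])
  have hy := hofReal_re y (by simp [hroots])
  have hz := hofReal_re z (by simp [hroots])
  have hsq : P.discr = (P.a * P.a * (x.re - y.re) * (x.re - z.re) * (y.re - z.re)) ^ 2 := by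
    apply Complex.ofReal_injective
    rw [← Complex.coe_algebraMap, discr_eq_prod_three_roots ha hroots]
    push_cast
    simp only [hx, hy, hz, Complex.coe_algebraMap]
  exact hd.not_ge (hsq ▸ sq_nonneg _)

theorem discr_neg_of_sq_lt {q : ℝ} (hq : q ^ 2 < 9 + 6 * √3) :
    (⟨1, -q, q, 1⟩ : Cubic ℝ).discr < 0 := by
  have h3 : √3 ^ 2 = 3 := Real.sq_sqrt (by norm_num)
  have h3_gt : 3 / 2 < √3 := Real.lt_sqrt_of_sq_lt (by norm_num)
  have hfactor : (⟨1, -q, q, 1⟩ : Cubic ℝ).discr =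
      (q ^ 2 - 9 - 6 * √3) * (q ^ 2 - 9 + 6 * √3) := by
    simp only [discr]
    linear_combination 36 * h3
  rw [hfactor]
  exact mul_neg_of_neg_of_pos (by linarith) (by nlinarith)

end Cubic

/-- For every `ε > 0` there exists a real cubic with nonzero coefficients such that
`|q_2(P)| > √(9+6√3) - ε` and `|q_3(P)| > √(9+6√3) - ε`, having a nonreal root. -/
theorem stmt_17 (ε : ℝ) (hε : 0 < ε) :
    ∃ P : Polynomial ℝ, P.natDegree = 3 ∧
      (∀ k, k ≤ 3 → P.coeff k ≠ 0) ∧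
      Real.sqrt (9 + 6 * Real.sqrt 3) - ε <
        |(P.coeff 1) ^ 2 / (P.coeff 0 * P.coeff 2)| ∧
      Real.sqrt (9 + 6 * Real.sqrt 3) - ε <
        |(P.coeff 2) ^ 2 / (P.coeff 1 * P.coeff 3)| ∧
      (∃ z : ℂ, (P.map (algebraMap ℝ ℂ)).IsRoot z ∧ z.im ≠ 0) := by
  set Q := √(9 + 6 * √3)
  have hQ : 0 < Q := Real.sqrt_pos.mpr (by positivity)
  obtain ⟨q, hq_gt, hq_lt⟩ := exists_between (max_lt (by linarith) hQ : max (Q - ε) 0 < Q)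
  obtain ⟨hqε, hq0⟩ := max_lt_iff.mp hq_gt
  have hq2 : q ^ 2 < 9 + 6 * √3 := by
    rw [← Real.sq_sqrt (by positivity : (0 : ℝ) ≤ 9 + 6 * √3)]
    exact pow_lt_pow_left₀ hq_lt hq0.le two_ne_zero
  let P : Cubic ℝ := ⟨1, -q, q, 1⟩
  have h0 : P.toPoly.coeff 0 = 1 := Cubic.coeff_eq_d
  have h1 : P.toPoly.coeff 1 = q := Cubic.coeff_eq_c
  have h2 : P.toPoly.coeff 2 = -q := Cubic.coeff_eq_b
  have h3 : P.toPoly.coeff 3 = 1 := Cubic.coeff_eq_a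
  refine ⟨P.toPoly, Cubic.natDegree_of_a_ne_zero one_ne_zero, ?_, ?_, ?_,
    Cubic.exists_isRoot_im_ne_zero_of_discr_neg one_ne_zero (Cubic.discr_neg_of_sq_lt hq2)⟩
  · intro k hk
    interval_cases k <;> simp [h0, h1, h2, h3, hq0.ne']
  · rwa [h0, h1, h2, one_mul, sq, div_neg, mul_div_cancel_right₀ _ hq0.ne', abs_neg,
      abs_of_pos hq0]
  · rwa [h1, h2, h3, mul_one, neg_sq, sq, mul_div_cancel_right₀ _ hq0.ne', abs_of_pos hq0]
end

section
/- For every positive integer n and every c > 0, the polynomial P(z) = ∑_{k=0}^{2n} c^{k(2n-k)/2} z^k − 2 c^{n²/2} z^n satisfies |q_k(P)| = c for all k = 2, 3, …, 2n; moreover, when c = b_{2n}, the point z = 1 is a multiple root of P (that is, P(1) = 0 and P′(1) = 0). -/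
/-!
With `a k = c ^ (k * (2n - k) / 2) = c ^ (n² / 2) * c ^ (-(k - n)² / 2)`, the coefficients of `P`
are `± a k`, only the middle sign being flipped. The exponent of `a k` is a quadratic in `k` with
leading coefficient `-1/2`, so every second quotient of `|a k|` is `c ^ 1`. The sequence `a` is a
Gaussian centred at `n`, hence `∑ a k = c ^ (n² / 2) * (1 + 2 ∑_{j=1}^n c ^ (-j² / 2))`, and
`P(1) = -c ^ (n² / 2) * (1 - 2 ∑_{j=1}^n c ^ (-j² / 2))` vanishes at `c = b_{2n}`. Finally `P` is
self-reciprocal of degree `2n`, which forces `P'(1) = n P(1)`.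
-/

open Finset Polynomial

theorem Finset.sum_range_two_mul_add_one_of_symm {M : Type*} [AddCommMonoid M] (f : ℕ → M)
    {n : ℕ} (hf : ∀ k ≤ 2 * n, f (2 * n - k) = f k) :
    ∑ k ∈ range (2 * n + 1), f k = f n + 2 • ∑ j ∈ Icc 1 n, f (n + j) := by
  have hlow : ∑ k ∈ range n, f k = ∑ i ∈ range n, f (n + (i + 1)) := by
    rw [← sum_range_reflect]
    refine sum_congr rfl fun i hir => ?_
    rw [← hf _ (by grind), show 2 * n - (n - 1 - i) = n + (i + 1) by grind]
  rw [show 2 * n + 1 = n + (n + 1) by ring, sum_range_add, sum_range_succ', hlow, two_nsmul,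
    ← Ico_add_one_right_eq_Icc, sum_Ico_eq_sum_range]
  simp only [add_zero, add_tsub_cancel_right, add_comm 1]
  abel

theorem Finset.sum_range_natCast_mul_of_symm {R : Type*} [Field R] [CharZero R] (f : ℕ → R)
    {n : ℕ} (hf : ∀ k ≤ 2 * n, f (2 * n - k) = f k) :
    ∑ k ∈ range (2 * n + 1), (k : R) * f k = n * ∑ k ∈ range (2 * n + 1), f k := by
  have hreflect : ∑ k ∈ range (2 * n + 1), (k : R) * f k
      = ∑ k ∈ range (2 * n + 1), (2 * n - k : R) * f k := by
    rw [← sum_range_reflect]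
    refine sum_congr rfl fun k hkr => ?_
    have hk : k ≤ 2 * n := by grind
    rw [show 2 * n + 1 - 1 - k = 2 * n - k by omega, hf k hk, Nat.cast_sub hk]
    push_cast; ring
  have : 2 * ∑ k ∈ range (2 * n + 1), (k : R) * f k = 2 * (n * ∑ k ∈ range (2 * n + 1), f k) := by
    conv_lhs => rw [two_mul]; arg 2; rw [hreflect]
    rw [← sum_add_distrib, mul_sum, mul_sum]
    exact sum_congr rfl fun k _ => by ring
  exact mul_left_cancel₀ two_ne_zero this

noncomputable def gaussCoeff (n : ℕ) (c : ℝ) (k : ℕ) : ℝ :=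
  c ^ ((k : ℝ) * (2 * n - k) / 2)

noncomputable def gaussPoly (n : ℕ) (c : ℝ) : ℝ[X] :=
  ∑ k ∈ range (2 * n + 1), C (gaussCoeff n c k) * X ^ k - C (2 * c ^ ((n : ℝ) ^ 2 / 2)) * X ^ n

section gaussCoeff

variable {n : ℕ} {c : ℝ}

theorem gaussCoeff_pos (hc : 0 < c) (k : ℕ) : 0 < gaussCoeff n c k :=
  Real.rpow_pos_of_pos hc _

theorem gaussCoeff_self : gaussCoeff n c n = c ^ ((n : ℝ) ^ 2 / 2) := by
  rw [gaussCoeff]; ring_nf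

theorem gaussCoeff_two_mul_sub {k : ℕ} (hk : k ≤ 2 * n) :
    gaussCoeff n c (2 * n - k) = gaussCoeff n c k := by
  rw [gaussCoeff, gaussCoeff, Nat.cast_sub hk]; push_cast; ring_nf

theorem gaussCoeff_add (hc : 0 < c) (j : ℕ) :
    gaussCoeff n c (n + j) = c ^ ((n : ℝ) ^ 2 / 2) * c ^ (-(j : ℝ) ^ 2 / 2) := by
  rw [gaussCoeff, ← Real.rpow_add hc]; push_cast; ring_nf

theorem gaussCoeff_sq_div_mul (hc : 0 < c) {k : ℕ} (hk : 2 ≤ k) :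
    gaussCoeff n c (k - 1) ^ 2 / (gaussCoeff n c (k - 2) * gaussCoeff n c k) = c := by
  rw [gaussCoeff, gaussCoeff, gaussCoeff, ← Real.rpow_natCast, ← Real.rpow_mul hc.le,
    ← Real.rpow_add hc, ← Real.rpow_sub hc, Nat.cast_sub (by omega), Nat.cast_sub (by omega)]
  conv_rhs => rw [← Real.rpow_one c]
  congr 1; push_cast; ring

theorem sum_range_gaussCoeff (hc : 0 < c) :
    ∑ k ∈ range (2 * n + 1), gaussCoeff n c k
      = c ^ ((n : ℝ) ^ 2 / 2) * (1 + 2 * ∑ j ∈ Icc 1 n, c ^ (-(j : ℝ) ^ 2 / 2)) := by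
  rw [sum_range_two_mul_add_one_of_symm _ fun k hk => gaussCoeff_two_mul_sub hk,
    gaussCoeff_self, nsmul_eq_mul, Nat.cast_ofNat]
  simp only [gaussCoeff_add hc, ← mul_sum]
  ring

end gaussCoeff

section gaussPoly

variable {n : ℕ} {c : ℝ}

theorem coeff_gaussPoly {j : ℕ} (hj : j ≤ 2 * n) :
    (gaussPoly n c).coeff j = gaussCoeff n c j - if j = n then 2 * gaussCoeff n c n else 0 := by
  simp only [gaussPoly, coeff_sub, finsetSum_coeff, coeff_C_mul, coeff_X_pow, mul_ite, mul_one,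
    mul_zero, sum_ite_eq, mem_range, Nat.lt_succ_of_le hj, if_true, gaussCoeff_self]

theorem abs_coeff_gaussPoly (hc : 0 < c) {j : ℕ} (hj : j ≤ 2 * n) :
    |(gaussPoly n c).coeff j| = gaussCoeff n c j := by
  have hpos := gaussCoeff_pos (n := n) hc j
  rw [coeff_gaussPoly hj]
  split_ifs with hjn
  · subst hjn; rw [abs_of_neg (by linarith)]; ring
  · rw [sub_zero, abs_of_pos hpos]

theorem eval_one_gaussPoly (hc : 0 < c) :
    (gaussPoly n c).eval 1
      = -c ^ ((n : ℝ) ^ 2 / 2) * (1 - 2 * ∑ j ∈ Icc 1 n, c ^ (-(j : ℝ) ^ 2 / 2)) := by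
  simp only [gaussPoly, eval_sub, eval_finsetSum, eval_mul, eval_C, eval_pow, eval_X, one_pow,
    mul_one, sum_range_gaussCoeff hc]
  ring

theorem derivative_eval_one_gaussPoly :
    (gaussPoly n c).derivative.eval 1 = n * (gaussPoly n c).eval 1 := by
  simp only [gaussPoly, derivative_sub, derivative_sum, derivative_C_mul_X_pow, eval_sub,
    eval_finsetSum, eval_mul, eval_C, eval_pow, eval_X, one_pow, mul_one]
  rw [sum_congr rfl fun k _ => mul_comm _ _,
    sum_range_natCast_mul_of_symm _ fun k hk => gaussCoeff_two_mul_sub hk]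
  ring

end gaussPoly

theorem stmt_18_general (n : ℕ) (c : ℝ) (hc : 0 < c)
    (P : Polynomial ℝ)
    (hP : P = (∑ k ∈ Finset.range (2 * n + 1),
        Polynomial.C (c ^ (((k : ℝ) * (2 * (n : ℝ) - (k : ℝ))) / 2)) * Polynomial.X ^ k)
        - Polynomial.C (2 * c ^ (((n : ℝ) ^ 2) / 2)) * Polynomial.X ^ n) :
    (∀ k, 2 ≤ k → k ≤ 2 * n →
      |(P.coeff (k - 1)) ^ 2 / (P.coeff (k - 2) * P.coeff k)| = c) ∧
    ((1 < c ∧ 1 - 2 * ∑ k ∈ Finset.Icc 1 n, c ^ (-(k : ℝ) ^ 2 / 2) = 0) →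
      P.eval 1 = 0 ∧ P.derivative.eval 1 = 0) := by
  replace hP : P = gaussPoly n c := hP
  subst hP
  refine ⟨fun k h2k hk => ?_, fun ⟨_, hsum⟩ => ?_⟩
  · rw [abs_div, abs_mul, abs_pow, abs_coeff_gaussPoly hc (by omega),
      abs_coeff_gaussPoly hc (by omega), abs_coeff_gaussPoly hc hk, gaussCoeff_sq_div_mul hc h2k]
  · have heval : (gaussPoly n c).eval 1 = 0 := by rw [eval_one_gaussPoly hc, hsum, mul_zero]
    exact ⟨heval, by rw [derivative_eval_one_gaussPoly, heval, mul_zero]⟩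

/-- For every positive integer `n` and `c > 0`, the polynomial
`P(z) = ∑_{k=0}^{2n} c^{k(2n-k)/2} z^k − 2 c^{n²/2} z^n` satisfies `|q_k(P)| = c`
for all `k = 2, …, 2n`; moreover, when `c = b_{2n}` (i.e. `c ∈ (1,∞)` satisfies
`1 - 2∑_{k=1}^n c^{-k²/2} = 0`), the point `z = 1` is a multiple root of `P`. -/
theorem stmt_18 (n : ℕ) (hn : 0 < n) (c : ℝ) (hc : 0 < c)
    (P : Polynomial ℝ)
    (hP : P = (∑ k ∈ Finset.range (2 * n + 1),
        Polynomial.C (c ^ (((k : ℝ) * (2 * (n : ℝ) - (k : ℝ))) / 2)) * Polynomial.X ^ k)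
        - Polynomial.C (2 * c ^ (((n : ℝ) ^ 2) / 2)) * Polynomial.X ^ n) :
    (∀ k, 2 ≤ k → k ≤ 2 * n →
      |(P.coeff (k - 1)) ^ 2 / (P.coeff (k - 2) * P.coeff k)| = c) ∧
    ((1 < c ∧ 1 - 2 * ∑ k ∈ Finset.Icc 1 n, c ^ (-(k : ℝ) ^ 2 / 2) = 0) →
      P.eval 1 = 0 ∧ P.derivative.eval 1 = 0) :=
  stmt_18_general n c hc P hP
end
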